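/- arXiv:math/0510510 — 6 statements merged into one kernel-verified Lean document; each statement's English description precedes it below -/
import Mathlib

section
/- Let (W,S) be a Coxeter system with S finite. Then the center Z(W) of the Coxeter group W is a finite group. -/
/-!
Following Bourbaki, `W` acts on `W × ℤˣ` with `s i` sending `(t, ε)` to `(s i * t * s i, ±ε)`,
the sign flipping exactly when `t = s i`; the braid relations hold because the right inversion
sequence of the alternating word for `(s i * s i') ^ M i i'` lists every entry an even number of
times. The second coordinate of the image of `(t, 1)` under `w` is a cocycle
`reflectionSign w t`, equal to `-1` at `t = s i` exactly when `s i` is a right descent of `w`.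
On central elements the cocycle is multiplicative, so `z ↦ (reflectionSign z (s i))ᵢ` is a
homomorphism from the center to the finite group `B → ℤˣ`, and its kernel is trivial because
only `1` has no right descent.
-/

namespace CoxeterSystem

open List

open scoped Classical

variable {B W : Type*} [Group W] {M : CoxeterMatrix B} (cs : CoxeterSystem M W)

local prefix:100 "s" => cs.simple
local prefix:100 "π" => cs.wordProd
local prefix:100 "ris" => cs.rightInvSeq

theorem rightInvSeq_alternatingWord (i i' : B) (n : ℕ) :
    ris (alternatingWord i i' n) = ((range n).map fun j => (s i' * s i) ^ j * s i').reverse := by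
  induction n generalizing i i' with
  | zero => rfl
  | succ n ih =>
    have hconj (j : ℕ) : s i' * ((s i * s i') ^ j * s i) = (s i' * s i) ^ (j + 1) := by
      rw [← mul_assoc, ← mul_pow_mul, mul_assoc, pow_succ]
    rw [alternatingWord_succ, rightInvSeq_concat, ih, range_succ_eq_map]
    simp [map_reverse, Function.comp_def, hconj]

theorem even_count_rightInvSeq_alternatingWord {i i' : B} {m : ℕ} (hm : (s i' * s i) ^ m = 1)
    (t : W) : Even (count t (ris (alternatingWord i i' (2 * m)))) := by
  have hperiodic : ((range m).map fun j => (s i' * s i) ^ (m + j) * s i') =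
      (range m).map fun j => (s i' * s i) ^ j * s i' := by
    simp only [pow_add, hm, one_mul]
  rw [rightInvSeq_alternatingWord, count_reverse, two_mul, range_add, map_append, map_map,
    count_append, Function.comp_def, hperiodic]
  exact ⟨_, rfl⟩

theorem simple_mul_mul_simple_eq_simple_iff (i : B) (t : W) : s i * t * s i = s i ↔ t = s i := by
  rw [mul_assoc, mul_eq_left, mul_eq_one_iff_eq_inv, cs.inv_simple]

noncomputable def signPerm (i : B) : Equiv.Perm (W × ℤˣ) :=
  Function.Involutive.toPerm (fun p => (s i * p.1 * s i, p.2 * if p.1 = s i then -1 else 1)) <| by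
    rintro ⟨t, ε⟩
    have hback : s i * (s i * t * s i) * s i = t := by
      simp only [mul_assoc, cs.simple_mul_simple_self, cs.simple_mul_simple_cancel_left, mul_one]
    simp only [cs.simple_mul_mul_simple_eq_simple_iff, hback]
    split_ifs <;> simp

theorem signPerm_apply (i : B) (t : W) (ε : ℤˣ) :
    cs.signPerm i (t, ε) = (s i * t * s i, ε * if t = s i then -1 else 1) := rfl

theorem prod_map_signPerm_apply (ω : List B) (t : W) (ε : ℤˣ) :
    (ω.map cs.signPerm).prod (t, ε) =
      (π ω * t * (π ω)⁻¹, ε * (-1) ^ count t (ris ω)) := by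
  induction ω generalizing t ε with
  | nil => simp
  | cons i ω ih =>
    have hcond : π ω * t * (π ω)⁻¹ = s i ↔ (π ω)⁻¹ * s i * π ω = t := by
      constructor
      · rintro h; rw [← h]; group
      · rintro rfl; group
    rw [map_cons, prod_cons, Equiv.Perm.mul_apply, ih, signPerm_apply, rightInvSeq, count_cons,
      wordProd_cons, mul_inv_rev, cs.inv_simple]
    refine Prod.ext (by simp only [mul_assoc]) ?_
    simp only [hcond, beq_iff_eq]
    split_ifs <;> simp [pow_succ]

theorem alternatingWord_two_mul_succ (i i' : B) (m : ℕ) :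
    alternatingWord i i' (2 * (m + 1)) = alternatingWord i i' (2 * m) ++ [i, i'] := by
  rw [show 2 * (m + 1) = 2 * m + 1 + 1 by ring]
  simp [alternatingWord_succ]

theorem isLiftable_signPerm : M.IsLiftable cs.signPerm := by
  intro i i'
  have hword (m : ℕ) : (cs.signPerm i * cs.signPerm i') ^ m =
      ((alternatingWord i i' (2 * m)).map cs.signPerm).prod := by
    induction m with
    | zero => rfl
    | succ m ih => simp [pow_succ, ih, alternatingWord_two_mul_succ]
  have hπ : π (alternatingWord i i' (2 * M i i')) = 1 := by
    simp [prod_alternatingWord_eq_mul_pow]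
  have heven := cs.even_count_rightInvSeq_alternatingWord (cs.simple_mul_simple_pow' i i')
  ext ⟨t, ε⟩ : 1
  rw [hword, prod_map_signPerm_apply, hπ, (heven t).neg_one_pow]
  simp

noncomputable def signRep : W →* Equiv.Perm (W × ℤˣ) :=
  cs.lift ⟨cs.signPerm, cs.isLiftable_signPerm⟩

theorem signRep_wordProd (ω : List B) : cs.signRep (π ω) = (ω.map cs.signPerm).prod := by
  have hsimple : cs.signRep ∘ cs.simple = cs.signPerm := funext (cs.lift_apply_simple _)
  rw [wordProd, map_list_prod, map_map, hsimple]

noncomputable def reflectionSign (w t : W) : ℤˣ := (cs.signRep w (t, 1)).2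

theorem reflectionSign_wordProd (ω : List B) (t : W) :
    cs.reflectionSign (π ω) t = (-1) ^ count t (ris ω) := by
  simp [reflectionSign, signRep_wordProd, prod_map_signPerm_apply]

theorem signRep_apply (w t : W) (ε : ℤˣ) :
    cs.signRep w (t, ε) = (w * t * w⁻¹, ε * cs.reflectionSign w t) := by
  obtain ⟨ω, rfl⟩ := cs.wordProd_surjective w
  simp [reflectionSign_wordProd, signRep_wordProd, prod_map_signPerm_apply]

theorem reflectionSign_one (t : W) : cs.reflectionSign 1 t = 1 := by
  simp [reflectionSign]

theorem reflectionSign_mul (u v t : W) :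
    cs.reflectionSign (u * v) t = cs.reflectionSign u (v * t * v⁻¹) * cs.reflectionSign v t := by
  have h : cs.signRep (u * v) (t, 1) = cs.signRep u (cs.signRep v (t, 1)) := by
    rw [map_mul, Equiv.Perm.mul_apply]
  rw [signRep_apply, signRep_apply, signRep_apply, Prod.ext_iff] at h
  simpa [mul_comm] using h.2

theorem reflectionSign_simple_simple (i : B) : cs.reflectionSign (s i) (s i) = -1 := by
  simp [reflectionSign, signRep, signPerm_apply]

theorem isRightInversion_of_reflectionSign_eq_neg_one {w t : W}
    (h : cs.reflectionSign w t = -1) : cs.IsRightInversion w t := by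
  obtain ⟨ω, hω, rfl⟩ := cs.exists_isReduced w
  refine cs.isRightInversion_of_mem_rightInvSeq hω (count_pos_iff.mp (Nat.pos_of_ne_zero ?_))
  intro hzero
  rw [reflectionSign_wordProd, hzero, pow_zero] at h
  exact absurd h (by decide)

theorem isRightDescent_of_reflectionSign_simple_eq_neg_one {w : W} {i : B}
    (h : cs.reflectionSign w (s i) = -1) : cs.IsRightDescent w i :=
  (cs.isRightInversion_simple_iff_isRightDescent w i).mp
    (cs.isRightInversion_of_reflectionSign_eq_neg_one h)

theorem reflectionSign_simple_eq_neg_one_iff {w : W} {i : B} :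
    cs.reflectionSign w (s i) = -1 ↔ cs.IsRightDescent w i := by
  refine ⟨cs.isRightDescent_of_reflectionSign_simple_eq_neg_one, fun hw => ?_⟩
  have hcocycle : cs.reflectionSign w (s i) = -cs.reflectionSign (w * s i) (s i) := by
    conv_lhs => rw [← cs.simple_mul_simple_cancel_right (w := w) i]
    rw [reflectionSign_mul, cs.inv_simple, cs.simple_mul_simple_cancel_right,
      reflectionSign_simple_simple, mul_neg_one]
  rcases Int.units_eq_one_or (cs.reflectionSign (w * s i) (s i)) with h | h
  · rw [hcocycle, h]
  · exact absurd (cs.isRightDescent_of_reflectionSign_simple_eq_neg_one h)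
      (cs.isRightDescent_iff_not_isRightDescent_mul.mp hw)

theorem reflectionSign_mul_of_mem_center {z : W} (hz : z ∈ Subgroup.center W) (w : W) (i : B) :
    cs.reflectionSign (w * z) (s i) = cs.reflectionSign w (s i) * cs.reflectionSign z (s i) := by
  rw [reflectionSign_mul, ← Subgroup.mem_center_iff.mp hz, mul_inv_cancel_right]

noncomputable def centerSignHom : Subgroup.center W →* (B → ℤˣ) where
  toFun z i := cs.reflectionSign z (s i)
  map_one' := funext fun _ => cs.reflectionSign_one _
  map_mul' _ z' := funext fun _ => cs.reflectionSign_mul_of_mem_center z'.2 _ _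

theorem centerSignHom_injective : Function.Injective cs.centerSignHom := by
  refine (injective_iff_map_eq_one _).mpr fun z hz => ?_
  by_contra hne
  obtain ⟨i, hi⟩ := cs.exists_rightDescent_of_ne_one (w := z) (by exact_mod_cast hne)
  have hsign : cs.reflectionSign z (s i) = 1 := congrFun hz i
  rw [← cs.reflectionSign_simple_eq_neg_one_iff, hsign] at hi
  exact absurd hi (by decide)

end CoxeterSystem

/-- **Theorem (Hosaka).** Let `(W, S)` be a Coxeter system with `S` finite. Then the
center `Z(W)` of the Coxeter group `W` is a finite group. -/
theorem center_of_coxeter_group_finite {B : Type*} [Finite B] {W : Type*} [Group W]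
    (M : CoxeterMatrix B) (cs : CoxeterSystem M W) :
    Finite (Subgroup.center W) :=
  Finite.of_injective _ cs.centerSignHom_injective
end

section
/- Let (W,S) be a Coxeter system with S finite. Then the center Z(W) of the Coxeter group W is isomorphic to (ℤ/2ℤ)^n for some n ≥ 0. -/
open CoxeterSystem List

namespace CenterCox
attribute [local instance] Classical.propDecidable
variable {B W : Type*} [Group W] {M : CoxeterMatrix B} (cs : CoxeterSystem M W)

local prefix:100 "s" => cs.simple
local prefix:100 "π" => cs.wordProd
local prefix:100 "ris" => cs.rightInvSeq

/-- The generator of the parity (η) action on `W × ZMod 2`. -/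
noncomputable def eta (i : B) : Function.End (W × ZMod 2) :=
  fun p => (s i * p.1 * s i, p.2 + if p.1 = s i then 1 else 0)

lemma prod_eta (ω : List B) (p : W × ZMod 2) :
    (List.map (eta cs) ω).prod p
      = (π ω * p.1 * (π ω)⁻¹, p.2 + ((ris ω).count p.1 : ZMod 2)) := by
  induction ω generalizing p with
  | nil => simp [Function.End.one_def]
  | cons i ω ih =>
    have h0 : (List.map (eta cs) (i :: ω)).prod p
        = eta cs i ((List.map (eta cs) ω).prod p) := rfl
    rw [h0, ih]
    show _ = (π (i :: ω) * p.1 * (π (i :: ω))⁻¹,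
      p.2 + ((((π ω)⁻¹ * s i * π ω :: ris ω).count p.1 : ℕ) : ZMod 2))
    rw [List.count_cons]
    have hfst : s i * (π ω * p.1 * (π ω)⁻¹) * s i
        = π (i :: ω) * p.1 * (π (i :: ω))⁻¹ := by
      rw [cs.wordProd_cons, mul_inv_rev, cs.inv_simple]; group
    have hiff : (π ω * p.1 * (π ω)⁻¹ = s i) ↔ ((π ω)⁻¹ * s i * π ω = p.1) := by
      constructor <;> intro h
      · rw [← h]; group
      · rw [← h]; group
    unfold eta
    simp only [hfst, Prod.mk.injEq, true_and]
    rw [Nat.cast_add, ← add_assoc, if_congr hiff rfl rfl]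
    congr 1
    by_cases h : (π ω)⁻¹ * s i * π ω = p.1 <;> simp [h]

lemma simple_swap_pow (i j : B) (r : ℕ) :
    s j * (s i * s j) ^ r = (s j * s i) ^ r * s j := by
  induction r with
  | zero => simp
  | succ r ih =>
    rw [pow_succ, ← mul_assoc, ih, pow_succ]
    group

/-- Closed form of the entries of the right inversion sequence of an alternating word. -/
lemma conj_prod_alternatingWord (i j : B) (n : ℕ) :
    (π (alternatingWord i j n))⁻¹ * s (if Even n then j else i) * π (alternatingWord i j n)
      = (s j * s i) ^ n * s j := by
  have hinv : ∀ r : ℕ, ((s i * s j) ^ r)⁻¹ = (s j * s i) ^ r := fun r => by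
    rw [← inv_pow, mul_inv_rev, cs.inv_simple, cs.inv_simple]
  rcases Nat.even_or_odd n with he | ho
  · obtain ⟨r, rfl⟩ := he
    rw [cs.prod_alternatingWord_eq_mul_pow]
    have h2 : Even (r + r) := ⟨r, rfl⟩
    rw [if_pos h2, if_pos h2, one_mul]
    have hdiv : (r + r) / 2 = r := by omega
    rw [hdiv, hinv]
    rw [mul_assoc, simple_swap_pow cs i j r, ← mul_assoc, ← pow_add]
  · obtain ⟨r, rfl⟩ := ho
    rw [cs.prod_alternatingWord_eq_mul_pow]
    have h2 : ¬ Even (2 * r + 1) := by simp [parity_simps]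
    rw [if_neg h2, if_neg h2]
    have hdiv : (2 * r + 1) / 2 = r := by omega
    have h3 : (s j * s i) ^ r * s j * s i = (s j * s i) ^ (r + 1) := by
      rw [pow_succ, mul_assoc]
    have h4 : r + 1 + r = 2 * r + 1 := by omega
    rw [hdiv, mul_inv_rev, hinv, cs.inv_simple, simple_swap_pow cs i j r, ← mul_assoc,
      h3, ← pow_add, h4]

lemma rightInvSeq_alternatingWord (i j : B) (n : ℕ) :
    ris (alternatingWord i j n)
      = (List.range n).reverse.map (fun r => (s j * s i) ^ r * s j) := by
  induction n with
  | zero => simp [alternatingWord]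
  | succ n ih =>
    rw [alternatingWord_succ' i j n]
    show ((π (alternatingWord i j n))⁻¹ * s (if Even n then j else i) * π (alternatingWord i j n))
        :: ris (alternatingWord i j n) = _
    rw [conj_prod_alternatingWord cs i j n, ih, List.range_succ, List.reverse_append]
    simp

lemma count_ris_relator_even (i j : B) (t : W) :
    Even ((ris (alternatingWord i j (2 * M i j))).count t) := by
  rw [rightInvSeq_alternatingWord, List.map_reverse, List.count_reverse, two_mul,
    List.range_add, List.map_append, List.count_append]
  have key : ∀ r : ℕ, (s j * s i) ^ (M i j + r) * s j = (s j * s i) ^ r * s j := by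
    intro r
    rw [pow_add, cs.simple_mul_simple_pow' i j, one_mul]
  have hmap : (List.map (fun r => (s j * s i) ^ r * s j)
        (List.map (fun x => M i j + x) (List.range (M i j))))
      = List.map (fun r => (s j * s i) ^ r * s j) (List.range (M i j)) := by
    rw [List.map_map]
    exact List.map_congr_left (fun x _ => key x)
  rw [hmap]
  exact ⟨_, rfl⟩

lemma eta_liftable : M.IsLiftable (eta cs) := by
  intro i j
  have hpow : ∀ m : ℕ, (eta cs i * eta cs j) ^ m
      = (List.map (eta cs) (alternatingWord i j (2 * m))).prod := by
    intro m
    induction m with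
    | zero => simp [alternatingWord]
    | succ m ih =>
      have h1 : 2 * (m + 1) = (2 * m + 1) + 1 := by ring
      rw [h1, alternatingWord_succ' i j, alternatingWord_succ' i j]
      have he : ¬ Even (2 * m + 1) := by simp [parity_simps]
      have he2 : Even (2 * m) := ⟨m, two_mul m⟩
      rw [if_neg he, if_pos he2]
      rw [pow_succ', ih]
      rfl
  rw [hpow]
  funext p
  rw [prod_eta]
  have hπ : π (alternatingWord i j (2 * M i j)) = 1 := by
    rw [cs.prod_alternatingWord_eq_mul_pow]
    have h2 : Even (2 * M i j) := ⟨M i j, two_mul _⟩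
    rw [if_pos h2]
    have hdiv : 2 * M i j / 2 = M i j := by omega
    rw [hdiv, one_mul, cs.simple_mul_simple_pow]
  have hc : ((ris (alternatingWord i j (2 * M i j))).count p.1 : ZMod 2) = 0 := by
    obtain ⟨k, hk⟩ := count_ris_relator_even cs i j p.1
    rw [hk]
    have h2 : ((k + k : ℕ) : ZMod 2) = 2 * (k : ZMod 2) := by push_cast; ring
    rw [h2]
    have : (2 : ZMod 2) = 0 := by decide
    rw [this, zero_mul]
  rw [hπ, hc]
  simp [Function.End.one_def]


/-- The parity homomorphism `W →* End (W × ZMod 2)`. -/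
noncomputable def phi : W →* Function.End (W × ZMod 2) :=
  cs.lift ⟨eta cs, eta_liftable cs⟩

lemma phi_simple (i : B) : phi cs (s i) = eta cs i :=
  cs.lift_apply_simple (eta_liftable cs) i

lemma phi_wordProd (ω : List B) : phi cs (π ω) = (List.map (eta cs) ω).prod := by
  unfold CoxeterSystem.wordProd
  rw [MonoidHom.map_list_prod, List.map_map]
  congr 1
  exact List.map_congr_left (fun i _ => phi_simple cs i)

/-- `nn cs w t` : parity of the number of occurrences of `t` in an inversion sequence of `w`. -/
noncomputable def nn (w t : W) : ZMod 2 := (phi cs w (t, 0)).2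

lemma phi_apply (w : W) (p : W × ZMod 2) :
    phi cs w p = (w * p.1 * w⁻¹, p.2 + nn cs w p.1) := by
  obtain ⟨ω, rfl⟩ := cs.wordProd_surjective w
  rw [phi_wordProd, prod_eta]
  unfold nn
  rw [phi_wordProd, prod_eta]
  simp

lemma nn_one (t : W) : nn cs 1 t = 0 := by
  unfold nn
  rw [map_one]
  rfl

lemma nn_mul (u v t : W) : nn cs (u * v) t = nn cs v t + nn cs u (v * t * v⁻¹) := by
  have h : phi cs (u * v) (t, 0) = phi cs u (phi cs v (t, 0)) := by
    rw [map_mul]; rfl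
  unfold nn
  rw [h, phi_apply cs v, phi_apply cs u]
  simp [nn, add_comm]

lemma z2_cancel {a b : ZMod 2} (h : 0 = a + b) : a = b := by
  revert h; revert a b; decide

lemma z2_aba (a b : ZMod 2) : a + b + a = b := by revert a b; decide

lemma nn_inv (u t : W) : nn cs u⁻¹ t = nn cs u (u⁻¹ * t * u) := by
  have h := nn_mul cs u u⁻¹ t
  rw [mul_inv_cancel, nn_one, inv_inv] at h
  exact z2_cancel h

lemma nn_conj_of_central {w : W} (hw : w ∈ Subgroup.center W) (u t : W) :
    nn cs w (u⁻¹ * t * u) = nn cs w t := by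
  have hcomm : ∀ x : W, w * x * w⁻¹ = x := by
    intro x
    have h := (Subgroup.mem_center_iff.mp hw x).symm
    rw [mul_inv_eq_iff_eq_mul, h]
  have hmem := Subgroup.mem_center_iff.mp hw
  have h1 : w = u * (w * u⁻¹) := by rw [← mul_assoc, hmem u, mul_inv_cancel_right]
  have e1 : nn cs w t = nn cs (w * u⁻¹) t + nn cs u (w * u⁻¹ * t * (w * u⁻¹)⁻¹) := by
    calc nn cs w t = nn cs (u * (w * u⁻¹)) t := by rw [← h1]
      _ = _ := nn_mul cs u (w * u⁻¹) t
  have e2 : w * u⁻¹ * t * (w * u⁻¹)⁻¹ = u⁻¹ * t * u := by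
    calc w * u⁻¹ * t * (w * u⁻¹)⁻¹ = w * (u⁻¹ * t * u) * w⁻¹ := by group
      _ = u⁻¹ * t * u := hcomm _
  have e3 : nn cs (w * u⁻¹) t = nn cs u⁻¹ t + nn cs w (u⁻¹ * t * u) := by
    have h := nn_mul cs w u⁻¹ t
    rwa [inv_inv] at h
  rw [e2, e3, nn_inv cs u t] at e1
  rw [e1]
  exact (z2_aba _ _).symm

lemma nn_wordProd (ω : List B) (t : W) :
    nn cs (π ω) t = ((ris ω).count t : ZMod 2) := by
  unfold nn
  rw [phi_wordProd, prod_eta]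
  simp

lemma eq_one_of_central {w : W} (hw : w ∈ Subgroup.center W)
    (h : ∀ i : B, nn cs w (s i) = 0) : w = 1 := by
  by_contra hne
  obtain ⟨ω, hred, rfl⟩ := cs.exists_reduced_word' w
  have hωne : ω ≠ [] := by
    rintro rfl
    exact hne (cs.wordProd_nil)
  have hrisne : ris ω ≠ [] := by
    intro hc
    apply hωne
    have hlen := cs.length_rightInvSeq ω
    rw [hc] at hlen
    simpa using (List.length_eq_zero_iff.mp hlen.symm)
  obtain ⟨t₀, ht₀⟩ := List.exists_mem_of_ne_nil _ hrisne
  have hcount : (ris ω).count t₀ = 1 :=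
    List.count_eq_one_of_mem (hred.nodup_rightInvSeq) ht₀
  have hone : nn cs (π ω) t₀ = 1 := by
    rw [nn_wordProd, hcount]
    rfl
  obtain ⟨u, i, hui⟩ := cs.isReflection_of_mem_rightInvSeq ω ht₀
  have hconj : nn cs (π ω) t₀ = nn cs (π ω) (s i) := by
    have h' := nn_conj_of_central cs hw u⁻¹ (s i)
    rw [inv_inv] at h'
    rw [hui]
    exact h'
  rw [hconj, h i] at hone
  exact (by decide : (0 : ZMod 2) ≠ 1) hone

lemma z2_aa (a : ZMod 2) : a + a = 0 := by revert a; decide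

lemma conj_central {w : W} (hw : w ∈ Subgroup.center W) (x : W) : w * x * w⁻¹ = x := by
  rw [mul_inv_eq_iff_eq_mul, ← Subgroup.mem_center_iff.mp hw x]

end CenterCox

open CenterCox in
/-- **Theorem (Hosaka).** Let `(W, S)` be a Coxeter system with `S` finite. Then the
center `Z(W)` of the Coxeter group `W` is isomorphic to `(ℤ/2ℤ)^n` for some `n ≥ 0`. -/
theorem center_of_coxeter_group_iso_pow_Z2 {B : Type*} [Finite B] {W : Type*} [Group W]
    (M : CoxeterMatrix B) (cs : CoxeterSystem M W) :
    ∃ n : ℕ, Nonempty (Subgroup.center W ≃* (Fin n → Multiplicative (ZMod 2))) := by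
  classical
  have hsq : ∀ z : Subgroup.center W, z * z = 1 := by
    intro z
    have hz : (z : W) * (z : W) ∈ Subgroup.center W := mul_mem z.2 z.2
    have h1 : ((z : W) * (z : W)) = 1 := by
      apply eq_one_of_central cs hz
      intro i
      rw [nn_mul cs]
      rw [conj_central z.2 (cs.simple i)]
      exact z2_aa _
    exact Subtype.ext h1
  have hinj : Function.Injective
      (fun z : Subgroup.center W => fun i : B => nn cs (z : W) (cs.simple i)) := by
    intro z z' h
    have hmem : (z : W) * (z' : W)⁻¹ ∈ Subgroup.center W := mul_mem z.2 (inv_mem z'.2)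
    have h1 : (z : W) * (z' : W)⁻¹ = 1 := by
      apply eq_one_of_central cs hmem
      intro i
      rw [nn_mul cs]
      have e1 : (z' : W)⁻¹ * cs.simple i * ((z' : W)⁻¹)⁻¹ = cs.simple i := by
        rw [inv_inv, mul_assoc, Subgroup.mem_center_iff.mp z'.2 (cs.simple i),
          inv_mul_cancel_left]
      rw [e1]
      have e2 : nn cs (z' : W)⁻¹ (cs.simple i) = nn cs (z' : W) (cs.simple i) := by
        rw [nn_inv cs]
        congr 1
        rw [mul_assoc, Subgroup.mem_center_iff.mp z'.2 (cs.simple i), inv_mul_cancel_left]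
      rw [e2]
      have e3 : nn cs (z : W) (cs.simple i) = nn cs (z' : W) (cs.simple i) := congrFun h i
      rw [e3]
      exact z2_aa _
    exact Subtype.ext (mul_inv_eq_one.mp h1)
  haveI : Finite (Subgroup.center W) := Finite.of_injective _ hinj
  haveI : Fact (Nat.Prime 2) := ⟨Nat.prime_two⟩
  letI : CommGroup (Subgroup.center W) := { (inferInstance : Group (Subgroup.center W)) with
    mul_comm := fun a b => Subtype.ext (Subgroup.mem_center_iff.mp b.2 a) }
  letI : Module (ZMod 2) (Additive (Subgroup.center W)) := AddCommGroup.zmodModule (by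
    intro x
    rw [two_smul]
    exact hsq x.toMul)
  let n := Module.finrank (ZMod 2) (Additive (Subgroup.center W))
  let b := Module.finBasis (ZMod 2) (Additive (Subgroup.center W))
  refine ⟨n, ⟨?_⟩⟩
  exact ((MulEquiv.multiplicativeAdditive _).symm.trans
    (AddEquiv.toMultiplicative b.equivFun.toAddEquiv)).trans
    (MulEquiv.funMultiplicative _ _)
end

section
/- Let (W,S) be a Coxeter system with S finite. Then for each w in the center Z(W), there exists a spherical subset T of S such that w is the element of longest length in the parabolic subgroup W_T (with respect to the word length ℓ of W relative to S). -/
open List Function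

namespace CoxHosaka

open scoped Classical

variable {B : Type*} {W : Type*} [Group W] {M : CoxeterMatrix B} (cs : CoxeterSystem M W)

local prefix:100 "σ" => cs.simple
local prefix:100 "π" => cs.wordProd

private lemma conj_simple_eq_simple_iff (i : B) (t : W) :
    σ i * t * σ i = σ i ↔ t = σ i := by
  constructor
  · intro hh
    have h1 := congrArg (fun x => σ i * x * σ i) hh
    rw [show σ i * (σ i * t * σ i) * σ i = (σ i * σ i) * t * (σ i * σ i) by group,
      cs.simple_mul_simple_self, one_mul, mul_one] at h1
    simpa using h1
  · rintro rfl; rw [cs.simple_mul_simple_self, one_mul]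

private noncomputable def sigFun (i : B) : W × ZMod 2 → W × ZMod 2 :=
  fun p => (σ i * p.1 * σ i, p.2 + if p.1 = σ i then 1 else 0)

private lemma sig_inv (i : B) : Involutive (sigFun cs i) := by
  intro ⟨t, ε⟩
  unfold sigFun
  refine Prod.ext ?_ ?_
  · show σ i * (σ i * t * σ i) * σ i = t
    rw [show σ i * (σ i * t * σ i) * σ i = (σ i * σ i) * t * (σ i * σ i) by group,
      cs.simple_mul_simple_self, one_mul, mul_one]
  · show ε + (if t = σ i then 1 else 0) + (if σ i * t * σ i = σ i then 1 else 0) = ε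
    rw [if_congr (conj_simple_eq_simple_iff cs i t) rfl rfl]
    by_cases ht : t = σ i
    · simp only [ht, if_pos]
      rw [add_assoc, show (1 + 1 : ZMod 2) = 0 from rfl, add_zero]
    · simp [ht]

/-- The basic permutation of `W × ZMod 2` attached to a simple generator. -/
noncomputable def sig (i : B) : Equiv.Perm (W × ZMod 2) := (sig_inv cs i).toPerm

lemma sig_apply (i : B) (t : W) (ε : ZMod 2) :
    sig cs i (t, ε) = (σ i * t * σ i, ε + if t = σ i then 1 else 0) := rfl

private lemma aux_conj (x t : W) (k : ℕ) :
    x ^ k * (x * t * x⁻¹) * (x ^ k)⁻¹ = x ^ (k + 1) * t * (x ^ (k + 1))⁻¹ := by group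

private lemma aux_fwd (x y : W) (h : x⁻¹ * y = y * x) (r : ℕ) :
    x⁻¹ * (y * x ^ r) * x = y * x ^ (r + 2) := by
  calc x⁻¹ * (y * x ^ r) * x = (x⁻¹ * y) * (x ^ r * x) := by group
    _ = (y * x) * (x ^ r * x) := by rw [h]
    _ = y * x ^ (r + 2) := by group

private lemma aux_bwd (x y : W) (h : x * y = y * x⁻¹) (r : ℕ) :
    x * (y * x ^ (r + 2)) * x⁻¹ = y * x ^ r := by
  calc x * (y * x ^ (r + 2)) * x⁻¹ = (x * y) * (x ^ (r + 2) * x⁻¹) := by group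
    _ = (y * x⁻¹) * (x ^ (r + 2) * x⁻¹) := by rw [h]
    _ = y * x ^ r := by group

private lemma sig_mul_pow (i j : B) (k : ℕ) (t : W) (ε : ZMod 2) :
    ((sig cs i * sig cs j) ^ k) (t, ε) =
      ((σ i * σ j) ^ k * t * ((σ i * σ j) ^ k)⁻¹,
        ε + ∑ r ∈ Finset.range (2 * k), if t = σ j * (σ i * σ j) ^ r then 1 else 0) := by
  have hxj : (σ i * σ j)⁻¹ * σ j = σ j * (σ i * σ j) := by
    rw [mul_inv_rev, cs.inv_simple, cs.inv_simple]; group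
  have hjx : (σ i * σ j) * σ j = σ j * (σ i * σ j)⁻¹ := by
    rw [mul_inv_rev, cs.inv_simple, cs.inv_simple, mul_assoc, cs.simple_mul_simple_self, mul_one,
      ← mul_assoc, cs.simple_mul_simple_self, one_mul]
  induction k generalizing t ε with
  | zero => simp
  | succ k ih =>
    have hstep : (sig cs i * sig cs j) (t, ε) =
        ((σ i * σ j) * t * (σ i * σ j)⁻¹,
          ε + ((if t = σ j then 1 else 0) + (if t = σ j * (σ i * σ j) then 1 else 0))) := by
      rw [Equiv.Perm.mul_apply, sig_apply, sig_apply]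
      refine Prod.ext ?_ ?_
      · show σ i * (σ j * t * σ j) * σ i = (σ i * σ j) * t * (σ i * σ j)⁻¹
        rw [mul_inv_rev, cs.inv_simple, cs.inv_simple]; group
      · show ε + (if t = σ j then 1 else 0) + (if σ j * t * σ j = σ i then 1 else 0) = _
        have : (σ j * t * σ j = σ i) ↔ (t = σ j * (σ i * σ j)) := by
          constructor
          · intro hh
            have h1 := congrArg (fun x => σ j * x * σ j) hh
            rw [show σ j * (σ j * t * σ j) * σ j = (σ j * σ j) * t * (σ j * σ j) by group,
              cs.simple_mul_simple_self, one_mul, mul_one] at h1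
            rw [h1]; group
          · rintro rfl
            rw [show σ j * (σ j * (σ i * σ j)) * σ j
                = (σ j * σ j) * σ i * (σ j * σ j) by group,
              cs.simple_mul_simple_self, one_mul, mul_one]
        rw [if_congr this rfl rfl, add_assoc]
    rw [pow_succ, Equiv.Perm.mul_apply, hstep, ih]
    refine Prod.ext ?_ ?_
    · exact aux_conj (σ i * σ j) t k
    · show _ + ((if t = σ j then 1 else 0) + (if t = σ j * (σ i * σ j) then 1 else 0)) + _ = _
      have hre : ∑ r ∈ Finset.range (2 * k),
            (if (σ i * σ j) * t * (σ i * σ j)⁻¹ = σ j * (σ i * σ j) ^ r then (1 : ZMod 2) else 0)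
          = ∑ r ∈ Finset.range (2 * k), if t = σ j * (σ i * σ j) ^ (r + 2) then 1 else 0 := by
        refine Finset.sum_congr rfl fun r _ => ?_
        refine if_congr ?_ rfl rfl
        constructor
        · intro hh
          have h1 := congrArg (fun x => (σ i * σ j)⁻¹ * x * (σ i * σ j)) hh
          rw [show (σ i * σ j)⁻¹ * ((σ i * σ j) * t * (σ i * σ j)⁻¹) * (σ i * σ j) = t by group]
            at h1
          rw [h1]
          exact aux_fwd (σ i * σ j) (σ j) hxj r
        · rintro rfl
          exact aux_bwd (σ i * σ j) (σ j) hjx r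
      rw [hre]
      have : ∑ r ∈ Finset.range (2 * (k + 1)), (if t = σ j * (σ i * σ j) ^ r then (1 : ZMod 2) else 0)
          = ((if t = σ j * (σ i * σ j) ^ 0 then 1 else 0) + (if t = σ j * (σ i * σ j) ^ 1 then 1 else 0))
            + ∑ r ∈ Finset.range (2 * k), if t = σ j * (σ i * σ j) ^ (r + 2) then 1 else 0 := by
        rw [show 2 * (k + 1) = 2 * k + 1 + 1 from by ring, Finset.sum_range_succ',
          Finset.sum_range_succ']
        ring_nf
      rw [this, pow_zero, mul_one, pow_one]
      ring
private lemma liftable : M.IsLiftable (sig cs) := by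
  intro i j
  apply Equiv.ext
  rintro ⟨t, ε⟩
  rw [sig_mul_pow, cs.simple_mul_simple_pow]
  refine Prod.ext ?_ ?_
  · simp
  · show ε + _ = ε
    have hS : ∑ r ∈ Finset.range (2 * M i j),
        (if t = σ j * (σ i * σ j) ^ r then (1 : ZMod 2) else 0) = 0 := by
      rw [two_mul, Finset.sum_range_add]
      have : ∀ r ∈ Finset.range (M i j),
          (if t = σ j * (σ i * σ j) ^ (M i j + r) then (1 : ZMod 2) else 0)
          = (if t = σ j * (σ i * σ j) ^ r then (1 : ZMod 2) else 0) := by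
        intro r _
        refine if_congr ?_ rfl rfl
        rw [pow_add, cs.simple_mul_simple_pow, one_mul]
      rw [Finset.sum_congr rfl this, ← Finset.sum_add_distrib]
      refine Finset.sum_eq_zero fun r _ => ?_
      exact CharTwo.add_self_eq_zero _
    rw [hS, add_zero]

/-- The reflection-cocycle homomorphism. -/
noncomputable def eta : W →* Equiv.Perm (W × ZMod 2) := cs.lift ⟨sig cs, liftable cs⟩

lemma eta_simple (i : B) : eta cs (σ i) = sig cs i := cs.lift_apply_simple (liftable cs) i

/-- `nuF cs w t` is `1` iff `t` is a "right inversion" of `w` counted with sign. -/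
noncomputable def nuF (w t : W) : ZMod 2 := ((eta cs w) (t, 0)).2

lemma eta_wordProd (ω : List B) (t : W) (ε : ZMod 2) :
    eta cs (π ω) (t, ε) =
      (π ω * t * (π ω)⁻¹, ε + ((cs.rightInvSeq ω).count t : ZMod 2)) := by
  induction ω generalizing t ε with
  | nil => simp [cs.wordProd_nil]
  | cons i ω ih =>
    rw [cs.wordProd_cons, map_mul, Equiv.Perm.mul_apply, ih, eta_simple, sig_apply]
    have hris : cs.rightInvSeq (i :: ω) = ((π ω)⁻¹ * σ i * π ω) :: cs.rightInvSeq ω := rfl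
    refine Prod.ext ?_ ?_
    · show σ i * (π ω * t * (π ω)⁻¹) * σ i = _
      rw [mul_inv_rev, cs.inv_simple]; group
    · show ε + _ + _ = ε + _
      rw [hris, List.count_cons]
      have hiff : (π ω * t * (π ω)⁻¹ = σ i) ↔ (((π ω)⁻¹ * σ i * π ω) == t) = true := by
        rw [beq_iff_eq]
        constructor
        · intro h; rw [← h]; group
        · intro h; rw [← h]; group
      push_cast
      rw [if_congr hiff rfl rfl]
      by_cases hc : (((π ω)⁻¹ * σ i * π ω) == t) = true <;> simp [hc] <;> ring

lemma eta_apply (w t : W) (ε : ZMod 2) :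
    eta cs w (t, ε) = (w * t * w⁻¹, ε + nuF cs w t) := by
  obtain ⟨ω, rfl⟩ := cs.wordProd_surjective w
  rw [eta_wordProd, nuF, eta_wordProd, zero_add]

lemma nuF_count (ω : List B) (t : W) :
    nuF cs (π ω) t = ((cs.rightInvSeq ω).count t : ZMod 2) := by
  rw [nuF, eta_wordProd, zero_add]

lemma nuF_mul (a b t : W) : nuF cs (a * b) t = nuF cs b t + nuF cs a (b * t * b⁻¹) := by
  have : eta cs (a * b) (t, 0) = eta cs a (eta cs b (t, 0)) := by
    rw [map_mul, Equiv.Perm.mul_apply]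
  rw [nuF, this, eta_apply cs b t 0, zero_add, eta_apply]

lemma nuF_one (t : W) : nuF cs 1 t = 0 := by rw [nuF, map_one]; rfl

private lemma zmod2_cases (x : ZMod 2) : x = 0 ∨ x = 1 := by fin_cases x <;> [exact Or.inl rfl; exact Or.inr rfl]

lemma nuF_lt {w t : W} (h : nuF cs w t = 1) : cs.length (w * t) < cs.length w := by
  obtain ⟨ω, hred, rfl⟩ := cs.exists_reduced_word' w
  rw [nuF_count] at h
  have hmem : t ∈ cs.rightInvSeq ω := by
    rw [← List.count_pos_iff]
    rcases Nat.eq_zero_or_pos ((cs.rightInvSeq ω).count t) with h0 | h0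
    · rw [h0] at h; simp at h
    · exact h0
  exact (cs.isRightInversion_of_mem_rightInvSeq hred hmem).2
private lemma pal_aux {s t : W} (hs : s * s = 1) (ht : t * t = 1) :
    (s * t * s⁻¹ = (t * s)⁻¹ * s * (t * s)) ↔ (s * t * s⁻¹ = s) := by
  have hsi : s⁻¹ = s := inv_eq_of_mul_eq_one_right hs
  have hti : t⁻¹ = t := inv_eq_of_mul_eq_one_right ht
  rw [hsi, mul_inv_rev, hsi, hti]
  constructor
  · intro h
    have h2 : t * s = 1 := by
      have h3 := congrArg (fun x => (s * t * s)⁻¹ * x) h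
      rw [inv_mul_cancel, show (s * t * s)⁻¹ * (s * t * s * (t * s)) = t * s by group] at h3
      exact h3.symm
    have h4 : t = s := by
      have h5 := congrArg (fun x => x * s) h2
      rw [show t * s * s = t * (s * s) by group, hs, mul_one, one_mul] at h5
      exact h5
    rw [h4, hs, one_mul]
  · intro h
    have h4 : t = s := by
      have h5 := congrArg (fun x => s * x * s) h
      rw [show s * (s * t * s) * s = (s * s) * t * (s * s) by group, hs] at h5
      simpa using h5
    rw [h4, hs]
    simp

private lemma count_pal (i : B) : ∀ (a : List B),
    ((cs.rightInvSeq (a ++ [i] ++ a.reverse)).count (π a * σ i * (π a)⁻¹) : ZMod 2) = 1 := by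
  intro a
  induction a with
  | nil => simp
  | cons j b ih =>
    set t' : W := π b * σ i * (π b)⁻¹ with ht'def
    have ht'refl : cs.IsReflection t' := ⟨π b, i, rfl⟩
    have hπ'' : π (b ++ [i] ++ b.reverse) = t' := by
      rw [cs.wordProd_append, cs.wordProd_append, cs.wordProd_singleton, cs.wordProd_reverse]
    have hlist : (j :: b) ++ [i] ++ (j :: b).reverse
        = j :: ((b ++ [i] ++ b.reverse).concat j) := by
      simp [List.concat_eq_append]
    have htgt : π (j :: b) * σ i * (π (j :: b))⁻¹ = σ j * t' * (σ j)⁻¹ := by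
      rw [cs.wordProd_cons, mul_inv_rev, ht'def]; group
    rw [hlist, htgt]
    have hcons : cs.rightInvSeq (j :: ((b ++ [i] ++ b.reverse).concat j))
        = ((π ((b ++ [i] ++ b.reverse).concat j))⁻¹ * σ j * π ((b ++ [i] ++ b.reverse).concat j))
          :: cs.rightInvSeq ((b ++ [i] ++ b.reverse).concat j) := rfl
    rw [hcons, cs.rightInvSeq_concat, cs.wordProd_concat, hπ'']
    rw [List.count_cons, List.concat_eq_append, List.count_append, List.count_singleton]
    -- three pieces
    have hmap : (List.map (⇑(MulAut.conj (σ j))) (cs.rightInvSeq (b ++ [i] ++ b.reverse))).count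
        (σ j * t' * (σ j)⁻¹) = (cs.rightInvSeq (b ++ [i] ++ b.reverse)).count t' := by
      rw [show (σ j * t' * (σ j)⁻¹ : W) = (MulAut.conj (σ j)) t' from rfl]
      exact List.count_map_of_injective _ _ (MulAut.conj (σ j)).injective t'
    have hiff1 : (((t' * σ j)⁻¹ * σ j * (t' * σ j)) == (σ j * t' * (σ j)⁻¹)) = ((σ j) == (σ j * t' * (σ j)⁻¹)) := by
      have := pal_aux (cs.simple_mul_simple_self j) ht'refl.mul_self
      by_cases hc : σ j * t' * (σ j)⁻¹ = σ j
      · have h1 : σ j * t' * (σ j)⁻¹ = (t' * σ j)⁻¹ * σ j * (t' * σ j) := this.mpr hc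
        rw [show (((t' * σ j)⁻¹ * σ j * (t' * σ j)) == (σ j * t' * (σ j)⁻¹)) = true from
            beq_iff_eq.mpr h1.symm,
          show ((σ j : W) == (σ j * t' * (σ j)⁻¹)) = true from beq_iff_eq.mpr hc.symm]
      · have h1 : ¬(σ j * t' * (σ j)⁻¹ = (t' * σ j)⁻¹ * σ j * (t' * σ j)) := fun h => hc (this.mp h)
        rw [show (((t' * σ j)⁻¹ * σ j * (t' * σ j)) == (σ j * t' * (σ j)⁻¹)) = false from
            beq_eq_false_iff_ne.mpr (fun h => h1 h.symm),
          show ((σ j : W) == (σ j * t' * (σ j)⁻¹)) = false from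
            beq_eq_false_iff_ne.mpr (fun h => hc h.symm)]
    rw [hmap, hiff1]
    push_cast
    rw [ih]
    by_cases hc : ((σ j : W) == (σ j * t' * (σ j)⁻¹)) = true <;>
      simp [hc] <;>
      rw [add_assoc, CharTwo.add_self_eq_zero, add_zero]

lemma nuF_reflection {t : W} (h : cs.IsReflection t) : nuF cs t t = 1 := by
  obtain ⟨u, i, rfl⟩ := h
  obtain ⟨a, rfl⟩ := cs.wordProd_surjective u
  have h1 := count_pal cs i a
  have h2 : π (a ++ [i] ++ a.reverse) = π a * σ i * (π a)⁻¹ := by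
    rw [cs.wordProd_append, cs.wordProd_append, cs.wordProd_singleton, cs.wordProd_reverse]
  rw [← nuF_count, h2] at h1
  exact h1

lemma nuF_iff {w t : W} (h : cs.IsReflection t) :
    nuF cs w t = 1 ↔ cs.length (w * t) < cs.length w := by
  constructor
  · exact nuF_lt cs
  · intro hlt
    have h0 : nuF cs (w * t) t = 0 := by
      rcases zmod2_cases (nuF cs (w * t) t) with h0 | h1
      · exact h0
      · exfalso
        have := nuF_lt cs h1
        rw [mul_assoc, h.mul_self, mul_one] at this
        omega
    have hw : w = (w * t) * t := by rw [mul_assoc, h.mul_self, mul_one]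
    rw [hw, nuF_mul, nuF_reflection cs h, show t * t * t⁻¹ = t by rw [h.mul_self, one_mul, h.inv],
      h0, add_zero]

lemma nuF_conj_central {w : W} (hw : w ∈ Subgroup.center W) (u t : W) :
    nuF cs w (u * t * u⁻¹) = nuF cs w t := by
  have hc : ∀ g : W, g * w = w * g := Subgroup.mem_center_iff.mp hw
  have h1 : nuF cs (u * w) t = nuF cs w t + nuF cs u t := by
    rw [nuF_mul, show w * t * w⁻¹ = t by rw [← hc t, mul_inv_cancel_right]]
  have h2 : nuF cs (w * u) t = nuF cs u t + nuF cs w (u * t * u⁻¹) := nuF_mul cs w u t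
  rw [hc u, h2] at h1
  exact add_left_cancel (h1.trans (add_comm _ _))
lemma wordProd_mem_closure {T : Set B} {a : List B} (ha : ∀ i ∈ a, i ∈ T) :
    π a ∈ Subgroup.closure (cs.simple '' T) := by
  induction a with
  | nil => rw [cs.wordProd_nil]; exact Subgroup.one_mem _
  | cons i a ih =>
    rw [cs.wordProd_cons]
    exact Subgroup.mul_mem _
      (Subgroup.subset_closure ⟨i, ha i (List.mem_cons_self), rfl⟩)
      (ih fun x hx => ha x (List.mem_cons_of_mem i hx))

lemma delete_two {a : List B} (hnr : ¬ cs.IsReduced a) :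
    ∃ a' : List B, a'.length + 2 = a.length ∧ (∀ i ∈ a', i ∈ a) ∧ π a' = π a := by
  have hne : a ≠ [] := by
    rintro rfl
    exact hnr (by simp [CoxeterSystem.IsReduced])
  have hlen1 : 1 ≤ a.length := List.length_pos_iff.mpr hne
  have hex : ∃ k, ¬ cs.IsReduced (a.take (k + 1)) := by
    refine ⟨a.length - 1, ?_⟩
    rwa [List.take_of_length_le (by omega)]
  classical
  set k := Nat.find hex with hkdef
  have hk : ¬ cs.IsReduced (a.take (k + 1)) := Nat.find_spec hex
  have hkle : k ≤ a.length - 1 := Nat.find_min' hex (by rwa [List.take_of_length_le (by omega)])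
  have hklt : k < a.length := by omega
  have hred : cs.IsReduced (a.take k) := by
    rcases Nat.eq_zero_or_pos k with h0 | h0
    · rw [h0]; simp [CoxeterSystem.IsReduced]
    · have := Nat.find_min hex (m := k - 1) (by omega)
      push_neg at this
      rwa [show k - 1 + 1 = k by omega] at this
  have htakelen : (a.take k).length = k := by
    rw [List.length_take]; omega
  have htake : a.take (k + 1) = a.take k ++ [a[k]] := by
    rw [List.take_succ, List.getElem?_eq_getElem hklt, Option.toList_some]
  have hlprod : cs.length (π (a.take k)) = k := by rw [hred, htakelen]
  have hnred2 : cs.length (π (a.take k) * σ (a[k])) ≠ k + 1 := by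
    intro hcon
    apply hk
    rw [htake]
    show cs.length (π (a.take k ++ [a[k]])) = _
    rw [cs.wordProd_append, cs.wordProd_singleton, hcon, List.length_append, htakelen,
      List.length_singleton]
  have hdichot := cs.length_mul_simple (π (a.take k)) (a[k])
  rw [hlprod] at hdichot
  have hlt : cs.length (π (a.take k) * σ (a[k])) + 1 = k := by
    rcases hdichot with h | h
    · exact absurd h hnred2
    · exact h
  have hk1 : 1 ≤ k := by omega
  have hnu : nuF cs (π (a.take k)) (σ (a[k])) = 1 :=
    (nuF_iff cs (cs.isReflection_simple (a[k]))).mpr (by omega)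
  rw [nuF_count] at hnu
  have hmem : σ (a[k]) ∈ cs.rightInvSeq (a.take k) := by
    rw [← List.count_pos_iff]
    rcases Nat.eq_zero_or_pos ((cs.rightInvSeq (a.take k)).count (σ (a[k]))) with h0 | h0
    · rw [h0] at hnu; simp at hnu
    · exact h0
  obtain ⟨n, hn⟩ := List.mem_iff_get.mp hmem
  have hnlt : n.1 < (a.take k).length :=
    lt_of_lt_of_eq n.2 (cs.length_rightInvSeq _)
  have hgetD : (cs.rightInvSeq (a.take k)).getD n.1 1 = σ (a[k]) := by
    rw [List.getD_eq_getElem _ _ n.2, ← List.get_eq_getElem, hn]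
  have herase : π (a.take k) * σ (a[k]) = π ((a.take k).eraseIdx n.1) := by
    rw [← hgetD]; exact cs.wordProd_mul_getD_rightInvSeq _ _
  refine ⟨(a.take k).eraseIdx n.1 ++ a.drop (k + 1), ?_, ?_, ?_⟩
  · rw [List.length_append, List.length_eraseIdx, if_pos hnlt, htakelen, List.length_drop]
    omega
  · intro x hx
    rcases List.mem_append.mp hx with h | h
    · exact List.take_subset k a (((a.take k).eraseIdx_sublist n.1).subset h)
    · exact List.drop_subset (k + 1) a h
  · rw [cs.wordProd_append, ← herase]
    conv_rhs => rw [← List.take_append_drop (k + 1) a]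
    rw [cs.wordProd_append, htake, cs.wordProd_append, cs.wordProd_singleton]

lemma exists_reduced_word_subset {T : Set B} {v : W}
    (hv : v ∈ Subgroup.closure (cs.simple '' T)) :
    ∃ a : List B, (∀ i ∈ a, i ∈ T) ∧ cs.IsReduced a ∧ π a = v := by
  have h0 : ∃ a : List B, (∀ i ∈ a, i ∈ T) ∧ π a = v := by
    refine Subgroup.closure_induction ?_ ?_ ?_ ?_ hv
    · rintro x ⟨i, hi, rfl⟩
      exact ⟨[i], by simpa using hi, by simp⟩
    · exact ⟨[], by simp, by simp⟩
    · rintro x y _ _ ⟨a, ha, rfl⟩ ⟨b, hb, rfl⟩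
      refine ⟨a ++ b, ?_, by rw [cs.wordProd_append]⟩
      intro i hi
      rcases List.mem_append.mp hi with h | h
      · exact ha i h
      · exact hb i h
    · rintro x _ ⟨a, ha, rfl⟩
      exact ⟨a.reverse, fun i hi => ha i (List.mem_reverse.mp hi), by rw [cs.wordProd_reverse]⟩
  obtain ⟨a, ha, rfl⟩ := h0
  have key : ∀ n (a : List B), a.length = n → (∀ i ∈ a, i ∈ T) →
      ∃ b : List B, (∀ i ∈ b, i ∈ T) ∧ cs.IsReduced b ∧ π b = π a := by
    intro n
    induction n using Nat.strong_induction_on with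
    | _ n ih =>
      intro a hlen haT
      by_cases hr : cs.IsReduced a
      · exact ⟨a, haT, hr, rfl⟩
      · obtain ⟨a', hlen', hmem', hprod'⟩ := delete_two cs hr
        obtain ⟨b, hbT, hbred, hbprod⟩ :=
          ih a'.length (by omega) a' rfl (fun i hi => haT i (hmem' i hi))
        exact ⟨b, hbT, hbred, by rw [hbprod, hprod']⟩
  exact key a.length a rfl ha

lemma length_max {T : Set B} {w : W}
    (hinv : ∀ i ∈ T, ∀ u : W, nuF cs w (u * σ i * u⁻¹) = 1) :
    ∀ v ∈ Subgroup.closure (cs.simple '' T),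
      cs.length (w * v) + cs.length v = cs.length w := by
  intro v hv
  obtain ⟨a, haT, hared, rfl⟩ := exists_reduced_word_subset cs hv
  clear hv
  induction a using List.reverseRecOn with
  | nil => simp
  | append_singleton b i ihb =>
    have hbred : cs.IsReduced b := by
      have := hared.take b.length
      rwa [List.take_left] at this
    have hbmem : ∀ x ∈ b, x ∈ T := fun x hx => haT x (List.mem_append_left _ hx)
    have hiT : i ∈ T := haT i (List.mem_append_right _ (List.mem_singleton_self i))
    have ihb' := ihb hbmem hbred
    have hbl : cs.length (π b) = b.length := hbred
    have hal : cs.length (π (b ++ [i])) = b.length + 1 := by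
      rw [hared, List.length_append, List.length_singleton]
    have hprod : π (b ++ [i]) = π b * σ i := by
      rw [cs.wordProd_append, cs.wordProd_singleton]
    have hnd : nuF cs (π b) (σ i) = 0 := by
      rcases zmod2_cases (nuF cs (π b) (σ i)) with h0 | h1
      · exact h0
      · exfalso
        have := nuF_lt cs h1
        rw [← hprod, hal, hbl] at this
        omega
    have hn : nuF cs (w * π b) (σ i) = 1 := by
      rw [nuF_mul, hnd, zero_add]
      exact hinv i hiT (π b)
    have hlt := nuF_lt cs hn
    rw [mul_assoc] at hlt
    have hdichot := cs.length_mul_simple (w * π b) i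
    have heq : cs.length (w * (π b * σ i)) + 1 = cs.length (w * π b) := by
      rcases hdichot with h | h
      · rw [← mul_assoc] at hlt ⊢; omega
      · rw [← mul_assoc] at hlt ⊢; omega
    rw [hprod, ← mul_assoc]
    have h2 : cs.length (π b * σ i) = b.length + 1 := by rw [← hprod]; exact hal
    rw [← mul_assoc] at heq
    omega
end CoxHosaka

open CoxHosaka List

/-- **Theorem (Hosaka).** Let `(W, S)` be a Coxeter system with `S` finite. For each `w` in
the center `Z(W)` there exists a spherical subset `T ⊆ S` (i.e. the parabolic subgroup
`W_T` generated by `T` is finite) such that `w` is the element of longest length in `W_T`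
(with respect to the word length `ℓ` of `W` relative to `S`). -/
theorem center_coxeter_longest_element_of_spherical {B : Type*} [Finite B] {W : Type*} [Group W]
    (M : CoxeterMatrix B) (cs : CoxeterSystem M W) :
    ∀ w ∈ Subgroup.center W, ∃ T : Set B,
      Finite (Subgroup.closure (cs.simple '' T)) ∧
      w ∈ Subgroup.closure (cs.simple '' T) ∧
      (∀ v ∈ Subgroup.closure (cs.simple '' T), v ≠ w → cs.length v < cs.length w) := by
  classical
  intro w hw
  obtain ⟨ω, hred, hweq⟩ := cs.exists_reduced_word' w
  set T : Set B := {i | i ∈ ω} with hTdef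
  have hwP : w ∈ Subgroup.closure (cs.simple '' T) := by
    rw [hweq]; exact wordProd_mem_closure cs (fun i hi => hi)
  have hconj : ∀ u t : W, nuF cs w (u * t * u⁻¹) = nuF cs w t := nuF_conj_central cs hw
  have hdesc : ∀ i ∈ T, nuF cs w (cs.simple i) = 1 := by
    intro i hi
    obtain ⟨n, hn⟩ := List.mem_iff_get.mp (hi : i ∈ ω)
    have hnlt : n.1 < (cs.rightInvSeq ω).length := by
      rw [cs.length_rightInvSeq]; exact n.2
    set t := (cs.rightInvSeq ω).getD n.1 1 with htdef
    have htmem : t ∈ cs.rightInvSeq ω := by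
      rw [htdef, List.getD_eq_getElem _ _ hnlt]
      exact List.getElem_mem _
    have hcnt : (cs.rightInvSeq ω).count t = 1 :=
      List.count_eq_one_of_mem (CoxeterSystem.IsReduced.nodup_rightInvSeq cs hred) htmem
    have h1 : nuF cs w t = 1 := by
      rw [hweq, nuF_count, hcnt, Nat.cast_one]
    have htform : t = (cs.wordProd (ω.drop (n.1 + 1)))⁻¹ * cs.simple i
        * cs.wordProd (ω.drop (n.1 + 1)) := by
      rw [htdef, cs.getD_rightInvSeq, List.getElem?_eq_getElem n.2, show ω[n.1] = i from hn]
      rfl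
    have h2 : nuF cs w t = nuF cs w (cs.simple i) := by
      rw [htform, show (cs.wordProd (ω.drop (n.1 + 1)))⁻¹ * cs.simple i
            * cs.wordProd (ω.drop (n.1 + 1))
          = (cs.wordProd (ω.drop (n.1 + 1)))⁻¹ * cs.simple i
            * ((cs.wordProd (ω.drop (n.1 + 1)))⁻¹)⁻¹ by rw [inv_inv]]
      exact hconj _ _
    rw [← h2]; exact h1
  have hinv : ∀ i ∈ T, ∀ u : W, nuF cs w (u * cs.simple i * u⁻¹) = 1 := fun i hi u => by
    rw [hconj]; exact hdesc i hi
  have hM := length_max cs hinv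
  have hwc : ∀ g : W, g * w = w * g := Subgroup.mem_center_iff.mp hw
  have hwinv_c : w⁻¹ ∈ Subgroup.center W := Subgroup.inv_mem _ hw
  have hconj' := nuF_conj_central cs hwinv_c
  have hdesc' : ∀ i ∈ T, nuF cs w⁻¹ (cs.simple i) = 1 := by
    intro i hi
    rw [nuF_iff cs (cs.isReflection_simple i)]
    have h1 : cs.length (w * cs.simple i) < cs.length w := nuF_lt cs (hdesc i hi)
    calc cs.length (w⁻¹ * cs.simple i) = cs.length ((w⁻¹ * cs.simple i)⁻¹) :=
          (cs.length_inv _).symm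
      _ = cs.length (cs.simple i * w) := by rw [mul_inv_rev, inv_inv, cs.inv_simple]
      _ = cs.length (w * cs.simple i) := by rw [hwc (cs.simple i)]
      _ < cs.length w := h1
      _ = cs.length w⁻¹ := (cs.length_inv w).symm
  have hinv' : ∀ i ∈ T, ∀ u : W, nuF cs w⁻¹ (u * cs.simple i * u⁻¹) = 1 := fun i hi u => by
    rw [hconj']; exact hdesc' i hi
  have hM' := length_max cs hinv'
  have hwinvP : w⁻¹ ∈ Subgroup.closure (cs.simple '' T) := Subgroup.inv_mem _ hwP
  have hsq : w⁻¹ * w⁻¹ = 1 := by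
    have h1 := hM' w⁻¹ hwinvP
    have h2 : cs.length w⁻¹ = cs.length w := cs.length_inv w
    have h0 : cs.length (w⁻¹ * w⁻¹) = 0 := by omega
    exact cs.length_eq_zero_iff.mp h0
  have hinvol : w⁻¹ = w :=
    ((inv_eq_of_mul_eq_one_right hsq).symm).trans (inv_inv w)
  refine ⟨T, ?_, hwP, ?_⟩
  · have hb : (Subgroup.closure (cs.simple '' T) : Set W)
        ⊆ cs.wordProd '' {l : List B | l.length ≤ cs.length w} := by
      intro v hv
      obtain ⟨a, haT, hared, rfl⟩ := exists_reduced_word_subset cs hv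
      refine ⟨a, ?_, rfl⟩
      have h1 := hM (cs.wordProd a) hv
      have h2 : cs.length (cs.wordProd a) = a.length := hared
      show a.length ≤ cs.length w
      omega
    have hfin : (Subgroup.closure (cs.simple '' T) : Set W).Finite :=
      Set.Finite.subset (Set.Finite.image _ (List.finite_length_le B (cs.length w))) hb
    exact hfin.to_subtype
  · intro v hv hne
    have h1 := hM v hv
    have h2 : cs.length v ≤ cs.length w := by omega
    rcases lt_or_eq_of_le h2 with h | h
    · exact h
    · exfalso
      have h0 : cs.length (w * v) = 0 := by omega
      have h3 : w * v = 1 := cs.length_eq_zero_iff.mp h0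
      exact hne (((inv_eq_of_mul_eq_one_right h3).symm).trans hinvol)
end

section
/- Let (W,S) be a Coxeter system with S finite. For a spherical subset T of S, let w_T denote the element of longest length in the finite parabolic subgroup W_T. Then Z(W) ⊆ { w_T : T is a spherical subset of S }. -/
open scoped Classical

namespace CoxeterSystem

open List

variable {B : Type*} {W : Type*} [Group W] {M : CoxeterMatrix B} (cs : CoxeterSystem M W)

private lemma zmod2_add_self : ∀ (a : ZMod 2), a + a = 0 := by decide
private lemma zmod2_cancel : ∀ (a b : ZMod 2), a + b = 0 → b = a := by decide
private lemma zmod2_aba : ∀ (a : ZMod 2), a + 1 + a = 1 := by decide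
private lemma zmod2_cases : ∀ (a : ZMod 2), a = 0 ∨ a = 1 := by decide
private lemma zmod2_of_one_add : ∀ (a : ZMod 2), (0 : ZMod 2) = 1 + a → a = 1 := by decide

/-- The function underlying the reflection-cocycle permutation for a simple generator. -/
noncomputable def muFun (i : B) : W × ZMod 2 → W × ZMod 2 :=
  fun p => (cs.simple i * p.1 * cs.simple i, p.2 + if p.1 = cs.simple i then 1 else 0)

lemma muFun_invol (i : B) (p : W × ZMod 2) : cs.muFun i (cs.muFun i p) = p := by
  obtain ⟨t, e⟩ := p
  have h1 : cs.simple i * (cs.simple i * t * cs.simple i) * cs.simple i = t := by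
    rw [← mul_assoc, ← mul_assoc, cs.simple_mul_simple_self, one_mul, mul_assoc,
      cs.simple_mul_simple_self, mul_one]
  have h2 : (cs.simple i * t * cs.simple i = cs.simple i) ↔ (t = cs.simple i) := by
    constructor
    · intro h
      have := congrArg (fun x => cs.simple i * x * cs.simple i) h
      rw [h1] at this
      rw [this, cs.simple_mul_simple_self, one_mul]
    · rintro rfl
      rw [cs.simple_mul_simple_self, one_mul]
  simp only [muFun, h1, h2]
  refine Prod.ext rfl ?_
  simp only [add_assoc]
  rcases em (t = cs.simple i) with h | h <;> simp [h, zmod2_add_self]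

/-- The reflection-cocycle permutation for a simple generator. -/
noncomputable def mu (i : B) : Equiv.Perm (W × ZMod 2) :=
  ⟨cs.muFun i, cs.muFun i, cs.muFun_invol i, cs.muFun_invol i⟩

lemma mu_apply (i : B) (t : W) (e : ZMod 2) :
    cs.mu i (t, e) = (cs.simple i * t * cs.simple i, e + if t = cs.simple i then 1 else 0) := rfl

private lemma simple_mul_y (i i' : B) :
    cs.simple i' * (cs.simple i' * cs.simple i)
      = (cs.simple i' * cs.simple i)⁻¹ * cs.simple i' := by
  rw [mul_inv_rev, cs.inv_simple, cs.inv_simple, ← mul_assoc,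
    cs.simple_mul_simple_self, one_mul, mul_assoc, cs.simple_mul_simple_self, mul_one]

private lemma y_mul_simple (i i' : B) :
    (cs.simple i' * cs.simple i) * cs.simple i'
      = cs.simple i' * (cs.simple i' * cs.simple i)⁻¹ := by
  have key := cs.simple_mul_y i i'
  set y : W := cs.simple i' * cs.simple i
  calc y * cs.simple i' = y * (cs.simple i' * y) * y⁻¹ := by group
    _ = y * (y⁻¹ * cs.simple i') * y⁻¹ := by rw [key]
    _ = cs.simple i' * y⁻¹ := by group

private lemma mu_mul_pow_apply (i i' : B) (k : ℕ) (t : W) (e : ZMod 2) :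
    ((cs.mu i * cs.mu i') ^ k) (t, e) =
      (((cs.simple i' * cs.simple i)⁻¹) ^ k * t * (cs.simple i' * cs.simple i) ^ k,
        e + ∑ r ∈ Finset.range (2 * k),
          (if t = (cs.simple i' * cs.simple i) ^ r * cs.simple i' then (1 : ZMod 2) else 0)) := by
  set y : W := cs.simple i' * cs.simple i with hy
  induction k generalizing t e with
  | zero => simp
  | succ k ih =>
    rw [pow_succ, Equiv.Perm.mul_apply]
    have step : (cs.mu i * cs.mu i') (t, e) =
        (y⁻¹ * t * y,
          e + ((if t = y ^ 0 * cs.simple i' then (1 : ZMod 2) else 0)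
            + (if t = y ^ 1 * cs.simple i' then (1 : ZMod 2) else 0))) := by
      rw [Equiv.Perm.mul_apply, mu_apply, mu_apply]
      have hW : cs.simple i * (cs.simple i' * t * cs.simple i') * cs.simple i
          = y⁻¹ * t * y := by
        rw [hy, mul_inv_rev, cs.inv_simple, cs.inv_simple]
        group
      have hc1 : (t = cs.simple i') ↔ (t = y ^ 0 * cs.simple i') := by
        rw [pow_zero, one_mul]
      have hc2 : (cs.simple i' * t * cs.simple i' = cs.simple i)
          ↔ (t = y ^ 1 * cs.simple i') := by
        rw [pow_one]
        constructor
        · intro h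
          have h3 : t = cs.simple i' * cs.simple i * cs.simple i' := by
            have := congrArg (fun x => cs.simple i' * x * cs.simple i') h
            rw [← mul_assoc, ← mul_assoc, cs.simple_mul_simple_self, one_mul, mul_assoc,
              cs.simple_mul_simple_self, mul_one] at this
            rw [← this]
          rw [h3, hy]
        · intro h
          rw [h, hy]
          calc cs.simple i' * (cs.simple i' * cs.simple i * cs.simple i') * cs.simple i'
              = (cs.simple i' * cs.simple i') * cs.simple i
                * (cs.simple i' * cs.simple i') := by group
            _ = cs.simple i := by rw [cs.simple_mul_simple_self, one_mul, mul_one]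
      rw [hW]
      refine Prod.ext rfl ?_
      simp only [hc1, hc2, add_assoc]
    rw [step, ih]
    have hWc : y⁻¹ ^ k * (y⁻¹ * t * y) * y ^ k = y⁻¹ ^ (k + 1) * t * y ^ (k + 1) := by
      rw [pow_succ, pow_succ]
      group
    have hshift : ∀ r : ℕ,
        (if y⁻¹ * t * y = y ^ r * cs.simple i' then (1 : ZMod 2) else 0)
          = (if t = y ^ (r + 1 + 1) * cs.simple i' then (1 : ZMod 2) else 0) := by
      intro r
      have hiff : (y⁻¹ * t * y = y ^ r * cs.simple i')
          ↔ (t = y ^ (r + 1 + 1) * cs.simple i') := by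
        constructor
        · intro h
          have ht : t = y * (y ^ r * cs.simple i') * y⁻¹ := by
            rw [← h]; group
          rw [ht]
          have hys : cs.simple i' * y⁻¹ = y * cs.simple i' := (cs.y_mul_simple i i').symm
          calc y * (y ^ r * cs.simple i') * y⁻¹
              = y ^ (r + 1) * (cs.simple i' * y⁻¹) := by rw [pow_succ]; group
            _ = y ^ (r + 1) * (y * cs.simple i') := by rw [hys]
            _ = y ^ (r + 1 + 1) * cs.simple i' := by rw [pow_succ]; group
        · intro h
          rw [h]
          have h1 : y ^ (r + 1 + 1) = y * (y * y ^ r) := by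
            rw [pow_succ, pow_succ]; group
          have h2 : y * cs.simple i' = cs.simple i' * y⁻¹ := cs.y_mul_simple i i'
          calc y⁻¹ * (y ^ (r + 1 + 1) * cs.simple i') * y
              = y⁻¹ * (y * (y * y ^ r) * cs.simple i') * y := by rw [h1]
            _ = y ^ r * (y * cs.simple i') * y := by group
            _ = y ^ r * (cs.simple i' * y⁻¹) * y := by rw [h2]
            _ = y ^ r * cs.simple i' := by group
      simp only [hiff]
    refine Prod.ext hWc ?_
    show e + _ + _ = e + _
    rw [add_assoc]
    congr 1
    have h2k : 2 * (k + 1) = 2 * k + 1 + 1 := by ring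
    rw [h2k, Finset.sum_range_succ', Finset.sum_range_succ']
    simp only [hshift, zero_add]
    ring

lemma mu_liftable : M.IsLiftable (cs.mu) := by
  intro i i'
  have hym : (cs.simple i' * cs.simple i) ^ M i i' = 1 := cs.simple_mul_simple_pow' i i'
  apply Equiv.ext
  rintro ⟨t, e⟩
  rw [mu_mul_pow_apply]
  have hsum : ∑ r ∈ Finset.range (2 * M i i'),
      (if t = (cs.simple i' * cs.simple i) ^ r * cs.simple i' then (1 : ZMod 2) else 0) = 0 := by
    rw [two_mul, Finset.sum_range_add]
    have hper : ∀ r : ℕ,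
        (if t = (cs.simple i' * cs.simple i) ^ (M i i' + r) * cs.simple i' then (1 : ZMod 2)
          else 0)
        = (if t = (cs.simple i' * cs.simple i) ^ r * cs.simple i' then (1 : ZMod 2) else 0) := by
      intro r
      have : (cs.simple i' * cs.simple i) ^ (M i i' + r)
          = (cs.simple i' * cs.simple i) ^ r := by
        rw [pow_add, hym, one_mul]
      rw [this]
    simp only [hper]
    rw [← Finset.sum_add_distrib]
    refine Finset.sum_eq_zero fun r _ => zmod2_add_self _
  rw [hsum, inv_pow, hym, inv_one, one_mul, mul_one, add_zero]
  simp

/-- The reflection cocycle homomorphism. -/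
noncomputable def phi : W →* Equiv.Perm (W × ZMod 2) := cs.lift ⟨cs.mu, cs.mu_liftable⟩

lemma phi_simple (i : B) : cs.phi (cs.simple i) = cs.mu i :=
  cs.lift_apply_simple cs.mu_liftable i

/-- `cs.eta w t = 1` iff `t` is a right inversion of `w` (for `t` a reflection). -/
noncomputable def eta (w t : W) : ZMod 2 := ((cs.phi w) (t, 0)).2

lemma eta_one (t : W) : cs.eta 1 t = 0 := by
  unfold eta
  rw [map_one]
  rfl

lemma phi_apply (w t : W) (e : ZMod 2) :
    cs.phi w (t, e) = (w * t * w⁻¹, e + cs.eta w t) := by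
  induction w using cs.simple_induction_left generalizing t e with
  | one =>
    rw [map_one, cs.eta_one]
    simp
  | mul_simple_left w i hw =>
    have key : ∀ e' : ZMod 2, cs.phi (cs.simple i * w) (t, e')
        = (cs.simple i * (w * t * w⁻¹) * cs.simple i,
            e' + (cs.eta w t + (if w * t * w⁻¹ = cs.simple i then 1 else 0))) := by
      intro e'
      rw [map_mul, Equiv.Perm.mul_apply, hw t e', cs.phi_simple, cs.mu_apply]
      exact Prod.ext rfl (add_assoc _ _ _)
    have heta : cs.eta (cs.simple i * w) t
        = cs.eta w t + (if w * t * w⁻¹ = cs.simple i then 1 else 0) := by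
      show (cs.phi (cs.simple i * w) (t, 0)).2 = _
      rw [key 0]
      exact zero_add _
    rw [key e, heta]
    refine Prod.ext ?_ rfl
    show cs.simple i * (w * t * w⁻¹) * cs.simple i = (cs.simple i * w) * t * (cs.simple i * w)⁻¹
    rw [mul_inv_rev, cs.inv_simple]
    group

lemma eta_mul (u v t : W) : cs.eta (u * v) t = cs.eta v t + cs.eta u (v * t * v⁻¹) := by
  have h1 : cs.phi (u * v) (t, 0)
      = (u * (v * t * v⁻¹) * u⁻¹, 0 + cs.eta v t + cs.eta u (v * t * v⁻¹)) := by
    rw [map_mul, Equiv.Perm.mul_apply, cs.phi_apply v t 0,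
      cs.phi_apply u (v * t * v⁻¹) (0 + cs.eta v t)]
  have h2 : cs.phi (u * v) (t, 0) = ((u * v) * t * (u * v)⁻¹, 0 + cs.eta (u * v) t) :=
    cs.phi_apply _ _ _
  have h3 := congrArg Prod.snd (h2.symm.trans h1)
  simpa using h3

lemma eta_inv_conj (w t : W) : cs.eta w⁻¹ (w * t * w⁻¹) = cs.eta w t := by
  have h := cs.eta_mul w⁻¹ w t
  rw [inv_mul_cancel, cs.eta_one] at h
  exact zmod2_cancel _ _ h.symm

lemma eta_simple (i : B) (t : W) :
    cs.eta (cs.simple i) t = if t = cs.simple i then 1 else 0 := by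
  show (cs.phi (cs.simple i) (t, 0)).2 = _
  rw [cs.phi_simple, cs.mu_apply]
  exact zero_add _

lemma eta_count (ω : List B) (t : W) :
    cs.eta (cs.wordProd ω) t = ((cs.rightInvSeq ω).count t : ZMod 2) := by
  induction ω with
  | nil => simp [cs.eta_one]
  | cons i ω ih =>
    rw [wordProd_cons, cs.eta_mul (cs.simple i) (cs.wordProd ω) t, ih, cs.eta_simple]
    have hiff : (cs.wordProd ω * t * (cs.wordProd ω)⁻¹ = cs.simple i)
        ↔ (t = (cs.wordProd ω)⁻¹ * cs.simple i * cs.wordProd ω) := by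
      constructor
      · intro h; rw [← h]; group
      · intro h; rw [h]; group
    rw [rightInvSeq, List.count_cons, Nat.cast_add,
      apply_ite (fun n : ℕ => (n : ZMod 2))]
    simp only [Nat.cast_one, Nat.cast_zero, beq_iff_eq, hiff]
    congr 1
    exact if_congr eq_comm rfl rfl

lemma isRightInversion_of_eta (w t : W) (h : cs.eta w t = 1) :
    cs.IsRightInversion w t := by
  obtain ⟨ω, hred, hw⟩ := cs.exists_reduced_word' w
  subst hw
  rw [cs.eta_count] at h
  have hmem : t ∈ cs.rightInvSeq ω := by
    by_contra hmem
    rw [List.count_eq_zero.mpr hmem] at h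
    simp at h
  exact cs.isRightInversion_of_mem_rightInvSeq hred hmem

lemma eta_refl_self (t : W) (ht : cs.IsReflection t) : cs.eta t t = 1 := by
  obtain ⟨v, i, rfl⟩ := ht
  have h1 : v * cs.simple i * v⁻¹ = v * (cs.simple i * v⁻¹) := by group
  rw [h1, cs.eta_mul v (cs.simple i * v⁻¹)]
  have h2 : (cs.simple i * v⁻¹) * (v * (cs.simple i * v⁻¹)) * (cs.simple i * v⁻¹)⁻¹
      = cs.simple i := by group
  rw [h2]
  rw [cs.eta_mul (cs.simple i) v⁻¹]
  have h4 : v⁻¹ * (v * (cs.simple i * v⁻¹)) * v⁻¹⁻¹ = cs.simple i := by group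
  rw [h4, cs.eta_simple, if_pos rfl]
  have h5 : cs.eta v⁻¹ (v * (cs.simple i * v⁻¹)) = cs.eta v (cs.simple i) := by
    rw [← mul_assoc]
    exact cs.eta_inv_conj v (cs.simple i)
  rw [h5]
  exact zmod2_aba _

lemma eta_of_isRightInversion {w t : W} (h : cs.IsRightInversion w t) : cs.eta w t = 1 := by
  rcases zmod2_cases (cs.eta w t) with h0 | h0
  · exfalso
    have hw : w = (w * t) * t := by rw [mul_assoc, h.1.mul_self, mul_one]
    have h1 : cs.eta ((w * t) * t) t = cs.eta t t + cs.eta (w * t) (t * t * t⁻¹) :=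
      cs.eta_mul _ _ _
    rw [← hw, h0, cs.eta_refl_self t h.1] at h1
    have h2 : t * t * t⁻¹ = t := by rw [h.1.mul_self, one_mul, h.1.inv]
    rw [h2] at h1
    have h3 : cs.eta (w * t) t = 1 := zmod2_of_one_add _ h1
    have h4 := (cs.isRightInversion_of_eta (w * t) t h3).2
    rw [← hw] at h4
    exact lt_asymm h.2 h4
  · exact h0

lemma exists_conj_simple_of_mem_ris (ω : List B) (t : W) (ht : t ∈ cs.rightInvSeq ω) :
    ∃ i ∈ ω, ∃ q : W, t = q * cs.simple i * q⁻¹ := by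
  induction ω with
  | nil => simp [rightInvSeq] at ht
  | cons j ω ih =>
    rw [rightInvSeq] at ht
    rcases List.mem_cons.mp ht with h | h
    · refine ⟨j, List.mem_cons_self, (cs.wordProd ω)⁻¹, ?_⟩
      rw [h, inv_inv]
    · obtain ⟨i, hi, q, hq⟩ := ih h
      exact ⟨i, List.mem_cons_of_mem _ hi, q, hq⟩

lemma exists_mem_ris_conj (ω : List B) (i : B) (hi : i ∈ ω) :
    ∃ q : W, q * cs.simple i * q⁻¹ ∈ cs.rightInvSeq ω := by
  induction ω with
  | nil => simp at hi
  | cons j ω ih =>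
    rcases List.mem_cons.mp hi with h | h
    · subst h
      refine ⟨(cs.wordProd ω)⁻¹, ?_⟩
      rw [rightInvSeq, inv_inv]
      exact List.mem_cons_self
    · obtain ⟨q, hq⟩ := ih h
      refine ⟨q, ?_⟩
      rw [rightInvSeq]
      exact List.mem_cons_of_mem _ hq

lemma central_eta_conj {w : W} (hw : w ∈ Subgroup.center W) (q t : W) :
    cs.eta w (q * t * q⁻¹) = cs.eta w t := by
  have hcomm : ∀ g : W, g * w = w * g := fun g => Subgroup.mem_center_iff.mp hw g
  have hwt : w * t * w⁻¹ = t := by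
    rw [mul_inv_eq_iff_eq_mul, ← hcomm t]
  have h1 : cs.eta (q * w) t = cs.eta w t + cs.eta q t := by
    rw [cs.eta_mul q w t, hwt]
  have h2 : cs.eta (w * q) t = cs.eta q t + cs.eta w (q * t * q⁻¹) := cs.eta_mul w q t
  rw [hcomm q] at h1
  have h3 := h1.symm.trans h2
  rw [add_comm (cs.eta q t) (cs.eta w (q * t * q⁻¹))] at h3
  exact (add_right_cancel h3).symm

lemma length_le_of_inversions (v w : W)
    (h : ∀ t : W, cs.IsRightInversion v t → cs.IsRightInversion w t) :
    cs.length v ≤ cs.length w := by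
  obtain ⟨σ, hσ, hv⟩ := cs.exists_reduced_word' v
  obtain ⟨ω, hω, hwq⟩ := cs.exists_reduced_word' w
  have hsub : (cs.rightInvSeq σ).toFinset ⊆ (cs.rightInvSeq ω).toFinset := by
    intro t htm
    rw [List.mem_toFinset] at htm ⊢
    have h1 : cs.IsRightInversion v t := hv ▸ cs.isRightInversion_of_mem_rightInvSeq hσ htm
    have h3 : cs.eta w t = 1 := cs.eta_of_isRightInversion (h t h1)
    rw [hwq, cs.eta_count] at h3
    by_contra hmem
    rw [List.count_eq_zero.mpr hmem] at h3
    simp at h3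
  have hcard := Finset.card_le_card hsub
  rw [List.toFinset_card_of_nodup hσ.nodup_rightInvSeq] at hcard
  calc cs.length v = σ.length := by rw [hv]; exact hσ
    _ = (cs.rightInvSeq σ).length := (cs.length_rightInvSeq σ).symm
    _ ≤ (cs.rightInvSeq ω).toFinset.card := hcard
    _ ≤ (cs.rightInvSeq ω).length := (cs.rightInvSeq ω).toFinset_card_le
    _ = ω.length := cs.length_rightInvSeq ω
    _ = cs.length w := by rw [hwq]; exact hω.symm

end CoxeterSystem

/-- **Theorem (Hosaka).** Let `(W, S)` be a Coxeter system with `S` finite. For a spherical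
subset `T` of `S` (i.e. the parabolic subgroup `W_T` generated by `T` is finite), let `w_T`
denote the element of longest length in the finite parabolic subgroup `W_T`. Then
`Z(W) ⊆ { w_T : T is a spherical subset of S }`. -/
theorem center_coxeter_subset_longest_elements {B : Type*} [Finite B] {W : Type*} [Group W]
    (M : CoxeterMatrix B) (cs : CoxeterSystem M W) :
    (Subgroup.center W : Set W) ⊆
      { w : W | ∃ T : Set B,
          Finite (Subgroup.closure (cs.simple '' T)) ∧
          w ∈ Subgroup.closure (cs.simple '' T) ∧
          ∀ v ∈ Subgroup.closure (cs.simple '' T), cs.length v ≤ cs.length w } := by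
  intro w hw
  obtain ⟨ω, hred, hwp⟩ := cs.exists_reduced_word' w
  set T : Set B := {i | i ∈ ω} with hT
  have hmem : w ∈ Subgroup.closure (cs.simple '' T) := by
    rw [hwp]
    show (List.map cs.simple ω).prod ∈ _
    refine Subgroup.list_prod_mem _ ?_
    intro x hx
    rw [List.mem_map] at hx
    obtain ⟨i, hi, rfl⟩ := hx
    exact Subgroup.subset_closure ⟨i, hi, rfl⟩
  have hdesc : ∀ i ∈ ω, cs.eta w (cs.simple i) = 1 := by
    intro i hi
    obtain ⟨q, hq⟩ := cs.exists_mem_ris_conj ω i hi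
    have hinv : cs.IsRightInversion (cs.wordProd ω) (q * cs.simple i * q⁻¹) :=
      cs.isRightInversion_of_mem_rightInvSeq hred hq
    have h1 : cs.eta w (q * cs.simple i * q⁻¹) = 1 := by
      rw [hwp]; exact cs.eta_of_isRightInversion hinv
    rw [cs.central_eta_conj hw q (cs.simple i)] at h1
    exact h1
  have hmax : ∀ v ∈ Subgroup.closure (cs.simple '' T), cs.length v ≤ cs.length w := by
    intro v hv
    have hword : ∃ σ : List B, (∀ i ∈ σ, i ∈ ω) ∧ v = cs.wordProd σ := by
      refine Subgroup.closure_induction ?_ ?_ ?_ ?_ hv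
      · rintro x ⟨i, hi, rfl⟩
        refine ⟨[i], ?_, by rw [cs.wordProd_singleton]⟩
        intro j hj
        rw [List.mem_singleton.mp hj]
        exact hi
      · exact ⟨[], by simp, by simp⟩
      · rintro x y _ _ ⟨σ₁, h1, rfl⟩ ⟨σ₂, h2, rfl⟩
        refine ⟨σ₁ ++ σ₂, ?_, by rw [cs.wordProd_append]⟩
        intro j hj
        rcases List.mem_append.mp hj with h | h
        exacts [h1 j h, h2 j h]
      · rintro x _ ⟨σ, h1, rfl⟩
        exact ⟨σ.reverse, fun j hj => h1 j (List.mem_reverse.mp hj),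
          by rw [cs.wordProd_reverse]⟩
    obtain ⟨σ, hσT, hvσ⟩ := hword
    apply cs.length_le_of_inversions
    intro t htv
    have h1 : cs.eta v t = 1 := cs.eta_of_isRightInversion htv
    rw [hvσ, cs.eta_count] at h1
    have hmm : t ∈ cs.rightInvSeq σ := by
      by_contra hm
      rw [List.count_eq_zero.mpr hm] at h1
      simp at h1
    obtain ⟨i, hiσ, q, rfl⟩ := cs.exists_conj_simple_of_mem_ris σ t hmm
    have h2 : cs.eta w (q * cs.simple i * q⁻¹) = 1 := by
      rw [cs.central_eta_conj hw]
      exact hdesc i (hσT i hiσ)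
    exact cs.isRightInversion_of_eta w _ h2
  have hfin : (Subgroup.closure (cs.simple '' T) : Set W).Finite := by
    have hsub : (Subgroup.closure (cs.simple '' T) : Set W)
        ⊆ cs.wordProd '' {σ : List B | σ.length ≤ cs.length w} := by
      intro v hv
      obtain ⟨σ, hσred, hvσ⟩ := cs.exists_reduced_word' v
      refine ⟨σ, ?_, hvσ.symm⟩
      show σ.length ≤ cs.length w
      calc σ.length = cs.length (cs.wordProd σ) := hσred.symm
        _ = cs.length v := by rw [← hvσ]
        _ ≤ cs.length w := hmax v hv
    exact ((List.finite_length_le B (cs.length w)).image cs.wordProd).subset hsub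
  exact ⟨T, hfin.to_subtype, hmem, hmax⟩
end

section
/- Let (W,S) be a Coxeter system with S finite and let W_{S̃} denote its essential parabolic subgroup. Then Z(W) = Z(W_{S\S̃}), i.e. the center of W equals the center of the finite parabolic subgroup W_{S\S̃} generated by the complement of S̃. -/
/-- The irreducible component of the Coxeter generator indexed by `i`: the set of indices
joined to `i` by a path in the Coxeter diagram (whose edges join `a ≠ b` with `M a b ≠ 2`).
These are exactly the pieces `S_1, …, S_r` of the unique partition of `S` such that `W` is
the internal direct product of the `W_{S_i}` with each `(W_{S_i}, S_i)` irreducible. -/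
def CoxeterMatrix.component {B : Type*} (M : CoxeterMatrix B) (i : B) : Set B :=
  { j | Relation.ReflTransGen (fun a b => a ≠ b ∧ M a b ≠ 2) i j }

/-- The essential subset `S̃` of `S`: the union of the irreducible components `S_i`
whose parabolic subgroups `W_{S_i}` are infinite.  The parabolic subgroup `W_{S̃}` is the
essential parabolic subgroup of the Coxeter system. -/
def CoxeterSystem.essentialSubset {B : Type*} {W : Type*} [Group W] {M : CoxeterMatrix B}
    (cs : CoxeterSystem M W) : Set B :=
  { i | Infinite (Subgroup.closure (cs.simple '' M.component i)) }



namespace HosakaAux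

open CoxeterSystem Real

variable {B : Type*} (M : CoxeterMatrix B)

/-- basis vector of the geometric representation -/
noncomputable def ev (a : B) : (B →₀ ℝ) := Finsupp.single a 1

/-- the symmetric "cosine" matrix -/
noncomputable def kap (a b : B) : ℝ :=
  if M a b = 0 then 2 else 2 * Real.cos (Real.pi / M a b)

theorem kap_symm (a b : B) : kap M a b = kap M b a := by
  unfold kap; rw [M.symmetric a b]

theorem kap_diag (a : B) : kap M a a = -2 := by
  unfold kap
  rw [M.diagonal a]
  norm_num

/-- the reflection in the geometric representation -/
noncomputable def grefl (a : B) : Module.End ℝ (B →₀ ℝ) :=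
  LinearMap.id +
    (LinearMap.toSpanSingleton ℝ _ (ev a)).comp
      (Finsupp.linearCombination ℝ (fun b => kap M a b))

theorem grefl_apply_ev (a b : B) :
    grefl M a (ev b) = ev b + kap M a b • ev a := by
  unfold grefl ev
  simp [Finsupp.linearCombination_single]

theorem grefl_apply_ev_self (a : B) :
    grefl M a (ev a) = -(ev a) := by
  rw [grefl_apply_ev, kap_diag]
  module

theorem grefl_invol (a : B) (v : B →₀ ℝ) : grefl M a (grefl M a v) = v := by
  induction v using Finsupp.induction_linear with
  | zero => simp
  | add f g hf hg => rw [map_add, map_add, hf, hg]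
  | single x c =>
    have hs : (Finsupp.single x c : B →₀ ℝ) = c • ev x := by
      simp [ev, Finsupp.smul_single]
    rw [hs, map_smul, map_smul, grefl_apply_ev, map_add, map_smul,
      grefl_apply_ev, grefl_apply_ev_self]
    module

theorem powfix {R V : Type*} [CommRing R] [AddCommGroup V] [Module R V]
    (h : Module.End R V) (v : V) (hv : h v = v) : ∀ n : ℕ, (h^n) v = v := by
  intro n
  induction n with
  | zero => simp
  | succ n ih => rw [pow_succ, Module.End.mul_apply, hv, ih]

theorem pair_pow (a b : B) (hab : a ≠ b) (hm0 : M a b ≠ 0) :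
    (grefl M a * grefl M b) ^ M a b = 1 := by
  set m := M a b with hmdef
  have hm1 : m ≠ 1 := M.off_diagonal a b hab
  have hm2 : 2 ≤ m := by omega
  set γ : ℝ := kap M a b with hγdef
  set θ : ℝ := Real.pi / m with hθdef
  have hmR : (0:ℝ) < m := by positivity
  have h2m : (2:ℝ) ≤ m := by exact_mod_cast hm2
  have hθpos : 0 < θ := by rw [hθdef]; positivity
  have hθlt : θ < Real.pi := by
    rw [hθdef, div_lt_iff₀ hmR]
    nlinarith [Real.pi_pos]
  have hsθ : 0 < Real.sin θ := Real.sin_pos_of_pos_of_lt_pi hθpos hθlt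
  have hγ : γ = 2 * Real.cos θ := by
    rw [hγdef, kap, if_neg hm0, hθdef]
  have hγlt : γ * γ < 4 := by
    rw [hγ]
    nlinarith [mul_pos hsθ hsθ, Real.sin_sq_add_cos_sq θ]
  set D : ℤ → ℝ := fun k => Real.sin (k * θ) with hDdef
  have hD1 : D 1 = Real.sin θ := by show Real.sin _ = _; push_cast; rw [one_mul]
  have hD0 : D 0 = 0 := by show Real.sin _ = _; push_cast; simp
  have hDneg : D (-1) = - Real.sin θ := by
    show Real.sin _ = _; push_cast; rw [neg_one_mul, Real.sin_neg]
  have key : ∀ x : ℤ, γ * D x = D (x+1) + D (x-1) := by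
    intro x
    show γ * Real.sin _ = Real.sin _ + Real.sin _
    rw [hγ]
    push_cast
    rw [add_mul, one_mul, sub_mul, one_mul, Real.sin_add, Real.sin_sub]
    ring
  set g : Module.End ℝ (B →₀ ℝ) := grefl M a * grefl M b with hgdef
  have gA : g (ev a) = (γ*γ-1) • ev a + γ • ev b := by
    rw [hgdef, Module.End.mul_apply, grefl_apply_ev, kap_symm M b a, ← hγdef,
      map_add, map_smul, grefl_apply_ev_self, grefl_apply_ev, ← hγdef]
    module
  have gB : g (ev b) = (-γ) • ev a + (-1 : ℝ) • ev b := by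
    rw [hgdef, Module.End.mul_apply, grefl_apply_ev_self, map_neg, grefl_apply_ev, ← hγdef]
    module
  have step : ∀ (x y : ℝ), g (x • ev a + y • ev b)
      = ((γ*γ-1)*x - γ*y) • ev a + (γ*x - y) • ev b := by
    intro x y
    rw [map_add, map_smul, map_smul, gA, gB]
    module
  have rec1 : ∀ x : ℤ, γ * D (x+1) - D x = D (x+2) := by
    intro x
    have h := key (x+1)
    rw [show (x+1+1 : ℤ) = x+2 by ring, show (x+1-1 : ℤ) = x by ring] at h
    linarith
  have rec2 : ∀ x : ℤ, (γ*γ-1) * D (x+1) - γ * D x = D (x+3) := by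
    intro x
    have h1 := key (x+1)
    have h2 := key (x+2)
    rw [show (x+1+1 : ℤ) = x+2 by ring, show (x+1-1 : ℤ) = x by ring] at h1
    rw [show (x+2+1 : ℤ) = x+3 by ring, show (x+2-1 : ℤ) = x+1 by ring] at h2
    linear_combination γ * h1 + h2
  have plane : ∀ n : ℕ,
      (g^n) (Real.sin θ • ev a) = D (2*n+1) • ev a + D (2*n) • ev b ∧
      (g^n) (Real.sin θ • ev b) = (-(D (2*n))) • ev a + (-(D (2*n-1))) • ev b := by
    intro n
    induction n with
    | zero =>
      constructor
      · simp only [pow_zero, Module.End.one_apply, Nat.cast_zero]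
        rw [show (2*(0:ℤ)+1) = 1 by ring, show (2*(0:ℤ)) = 0 by ring, hD1, hD0]
        module
      · simp only [pow_zero, Module.End.one_apply, Nat.cast_zero]
        rw [show (2*(0:ℤ)-1) = -1 by ring, show (2*(0:ℤ)) = 0 by ring, hD0, hDneg]
        module
    | succ n ih =>
      obtain ⟨ihA, ihB⟩ := ih
      constructor
      · rw [pow_succ', Module.End.mul_apply, ihA, step]
        rw [rec2 (2*n), rec1 (2*n)]
        push_cast
        rw [show (2*((n:ℤ)+1)+1) = 2*n+3 by ring, show (2*((n:ℤ)+1)) = 2*n+2 by ring]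
      · rw [pow_succ', Module.End.mul_apply, ihB, step]
        have c1 : (γ*γ-1) * (-(D (2*n))) - γ * (-(D (2*n-1))) = -(D (2*n+2)) := by
          have h := rec2 (2*n-1)
          rw [show (2*(n:ℤ)-1+1) = 2*n by ring, show (2*(n:ℤ)-1+3) = 2*n+2 by ring] at h
          linarith
        have c2 : γ * (-(D (2*n))) - (-(D (2*n-1))) = -(D (2*n+1)) := by
          have h := rec1 (2*n-1)
          rw [show (2*(n:ℤ)-1+1) = 2*n by ring, show (2*(n:ℤ)-1+2) = 2*n+1 by ring] at h
          linarith
        rw [c1, c2]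
        push_cast
        rw [show (2*((n:ℤ)+1)-1) = 2*n+1 by ring, show (2*((n:ℤ)+1)) = 2*n+2 by ring]
  have h2pi : (2:ℝ) * m * θ = 2 * Real.pi := by
    rw [hθdef]; field_simp
  have hDm1 : D (2*m+1) = Real.sin θ := by
    show Real.sin _ = _
    push_cast
    rw [add_mul, one_mul, h2pi, Real.sin_add]
    simp
  have hDm0 : D (2*m) = 0 := by
    show Real.sin _ = _
    push_cast
    rw [h2pi]
    simp
  have hDmm : D (2*m-1) = - Real.sin θ := by
    show Real.sin _ = _
    push_cast
    rw [sub_mul, one_mul, h2pi, Real.sin_sub]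
    simp
  have hsne : Real.sin θ ≠ 0 := ne_of_gt hsθ
  have gma : (g^m) (ev a) = ev a := by
    have h := (plane m).1
    rw [hDm1, hDm0] at h
    have h2 : (g^m) (Real.sin θ • ev a) = Real.sin θ • ev a := by rw [h]; module
    rw [map_smul] at h2
    exact smul_right_injective _ hsne h2
  have gmb : (g^m) (ev b) = ev b := by
    have h := (plane m).2
    rw [hDm0, hDmm] at h
    have h2 : (g^m) (Real.sin θ • ev b) = Real.sin θ • ev b := by rw [h]; module
    rw [map_smul] at h2
    exact smul_right_injective _ hsne h2
  have gmx : ∀ x : B, x ≠ a → x ≠ b → (g^m) (ev x) = ev x := by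
    intro x hxa hxb
    set la : ℝ := kap M a x with hla
    set lb : ℝ := kap M b x with hlb
    have gX : g (ev x) = ev x + (la + γ*lb) • ev a + lb • ev b := by
      rw [hgdef, Module.End.mul_apply, grefl_apply_ev, ← hlb, map_add, map_smul,
        grefl_apply_ev, ← hla, grefl_apply_ev, ← hγdef]
      module
    set δ : ℝ := 4 - γ*γ with hδdef
    have hδ : δ ≠ 0 := by rw [hδdef]; intro h; nlinarith
    set α : ℝ := (2*la + γ*lb)/δ with hα
    set β : ℝ := (γ*α + lb)/2 with hβ
    have hca : (la + γ*lb) + ((γ*γ-1)*α - γ*β) = α := by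
      have hδ' : 4 - γ^2 ≠ 0 := by rw [pow_two]; exact hδ
      rw [hβ, hα, hδdef]
      field_simp
      ring
    have hcb : lb + (γ*α - β) = β := by
      rw [hβ]; field_simp; ring
    have hfix : g (ev x + α • ev a + β • ev b) = ev x + α • ev a + β • ev b := by
      have expand : g (ev x + α • ev a + β • ev b)
          = ev x + ((la + γ*lb) + ((γ*γ-1)*α - γ*β)) • ev a + (lb + (γ*α - β)) • ev b := by
        rw [map_add, map_add, map_smul, map_smul, gX, gA, gB]
        module
      rw [expand, hca, hcb]
    have hfixpow := powfix g _ hfix m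
    have hz : (g^m) (α • ev a + β • ev b) = α • ev a + β • ev b := by
      rw [map_add, map_smul, map_smul, gma, gmb]
    rw [show ev x + α • ev a + β • ev b = ev x + (α • ev a + β • ev b) by module,
      map_add, hz] at hfixpow
    exact add_right_cancel hfixpow
  apply LinearMap.ext
  intro v
  rw [Module.End.one_apply]
  induction v using Finsupp.induction_linear with
  | zero => simp
  | add f h hf hh => rw [map_add, hf, hh]
  | single x c =>
    have hs : (Finsupp.single x c : B →₀ ℝ) = c • ev x := by
      simp [ev, Finsupp.smul_single]
    rw [hs, map_smul]
    rcases eq_or_ne x a with rfl | hxa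
    · rw [gma]
    rcases eq_or_ne x b with rfl | hxb
    · rw [gmb]
    · rw [gmx x hxa hxb]

theorem grefl_liftable : M.IsLiftable (grefl M) := by
  intro a b
  rcases eq_or_ne a b with rfl | hab
  · rw [M.diagonal a, pow_one]
    apply LinearMap.ext
    intro v
    rw [Module.End.mul_apply, grefl_invol, Module.End.one_apply]
  rcases eq_or_ne (M a b) 0 with h0 | h0
  · rw [h0, pow_zero]
  · exact pair_pow M a b hab h0

end HosakaAux

namespace HosakaAux

open CoxeterSystem

variable {B : Type*} (M : CoxeterMatrix B)

theorem grefl_mul_fst (a b : B) :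
    (grefl M a * grefl M b) (ev a) = (kap M a b * kap M a b - 1) • ev a + kap M a b • ev b := by
  rw [Module.End.mul_apply, grefl_apply_ev, kap_symm M b a, map_add, map_smul,
    grefl_apply_ev_self, grefl_apply_ev]
  module

theorem grefl_mul_snd (a b : B) :
    (grefl M a * grefl M b) (ev b) = (-(kap M a b)) • ev a + (-1 : ℝ) • ev b := by
  rw [Module.End.mul_apply, grefl_apply_ev_self, map_neg, grefl_apply_ev]
  module

theorem kap_pos {j k : B} (hjk : j ≠ k) (h2 : M j k ≠ 2) : 0 < kap M j k := by
  rcases eq_or_ne (M j k) 0 with h0 | h0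
  · rw [kap, if_pos h0]; norm_num
  · rw [kap, if_neg h0]
    have h1 : M j k ≠ 1 := M.off_diagonal j k hjk
    have h3 : 3 ≤ M j k := by omega
    have h3R : (3:ℝ) ≤ M j k := by exact_mod_cast h3
    have hpos : (0:ℝ) < M j k := by linarith
    have : Real.pi / M j k < Real.pi / 2 := by
      apply div_lt_div_of_pos_left Real.pi_pos (by norm_num)
      linarith
    have : 0 < Real.cos (Real.pi / M j k) := by
      apply Real.cos_pos_of_mem_Ioo
      constructor
      · have : 0 < Real.pi / M j k := by positivity
        linarith [Real.pi_pos]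
      · exact this
    linarith

variable {W : Type*} [Group W] {M}

theorem simple_mul_simple_sq_ne_one (cs : CoxeterSystem M W) {j k : B}
    (hjk : j ≠ k) (h2 : M j k ≠ 2) :
    cs.simple j * cs.simple k * (cs.simple j * cs.simple k) ≠ 1 := by
  set γ := kap M j k with hγdef
  have hγpos : 0 < γ := kap_pos M hjk h2
  intro h
  have hψ := congrArg (cs.lift ⟨grefl M, grefl_liftable M⟩) h
  simp only [map_mul, map_one, CoxeterSystem.lift_apply_simple] at hψ
  have hev : ((grefl M j * grefl M k) * (grefl M j * grefl M k)) (ev j) = ev j := by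
    rw [hψ, Module.End.one_apply]
  rw [Module.End.mul_apply, grefl_mul_fst, map_add, map_smul, map_smul,
    grefl_mul_fst, grefl_mul_snd, ← hγdef] at hev
  have comb : (γ*γ-1) • ((γ*γ-1) • ev j + γ • ev k) + γ • ((-γ) • (ev j : B →₀ ℝ) + (-1:ℝ) • ev k)
      = ((γ*γ-1)*(γ*γ-1) - γ*γ) • ev j + ((γ*γ-1)*γ - γ) • ev k := by module
  rw [comb] at hev
  have hevk := congrArg (fun v : B →₀ ℝ => v k) hev
  have hevj := congrArg (fun v : B →₀ ℝ => v j) hev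
  simp only [ev, Finsupp.add_apply, Finsupp.smul_apply, smul_eq_mul,
    Finsupp.single_eq_same, Finsupp.single_eq_of_ne hjk, Finsupp.single_eq_of_ne (Ne.symm hjk),
    mul_one, mul_zero, add_zero, zero_add] at hevk hevj
  -- hevk : (γ*γ-1)*γ - γ = 0 ; hevj : (γ*γ-1)*(γ*γ-1) - γ*γ = 1
  have hq : γ * γ = 2 := by
    have hfact : γ * (γ*γ - 2) = 0 := by linear_combination hevk
    rcases mul_eq_zero.mp hfact with h | h
    · exact absurd h (ne_of_gt hγpos)
    · linarith
  nlinarith [hevj, hq]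

end HosakaAux


namespace HosakaAux

open CoxeterSystem List

variable {B : Type*} {W : Type*} [Group W] [DecidableEq W] {M : CoxeterMatrix B}
  (cs : CoxeterSystem M W)

/-- The basic involution of `W × ℤˣ` attached to a simple reflection. -/
def sigv (i : B) : Equiv.Perm (W × ℤˣ) :=
  Function.Involutive.toPerm
    (fun p => (cs.simple i * p.1 * cs.simple i, if p.1 = cs.simple i then -p.2 else p.2))
    (by
      intro p
      have h1 : cs.simple i * (cs.simple i * p.1 * cs.simple i) * cs.simple i = p.1 := by
        simp [mul_assoc, cs.simple_mul_simple_cancel_left]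
      have h2 : (cs.simple i * p.1 * cs.simple i = cs.simple i) ↔ (p.1 = cs.simple i) := by
        constructor
        · intro h
          have := congrArg (fun x => cs.simple i * x * cs.simple i) h
          simpa [h1, mul_assoc, cs.simple_mul_simple_self] using this
        · intro h
          rw [h, cs.simple_mul_simple_self, one_mul]
      ext
      · exact h1
      · simp only [h2]
        rcases eq_or_ne p.1 (cs.simple i) with h | h
        · simp [h]
        · simp [h])

theorem sigv_apply (i : B) (w : W) (ε : ℤˣ) :
    sigv cs i (w, ε) = (cs.simple i * w * cs.simple i, if w = cs.simple i then -ε else ε) := rfl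

theorem rightInvSeq_cons (i : B) (ω : List B) :
    cs.rightInvSeq (i :: ω) = ((cs.wordProd ω)⁻¹ * cs.simple i * cs.wordProd ω) :: cs.rightInvSeq ω := by
  rfl

theorem sig_prod (ω : List B) (w : W) (ε : ℤˣ) :
    ((ω.map (sigv cs)).prod) (w, ε)
      = (cs.wordProd ω * w * (cs.wordProd ω)⁻¹,
          ε * (-1 : ℤˣ)^(List.count w (cs.rightInvSeq ω))) := by
  induction ω with
  | nil => simp
  | cons i ω ih =>
    rw [List.map_cons, List.prod_cons, Equiv.Perm.mul_apply, ih, sigv_apply,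
      rightInvSeq_cons, List.count_cons]
    have hfst : cs.simple i * (cs.wordProd ω * w * (cs.wordProd ω)⁻¹) * cs.simple i
        = cs.wordProd (i :: ω) * w * (cs.wordProd (i :: ω))⁻¹ := by
      rw [cs.wordProd_cons, mul_inv_rev, cs.inv_simple]
      group
    have hcond : (cs.wordProd ω * w * (cs.wordProd ω)⁻¹ = cs.simple i)
        ↔ ((cs.wordProd ω)⁻¹ * cs.simple i * cs.wordProd ω = w) := by
      constructor
      · intro h; rw [← h]; group
      · intro h; rw [← h]; group
    rw [Prod.mk.injEq]
    refine ⟨hfst, ?_⟩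
    simp only [beq_iff_eq]
    rcases eq_or_ne ((cs.wordProd ω)⁻¹ * cs.simple i * cs.wordProd ω) w with h | h
    · rw [if_pos (hcond.mpr h), if_pos h, pow_add, pow_one, mul_neg_one, mul_neg]
    · rw [if_neg (fun hh => h (hcond.mp hh)), if_neg h, add_zero]

end HosakaAux

namespace HosakaAux

open CoxeterSystem List

variable {B : Type*} {W : Type*} [Group W] [DecidableEq W] {M : CoxeterMatrix B}
  (cs : CoxeterSystem M W)

/-- products over even alternating words in any monoid -/
theorem prod_map_alternatingWord {G : Type*} [Monoid G] (f : B → G) (i i' : B) (m : ℕ) :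
    ((CoxeterSystem.alternatingWord i i' (2*m)).map f).prod = (f i * f i')^m := by
  induction m with
  | zero => simp [CoxeterSystem.alternatingWord]
  | succ m ih =>
    have h1 : 2*(m+1) = (2*m+1)+1 := by ring
    rw [h1, CoxeterSystem.alternatingWord_succ', CoxeterSystem.alternatingWord_succ',
      if_neg (by simp [parity_simps]), if_pos (by simp [parity_simps])]
    rw [List.map_cons, List.map_cons, List.prod_cons, List.prod_cons, ih, pow_succ']
    rw [mul_assoc]

theorem wordProd_alternatingWord_even (i i' : B) (m : ℕ) :
    cs.wordProd (CoxeterSystem.alternatingWord i i' (2*m)) = (cs.simple i * cs.simple i')^m := by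
  rw [CoxeterSystem.wordProd]
  exact prod_map_alternatingWord cs.simple i i' m

theorem shift_pow (a b : W) (e : ℕ) : (a * b)^e * a = a * (b * a)^e := by
  induction e with
  | zero => simp
  | succ e ih =>
    rw [pow_succ', mul_assoc, ih, pow_succ']
    simp [mul_assoc]

theorem wordProd_alternatingWord_odd (i i' : B) (e : ℕ) :
    cs.wordProd (CoxeterSystem.alternatingWord i i' (2*e+1))
      = cs.simple i' * (cs.simple i * cs.simple i')^e := by
  rw [cs.prod_alternatingWord_eq_mul_pow]
  rw [if_neg (by simp [parity_simps])]
  have h : (2*e+1)/2 = e := by omega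
  rw [h]

/-- The right inversion sequence of an alternating word. -/
theorem rightInvSeq_alternatingWord (i i' : B) (n : ℕ) :
    cs.rightInvSeq (CoxeterSystem.alternatingWord i i' n)
      = ((List.range n).reverse).map
          (fun e => cs.wordProd (CoxeterSystem.alternatingWord i i' (2*e+1))) := by
  induction n generalizing i i' with
  | zero => simp [CoxeterSystem.alternatingWord]
  | succ n ih =>
    rw [CoxeterSystem.alternatingWord_succ, cs.rightInvSeq_concat, ih, List.map_map]
    have hrange : (List.range (n+1)).reverse = ((List.range n).reverse.map Nat.succ) ++ [0] := by
      rw [List.range_succ_eq_map, List.reverse_cons, List.map_reverse]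
    rw [hrange, List.map_append, List.map_map, List.concat_eq_append]
    congr 1
    · apply List.map_congr_left
      intro e _
      show MulAut.conj (cs.simple i') (cs.wordProd (CoxeterSystem.alternatingWord i' i (2*e+1)))
        = cs.wordProd (CoxeterSystem.alternatingWord i i' (2*(Nat.succ e)+1))
      rw [MulAut.conj_apply, cs.inv_simple, wordProd_alternatingWord_odd,
        wordProd_alternatingWord_odd]
      have hsh := shift_pow (cs.simple i') (cs.simple i) e
      calc cs.simple i' * (cs.simple i * (cs.simple i' * cs.simple i)^e) * cs.simple i'
          = cs.simple i' * cs.simple i * ((cs.simple i' * cs.simple i)^e * cs.simple i') := by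
            simp [mul_assoc]
        _ = cs.simple i' * cs.simple i * (cs.simple i' * (cs.simple i * cs.simple i')^e) := by
            rw [hsh]
        _ = cs.simple i' * (cs.simple i * cs.simple i')^(Nat.succ e) := by
            rw [pow_succ']
            simp [mul_assoc]
    · show [cs.simple i'] = [cs.wordProd (CoxeterSystem.alternatingWord i i' (2*0+1))]
      rw [show 2*0+1 = 1 by ring,
        show CoxeterSystem.alternatingWord i i' 1 = [i'] from rfl, cs.wordProd_singleton]

end HosakaAux

namespace HosakaAux

open CoxeterSystem List

variable {B : Type*} {W : Type*} [Group W] [DecidableEq W] {M : CoxeterMatrix B}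
  (cs : CoxeterSystem M W)

theorem count_braid_even (i i' : B) (w : W) :
    Even (List.count w (cs.rightInvSeq (CoxeterSystem.alternatingWord i i' (2 * M i i')))) := by
  rw [rightInvSeq_alternatingWord, List.map_reverse, List.count_reverse]
  set m := M i i' with hm
  set f : ℕ → W := fun e => cs.wordProd (CoxeterSystem.alternatingWord i i' (2*e+1)) with hf
  have hper : ∀ e, f (m + e) = f e := by
    intro e
    rw [hf]
    simp only []
    rw [wordProd_alternatingWord_odd, wordProd_alternatingWord_odd, pow_add,
      cs.simple_mul_simple_pow, one_mul]
  rw [show 2*m = m + m by ring, List.range_add, List.map_append, List.count_append]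
  have : List.map f (List.map (fun x => m + x) (List.range m)) = List.map f (List.range m) := by
    rw [List.map_map]
    apply List.map_congr_left
    intro e _
    exact hper e
  rw [this]
  exact ⟨_, rfl⟩

theorem sigv_liftable : M.IsLiftable (sigv cs) := by
  intro i i'
  have hprod : (sigv cs i * sigv cs i') ^ M i i'
      = ((CoxeterSystem.alternatingWord i i' (2 * M i i')).map (sigv cs)).prod :=
    (prod_map_alternatingWord (sigv cs) i i' (M i i')).symm
  rw [hprod]
  apply Equiv.ext
  rintro ⟨w, ε⟩
  rw [sig_prod]
  have h1 : cs.wordProd (CoxeterSystem.alternatingWord i i' (2 * M i i')) = 1 := by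
    rw [wordProd_alternatingWord_even, cs.simple_mul_simple_pow]
  obtain ⟨c, hc⟩ := count_braid_even cs i i' w
  rw [h1, hc]
  have h2 : ((-1 : ℤˣ))^(c+c) = 1 := by
    rw [pow_add]
    exact Int.units_mul_self _
  rw [h2]
  simp

/-- The sign homomorphism into permutations of `W × ℤˣ`. -/
noncomputable def sgnHom : W →* Equiv.Perm (W × ℤˣ) := cs.lift ⟨sigv cs, sigv_liftable cs⟩

/-- `sgn cs w t = -1` iff `t` is a "right inversion" of `w`, suitably interpreted. -/
noncomputable def sgn (w t : W) : ℤˣ := ((sgnHom cs w) (t, 1)).2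

theorem sgnHom_wordProd (ω : List B) :
    sgnHom cs (cs.wordProd ω) = ((ω.map (sigv cs)).prod) := by
  rw [CoxeterSystem.wordProd,
    show sgnHom cs ((List.map cs.simple ω).prod) = ((List.map cs.simple ω).map (sgnHom cs)).prod
      from MonoidHom.map_list_prod _ _, List.map_map]
  congr 1
  apply List.map_congr_left
  intro e _
  show (cs.lift ⟨sigv cs, sigv_liftable cs⟩) (cs.simple e) = sigv cs e
  exact cs.lift_apply_simple (sigv_liftable cs) e

theorem sgn_eq_count {w : W} {ω : List B} (hω : cs.wordProd ω = w) (t : W) :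
    sgn cs w t = (-1 : ℤˣ)^(List.count t (cs.rightInvSeq ω)) := by
  rw [sgn, ← hω, sgnHom_wordProd, sig_prod]
  simp

theorem sgnHom_apply (w t : W) (ε : ℤˣ) :
    (sgnHom cs w) (t, ε) = (w * t * w⁻¹, ε * sgn cs w t) := by
  obtain ⟨ω, hω⟩ := cs.wordProd_surjective w
  rw [← hω, sgnHom_wordProd, sig_prod, sgn, sgnHom_wordProd, sig_prod]
  simp

theorem sgn_one (t : W) : sgn cs 1 t = 1 := by
  have : cs.wordProd [] = 1 := cs.wordProd_nil
  rw [sgn_eq_count cs this]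
  simp

theorem sgn_cocycle (a b t : W) : sgn cs (a * b) t = sgn cs b t * sgn cs a (b * t * b⁻¹) := by
  have h : (sgnHom cs (a*b)) (t, 1) = (sgnHom cs a) ((sgnHom cs b) (t, 1)) := by
    rw [map_mul]
    rfl
  rw [sgnHom_apply, sgnHom_apply, sgnHom_apply] at h
  have := congrArg Prod.snd h
  simp only at this
  rw [sgn, sgnHom_apply]
  simp only [one_mul] at this ⊢
  rw [this]

theorem sgn_neg_mem {w t : W} (h : sgn cs w t = -1) {ω : List B} (hω : cs.wordProd ω = w) :
    t ∈ cs.rightInvSeq ω := by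
  rw [sgn_eq_count cs hω] at h
  rcases Nat.even_or_odd (List.count t (cs.rightInvSeq ω)) with he | ho
  · rw [he.neg_one_pow] at h
    exact absurd h (by decide)
  · have : 0 < List.count t (cs.rightInvSeq ω) := by
      rcases ho with ⟨c, hc⟩; omega
    exact List.count_pos_iff.mp this

theorem sgn_neg_of_mem_reduced {ω : List B} (hred : cs.IsReduced ω) {t : W}
    (ht : t ∈ cs.rightInvSeq ω) : sgn cs (cs.wordProd ω) t = -1 := by
  rw [sgn_eq_count cs rfl]
  have h1 : List.count t (cs.rightInvSeq ω) = 1 :=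
    List.count_eq_one_of_mem hred.nodup_rightInvSeq ht
  rw [h1, pow_one]

/-- sign `-1` implies length goes down, for any `t`. -/
theorem length_lt_of_sgn_neg {w t : W} (h : sgn cs w t = -1) :
    cs.length (w * t) < cs.length w := by
  obtain ⟨ω, hlen, hω⟩ := cs.exists_reduced_word w
  have hred : cs.IsReduced ω := by exact hlen
  have := cs.isRightInversion_of_mem_rightInvSeq hred (sgn_neg_mem cs h hω.symm)
  rw [hω]
  exact this.2

theorem sgn_simple_neg_iff (w : W) (k : B) :
    sgn cs w (cs.simple k) = -1 ↔ cs.IsRightDescent w k := by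
  constructor
  · intro h
    exact length_lt_of_sgn_neg cs h
  · intro h
    have hw : w = (w * cs.simple k) * cs.simple k := by
      rw [mul_assoc, cs.simple_mul_simple_self, mul_one]
    have hsk : sgn cs (cs.simple k) (cs.simple k) = -1 := by
      have hone : cs.wordProd [k] = cs.simple k := cs.wordProd_singleton k
      rw [sgn_eq_count cs hone]
      have : cs.rightInvSeq [k] = [cs.simple k] := by
        rw [rightInvSeq_cons]
        simp
      rw [this]
      simp
    have hconj : cs.simple k * cs.simple k * (cs.simple k)⁻¹ = cs.simple k := by
      rw [cs.simple_mul_simple_self, one_mul, cs.inv_simple]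
    have hc := sgn_cocycle cs (w * cs.simple k) (cs.simple k) (cs.simple k)
    rw [← hw, hconj, hsk] at hc
    have h2 : sgn cs (w * cs.simple k) (cs.simple k) = 1 := by
      by_contra hne
      have : sgn cs (w * cs.simple k) (cs.simple k) = -1 := by
        rcases Int.units_eq_one_or (sgn cs (w * cs.simple k) (cs.simple k)) with h' | h'
        · exact absurd h' hne
        · exact h'
      have hlt := length_lt_of_sgn_neg cs this
      rw [mul_assoc, cs.simple_mul_simple_self, mul_one] at hlt
      exact Nat.lt_asymm h hlt
    rw [h2] at hc
    rw [hc]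
    simp

theorem sgn_conj_of_commute {w d : W} {m : B} (h1 : w * d = d * w)
    (h2 : w * cs.simple m = cs.simple m * w) :
    sgn cs w (d⁻¹ * cs.simple m * d) = sgn cs w (cs.simple m) := by
  set t := d⁻¹ * cs.simple m * d with ht
  have hw : w = (d⁻¹ * w) * d := by
    rw [mul_assoc, h1, ← mul_assoc, inv_mul_cancel, one_mul]
  have hdtd : d * t * d⁻¹ = cs.simple m := by
    rw [ht]; group
  have hwsw : w * cs.simple m * w⁻¹ = cs.simple m := by
    rw [h2, mul_assoc, mul_inv_cancel, mul_one]
  have c1 : sgn cs w t = sgn cs d t * sgn cs (d⁻¹ * w) (cs.simple m) := by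
    conv_lhs => rw [hw]
    rw [sgn_cocycle, hdtd]
  have c2 : sgn cs (d⁻¹ * w) (cs.simple m)
      = sgn cs w (cs.simple m) * sgn cs d⁻¹ (cs.simple m) := by
    rw [sgn_cocycle, hwsw]
  have c3 : sgn cs d t * sgn cs d⁻¹ (cs.simple m) = 1 := by
    have h := sgn_cocycle cs d⁻¹ d t
    rw [inv_mul_cancel, sgn_one, hdtd] at h
    exact h.symm
  rw [c1, c2, ← mul_assoc, mul_comm (sgn cs d t), mul_assoc, c3, mul_one]

end HosakaAux


namespace HosakaAux

open CoxeterSystem List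

variable {B : Type*} {W : Type*} [Group W] [DecidableEq W] {M : CoxeterMatrix B}
  (cs : CoxeterSystem M W)

theorem wordProd_mem_closure {T : Set B} {ω : List B} (h : ∀ i ∈ ω, i ∈ T) :
    cs.wordProd ω ∈ Subgroup.closure (cs.simple '' T) := by
  induction ω with
  | nil => rw [cs.wordProd_nil]; exact Subgroup.one_mem _
  | cons i ω ih =>
    rw [cs.wordProd_cons]
    exact Subgroup.mul_mem _
      (Subgroup.subset_closure ⟨i, h i (by simp), rfl⟩)
      (ih (fun x hx => h x (by simp [hx])))

theorem exists_word_of_mem_closure {T : Set B} {w : W}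
    (hw : w ∈ Subgroup.closure (cs.simple '' T)) :
    ∃ ω : List B, (∀ i ∈ ω, i ∈ T) ∧ cs.wordProd ω = w := by
  induction hw using Subgroup.closure_induction with
  | mem x hx =>
    obtain ⟨i, hi, rfl⟩ := hx
    exact ⟨[i], by simpa using hi, cs.wordProd_singleton i⟩
  | one => exact ⟨[], by simp, cs.wordProd_nil⟩
  | mul x y _ _ ihx ihy =>
    obtain ⟨ω1, h1, rfl⟩ := ihx
    obtain ⟨ω2, h2, rfl⟩ := ihy
    exact ⟨ω1 ++ ω2, by
      intro i hi
      rcases List.mem_append.mp hi with h | h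
      exacts [h1 i h, h2 i h], cs.wordProd_append ω1 ω2⟩
  | inv x _ ihx =>
    obtain ⟨ω, h, rfl⟩ := ihx
    exact ⟨ω.reverse, fun i hi => h i (List.mem_reverse.mp hi), cs.wordProd_reverse ω⟩

theorem isReduced_nil : cs.IsReduced ([] : List B) := by
  rw [CoxeterSystem.IsReduced, cs.wordProd_nil]
  simp

/-- deletion: any word can be replaced by a reduced word with letters among the original ones. -/
theorem exists_reduced_word_subset (n : ℕ) (ω : List B) (hn : ω.length ≤ n) :
    ∃ ω' : List B, (∀ i ∈ ω', i ∈ ω) ∧ cs.IsReduced ω' ∧ cs.wordProd ω' = cs.wordProd ω := by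
  classical
  induction n generalizing ω with
  | zero =>
    have : ω = [] := List.length_eq_zero_iff.mp (Nat.le_zero.mp hn)
    subst this
    exact ⟨[], by simp, isReduced_nil cs, rfl⟩
  | succ n ih =>
    by_cases hred : cs.IsReduced ω
    · exact ⟨ω, fun _ h => h, hred, rfl⟩
    -- find minimal non-reduced prefix
    have hex : ∃ j, ¬ cs.IsReduced (ω.take j) := by
      refine ⟨ω.length, ?_⟩
      rwa [List.take_length]
    have hspec : ¬ cs.IsReduced (ω.take (Nat.find hex)) := Nat.find_spec hex
    have hj0ne : Nat.find hex ≠ 0 := by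
      intro h
      rw [h] at hspec
      exact hspec (by simpa using isReduced_nil cs)
    obtain ⟨k, hk1⟩ : ∃ k, Nat.find hex = k + 1 := ⟨Nat.find hex - 1, by omega⟩
    rw [hk1] at hspec
    have hk : cs.IsReduced (ω.take k) := by
      by_contra h
      have hle : Nat.find hex ≤ k := Nat.find_le h
      omega
    have hklen : k < ω.length := by
      by_contra h
      push_neg at h
      rw [List.take_of_length_le h] at hk
      exact hred hk
    have htake : ω.take (k+1) = ω.take k ++ [ω[k]] := by
      rw [List.take_succ, List.getElem?_eq_getElem hklen]
      rfl
    have hulen : cs.length (cs.wordProd (ω.take k)) = k := by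
      have := hk
      rw [CoxeterSystem.IsReduced] at this
      rw [this, List.length_take]
      omega
    have hlt : cs.length (cs.wordProd (ω.take k) * cs.simple ω[k])
        < cs.length (cs.wordProd (ω.take k)) := by
      rcases cs.length_mul_simple (cs.wordProd (ω.take k)) ω[k] with h | h
      · exfalso
        apply hspec
        rw [CoxeterSystem.IsReduced, htake, cs.wordProd_append, cs.wordProd_singleton, h,
          hulen, List.length_append, List.length_take]
        simp
        omega
      · omega
    have hsgn : sgn cs (cs.wordProd (ω.take k)) (cs.simple ω[k]) = -1 :=
      (sgn_simple_neg_iff cs _ _).mpr hlt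
    have hmem : cs.simple ω[k] ∈ cs.rightInvSeq (ω.take k) :=
      sgn_neg_mem cs hsgn rfl
    obtain ⟨idx, hidx, hgetEq⟩ := List.getElem_of_mem hmem
    have hgetD : (cs.rightInvSeq (ω.take k)).getD idx 1 = cs.simple ω[k] := by
      rw [List.getD_eq_getElem _ _ hidx, hgetEq]
    have herase : cs.wordProd (ω.take k) * cs.simple ω[k]
        = cs.wordProd ((ω.take k).eraseIdx idx) := by
      rw [← hgetD]
      exact cs.wordProd_mul_getD_rightInvSeq _ _
    have hidx' : idx < (ω.take k).length := by
      have := hidx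
      rwa [CoxeterSystem.length_rightInvSeq] at this
    set ωnew := (ω.take k).eraseIdx idx ++ ω.drop (k+1) with hωnew
    have hprod : cs.wordProd ωnew = cs.wordProd ω := by
      rw [hωnew, cs.wordProd_append, ← herase]
      conv_rhs => rw [← List.take_append_drop (k+1) ω]
      rw [cs.wordProd_append, htake, cs.wordProd_append, cs.wordProd_singleton, mul_assoc]
    have hlen : ωnew.length ≤ n := by
      rw [hωnew, List.length_append, List.length_eraseIdx_of_lt hidx', List.length_take,
        List.length_drop]
      omega
    have hsub : ∀ i ∈ ωnew, i ∈ ω := by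
      intro i hi
      rcases List.mem_append.mp hi with h | h
      · exact List.mem_of_mem_take (((ω.take k).eraseIdx_sublist idx).mem h)
      · exact List.mem_of_mem_drop h
    obtain ⟨ω', h1, h2, h3⟩ := ih ωnew hlen
    exact ⟨ω', fun i hi => hsub i (h1 i hi), h2, by rw [h3, hprod]⟩

theorem not_chain_decomp {α : Type*} : ∀ (l : List α), ¬ l.Chain' (· ≠ ·) →
    ∃ (l₁ : List α) (a : α) (l₂ : List α), l = l₁ ++ a :: a :: l₂ := by
  intro l
  induction l with
  | nil => intro h; exact absurd List.isChain_nil h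
  | cons a t ih =>
    intro h
    cases t with
    | nil => exact absurd (List.isChain_singleton a) h
    | cons b t' =>
      simp only [List.Chain', List.isChain_cons_cons] at h
      push_neg at h
      by_cases hab : a = b
      · subst hab
        exact ⟨[], a, t', rfl⟩
      · obtain ⟨l₁, c, l₂, hdec⟩ := ih (h hab)
        exact ⟨a :: l₁, c, l₂, by rw [hdec]; rfl⟩

theorem chain_of_isReduced {ω : List B} (h : cs.IsReduced ω) : ω.Chain' (· ≠ ·) := by
  by_contra hc
  obtain ⟨l₁, a, l₂, rfl⟩ := not_chain_decomp ω hc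
  have hprod : cs.wordProd (l₁ ++ a :: a :: l₂) = cs.wordProd (l₁ ++ l₂) := by
    rw [cs.wordProd_append, cs.wordProd_append, cs.wordProd_cons, cs.wordProd_cons,
      cs.simple_mul_simple_cancel_left]
  rw [CoxeterSystem.IsReduced, hprod] at h
  have hle := cs.length_wordProd_le (l₁ ++ l₂)
  rw [h] at hle
  simp only [List.length_append, List.length_cons] at hle
  omega

theorem alternating_of_chain {j k : B} :
    ∀ (ω : List B), ω.Chain' (· ≠ ·) → (∀ i ∈ ω, i = j ∨ i = k) →
    ω = CoxeterSystem.alternatingWord j k ω.length ∨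
      ω = CoxeterSystem.alternatingWord k j ω.length := by
  intro ω
  induction ω with
  | nil => intro _ _; left; rfl
  | cons a t ih =>
    intro hchain hmem
    cases t with
    | nil =>
      rcases hmem a (by simp) with rfl | rfl
      · right; rfl
      · left; rfl
    | cons b t' =>
      simp only [List.Chain', List.isChain_cons_cons] at hchain
      obtain ⟨hab, hchain'⟩ := hchain
      have hmem' : ∀ i ∈ b :: t', i = j ∨ i = k := fun i hi => hmem i (by simp [hi])
      have hlen : (b :: t').length = t'.length + 1 := rfl
      rcases ih hchain' hmem' with ht | ht
      · left
        rw [hlen] at ht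
        have ht' := ht
        rw [CoxeterSystem.alternatingWord_succ'] at ht'
        obtain ⟨hb, -⟩ := List.cons_eq_cons.mp ht'
        have hgoal : a = if Even (t'.length + 1) then k else j := by
          rcases Nat.even_or_odd t'.length with he | ho
          · rw [if_neg (by simp [Nat.even_add_one, he])]
            rcases hmem a (by simp) with rfl | rfl
            · rfl
            · exfalso; apply hab; rw [hb, if_pos he]
          · rw [if_pos (by simp [Nat.even_add_one, Nat.not_even_iff_odd.mpr ho])]
            rcases hmem a (by simp) with rfl | rfl
            · exfalso; apply hab; rw [hb, if_neg (Nat.not_even_iff_odd.mpr ho)]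
            · rfl
        show a :: b :: t' = CoxeterSystem.alternatingWord j k (t'.length + 1 + 1)
        rw [CoxeterSystem.alternatingWord_succ', ← hgoal, ← ht]
      · right
        rw [hlen] at ht
        have ht' := ht
        rw [CoxeterSystem.alternatingWord_succ'] at ht'
        obtain ⟨hb, -⟩ := List.cons_eq_cons.mp ht'
        have hgoal : a = if Even (t'.length + 1) then j else k := by
          rcases Nat.even_or_odd t'.length with he | ho
          · rw [if_neg (by simp [Nat.even_add_one, he])]
            rcases hmem a (by simp) with rfl | rfl
            · exfalso; apply hab; rw [hb, if_pos he]
            · rfl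
          · rw [if_pos (by simp [Nat.even_add_one, Nat.not_even_iff_odd.mpr ho])]
            rcases hmem a (by simp) with rfl | rfl
            · rfl
            · exfalso; apply hab; rw [hb, if_neg (Nat.not_even_iff_odd.mpr ho)]
        show a :: b :: t' = CoxeterSystem.alternatingWord k j (t'.length + 1 + 1)
        rw [CoxeterSystem.alternatingWord_succ', ← hgoal, ← ht]

/-- structure of right inversion sequence entries of a word with letters in `T` -/
theorem ris_entry_structure {T : Set B} :
    ∀ (ω : List B), (∀ i ∈ ω, i ∈ T) → ∀ t ∈ cs.rightInvSeq ω,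
    ∃ (d : W) (m : B), m ∈ T ∧ d ∈ Subgroup.closure (cs.simple '' T) ∧
      t = d⁻¹ * cs.simple m * d := by
  intro ω
  induction ω with
  | nil => intro _ t ht; simp at ht
  | cons i ω ih =>
    intro hsub t ht
    rw [rightInvSeq_cons] at ht
    rcases List.mem_cons.mp ht with h | h
    · exact ⟨cs.wordProd ω, i, hsub i (by simp),
        wordProd_mem_closure cs (fun x hx => hsub x (by simp [hx])), h⟩
    · exact ih (fun x hx => hsub x (by simp [hx])) t h

end HosakaAux


namespace HosakaAux

open CoxeterSystem List

variable {B : Type*} {W : Type*} [Group W] [DecidableEq W] {M : CoxeterMatrix B}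
  (cs : CoxeterSystem M W)

theorem edge_symm : Symmetric (fun a b : B => a ≠ b ∧ M a b ≠ 2) := by
  rintro a b ⟨h1, h2⟩
  exact ⟨h1.symm, by rw [M.symmetric]; exact h2⟩

theorem component_eq_of_mem {i j : B} (h : j ∈ M.component i) :
    M.component j = M.component i := by
  ext x
  constructor
  · intro hx
    exact Relation.ReflTransGen.trans h hx
  · intro hx
    exact Relation.ReflTransGen.trans ((@Relation.ReflTransGen.stdSymm _ _ ⟨fun _ _ h' => edge_symm (M := M) h'⟩).symm _ _ h) hx

theorem essential_iff_of_mem {i j : B} (h : j ∈ M.component i) :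
    (j ∈ cs.essentialSubset ↔ i ∈ cs.essentialSubset) := by
  show Infinite _ ↔ Infinite _
  rw [component_eq_of_mem h]

theorem simple_commute_of_M_two {i j : B} (h2 : M i j = 2) :
    cs.simple i * cs.simple j = cs.simple j * cs.simple i := by
  have hrel := cs.simple_mul_simple_pow i j
  rw [h2, pow_two] at hrel
  have := congrArg (fun z => cs.simple i * z * cs.simple j) hrel
  simp only [mul_one, one_mul] at this
  calc cs.simple i * cs.simple j
      = cs.simple i * (cs.simple i * cs.simple j * (cs.simple i * cs.simple j)) * cs.simple j := by
        rw [hrel, mul_one]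
    _ = cs.simple j * cs.simple i := by
        simp [mul_assoc, cs.simple_mul_simple_cancel_left, cs.simple_mul_simple_cancel_right]

theorem cross_commute {i j : B} (hi : i ∈ cs.essentialSubset) (hj : j ∉ cs.essentialSubset) :
    cs.simple i * cs.simple j = cs.simple j * cs.simple i := by
  rcases eq_or_ne i j with rfl | hne
  · rfl
  rcases eq_or_ne (M i j) 2 with h2 | h2
  · exact simple_commute_of_M_two cs h2
  · exfalso
    have hcomp : j ∈ M.component i := Relation.ReflTransGen.single ⟨hne, h2⟩
    exact hj ((essential_iff_of_mem cs hcomp).mpr hi)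

theorem comm_closure {T : Set B} {w : W} (h : ∀ i ∈ T, Commute w (cs.simple i)) :
    ∀ d ∈ Subgroup.closure (cs.simple '' T), Commute w d := by
  intro d hd
  induction hd using Subgroup.closure_induction with
  | mem x hx =>
    obtain ⟨i, hi, rfl⟩ := hx
    exact h i hi
  | one => exact Commute.one_right w
  | mul x y _ _ ihx ihy => exact ihx.mul_right ihy
  | inv x _ ihx => exact ihx.inv_right

/-- Descent propagation along edges of the Coxeter diagram, for elements commuting
with the relevant simple reflections. -/
theorem descent_propagate {w : W} {j k : B}
    (hcj : Commute w (cs.simple j)) (hck : Commute w (cs.simple k))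
    (hjk : j ≠ k) (hM : M j k ≠ 2)
    (hdj : cs.IsRightDescent w j) : cs.IsRightDescent w k := by
  classical
  by_contra hdk
  have hsj : sgn cs w (cs.simple j) = -1 := (sgn_simple_neg_iff cs w j).mpr hdj
  have hsk : sgn cs w (cs.simple k) = 1 := by
    rcases Int.units_eq_one_or (sgn cs w (cs.simple k)) with h | h
    · exact h
    · exact absurd ((sgn_simple_neg_iff cs w k).mp h) hdk
  set T : Set B := {j, k} with hT
  set K := Subgroup.closure (cs.simple '' T) with hK
  have hTcomm : ∀ i ∈ T, Commute w (cs.simple i) := by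
    intro i hi
    rcases hi with rfl | rfl
    exacts [hcj, hck]
  have hwd : ∀ d ∈ K, Commute w d := comm_closure cs hTcomm
  have hG : ∀ m ∈ T, ∀ d ∈ K, sgn cs w (d⁻¹ * cs.simple m * d) = sgn cs w (cs.simple m) := by
    intro m hm d hd
    exact sgn_conj_of_commute cs (hwd d hd).eq (hTcomm m hm).eq
  -- minimal length in the coset w * K
  have hSne : ∃ n, ∃ v, v ∈ K ∧ cs.length (w * v) = n :=
    ⟨cs.length w, 1, Subgroup.one_mem _, by rw [mul_one]⟩
  obtain ⟨v, hv, hlv⟩ := Nat.find_spec hSne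
  have hmin : ∀ x ∈ K, cs.length (w * v) ≤ cs.length (w * x) := by
    intro x hx
    rw [hlv]
    exact Nat.find_le ⟨x, hx, rfl⟩
  set u := w * v with hu
  set v₀ := v⁻¹ with hv₀def
  have hv₀ : v₀ ∈ K := Subgroup.inv_mem _ hv
  have hwuv : w = u * v₀ := by rw [hu, hv₀def, mul_assoc, mul_inv_cancel, mul_one]
  have humin : ∀ x ∈ K, ¬ (cs.length (u * x) < cs.length u) := by
    intro x hx hlt
    have h1 : u * x = w * (v * x) := by rw [hu, mul_assoc]
    rw [h1] at hlt
    exact absurd (hmin (v * x) (Subgroup.mul_mem _ hv hx)) (by omega)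
  have hu1 : ∀ t : W, (∃ d ∈ K, ∃ m ∈ T, t = d⁻¹ * cs.simple m * d) → sgn cs u t = 1 := by
    rintro t ⟨d, hd, m, hm, rfl⟩
    rcases Int.units_eq_one_or (sgn cs u (d⁻¹ * cs.simple m * d)) with h | h
    · exact h
    · exfalso
      have hlt := length_lt_of_sgn_neg cs h
      have hmem : d⁻¹ * cs.simple m * d ∈ K := by
        have hs : cs.simple m ∈ K := Subgroup.subset_closure ⟨m, hm, rfl⟩
        exact Subgroup.mul_mem _ (Subgroup.mul_mem _ (Subgroup.inv_mem _ hd) hs) hd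
      exact humin _ hmem hlt
  have htrans : ∀ t : W, (∃ d ∈ K, ∃ m ∈ T, t = d⁻¹ * cs.simple m * d) →
      sgn cs w t = sgn cs v₀ t := by
    rintro t ⟨d, hd, m, hm, rfl⟩
    rw [hwuv, sgn_cocycle]
    have hstruct : v₀ * (d⁻¹ * cs.simple m * d) * v₀⁻¹
        = (d * v₀⁻¹)⁻¹ * cs.simple m * (d * v₀⁻¹) := by group
    rw [hstruct, hu1 _ ⟨d * v₀⁻¹, Subgroup.mul_mem _ hd (Subgroup.inv_mem _ hv₀), m, hm, rfl⟩,
      mul_one]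
  -- a reduced {j,k}-word for v₀
  obtain ⟨ω1, hω1T, hω1⟩ := exists_word_of_mem_closure cs hv₀
  obtain ⟨ω₀, hsub, hred, hprod⟩ := exists_reduced_word_subset cs ω1.length ω1 le_rfl
  have hπ₀ : cs.wordProd ω₀ = v₀ := by rw [hprod, hω1]
  have hω₀T : ∀ i ∈ ω₀, i = j ∨ i = k := by
    intro i hi
    have := hω1T i (hsub i hi)
    rcases this with h | h
    · exact Or.inl h
    · exact Or.inr h
  have hchain := chain_of_isReduced cs hred
  -- key contradiction builder
  have final : ∀ x y : B, ((x = j ∧ y = k) ∨ (x = k ∧ y = j)) →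
      ω₀ = CoxeterSystem.alternatingWord x y ω₀.length → False := by
    intro x y hxy hA
    have hxT : x ∈ T := by rcases hxy with ⟨rfl, _⟩ | ⟨rfl, _⟩ <;> simp [hT]
    have hyT : y ∈ T := by rcases hxy with ⟨_, rfl⟩ | ⟨_, rfl⟩ <;> simp [hT]
    rcases Nat.lt_or_ge ω₀.length 2 with hlen2 | hlen2
    · interval_cases h : ω₀.length
      · -- length 0 : v₀ = 1
        have hnil : ω₀ = [] := List.length_eq_zero_iff.mp h
        have hv1 : v₀ = 1 := by rw [← hπ₀, hnil, cs.wordProd_nil]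
        have hstru : cs.simple j = (1:W)⁻¹ * cs.simple j * 1 := by group
        have := htrans (cs.simple j) ⟨1, Subgroup.one_mem _, j, by simp [hT], by group⟩
        rw [hsj, hv1, sgn_one] at this
        exact absurd this (by decide)
      · -- length 1 : v₀ = s y
        have hsing : ω₀ = [y] := by
          rw [hA]
          rfl
        have hv₀y : v₀ = cs.simple y := by rw [← hπ₀, hsing, cs.wordProd_singleton]
        have hrisy : cs.rightInvSeq ω₀ = [cs.simple y] := by
          rw [hsing, rightInvSeq_cons]
          simp
        -- t1 := s j is an inversion of v₀
        have ht1 : sgn cs v₀ (cs.simple j) = -1 := by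
          rw [← htrans (cs.simple j) ⟨1, Subgroup.one_mem _, j, by simp [hT], by group⟩]
          exact hsj
        have ht1mem : cs.simple j ∈ cs.rightInvSeq ω₀ := sgn_neg_mem cs ht1 hπ₀
        rw [hrisy] at ht1mem
        have hjy : cs.simple j = cs.simple y := by simpa using ht1mem
        -- t2 := s k ⁻¹ s j s k is an inversion of v₀
        have hkK : cs.simple k ∈ K := Subgroup.subset_closure ⟨k, by simp [hT], rfl⟩
        have ht2 : sgn cs v₀ ((cs.simple k)⁻¹ * cs.simple j * cs.simple k) = -1 := by
          rw [← htrans _ ⟨cs.simple k, hkK, j, by simp [hT], rfl⟩]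
          rw [hG j (by simp [hT]) (cs.simple k) hkK]
          exact hsj
        have ht2mem := sgn_neg_mem cs ht2 hπ₀
        rw [hrisy] at ht2mem
        have ht2eq : (cs.simple k)⁻¹ * cs.simple j * cs.simple k = cs.simple y := by
          simpa using ht2mem
        -- conclude s j and s k commute, contradiction
        have hcomm : cs.simple j * cs.simple k = cs.simple k * cs.simple j := by
          have := ht2eq.trans hjy.symm
          rw [cs.inv_simple] at this
          calc cs.simple j * cs.simple k
              = cs.simple k * (cs.simple k * cs.simple j * cs.simple k) := by
                simp [mul_assoc, cs.simple_mul_simple_cancel_left]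
            _ = cs.simple k * cs.simple j := by rw [this]
        apply simple_mul_simple_sq_ne_one cs hjk hM
        calc cs.simple j * cs.simple k * (cs.simple j * cs.simple k)
            = cs.simple j * (cs.simple k * cs.simple j) * cs.simple k := by
              simp [mul_assoc]
          _ = cs.simple j * (cs.simple j * cs.simple k) * cs.simple k := by rw [hcomm]
          _ = 1 := by
              simp [mul_assoc, cs.simple_mul_simple_cancel_left, cs.simple_mul_simple_self]
    · -- length ≥ 2
      have hris := rightInvSeq_alternatingWord cs x y ω₀.length
      rw [← hA] at hris
      have hmem0 : cs.simple y ∈ cs.rightInvSeq ω₀ := by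
        rw [hris]
        have h0 : (0:ℕ) ∈ (List.range ω₀.length).reverse := by
          rw [List.mem_reverse, List.mem_range]
          omega
        have := List.mem_map_of_mem (f := fun e => cs.wordProd (CoxeterSystem.alternatingWord x y (2*e+1))) h0
        rwa [show cs.wordProd (CoxeterSystem.alternatingWord x y (2*0+1)) = cs.simple y by
          rw [wordProd_alternatingWord_odd]; simp] at this
      have hmem1 : cs.simple y * cs.simple x * cs.simple y ∈ cs.rightInvSeq ω₀ := by
        rw [hris]
        have h1 : (1:ℕ) ∈ (List.range ω₀.length).reverse := by
          rw [List.mem_reverse, List.mem_range]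
          omega
        have := List.mem_map_of_mem (f := fun e => cs.wordProd (CoxeterSystem.alternatingWord x y (2*e+1))) h1
        rwa [show cs.wordProd (CoxeterSystem.alternatingWord x y (2*1+1))
            = cs.simple y * cs.simple x * cs.simple y by
          rw [wordProd_alternatingWord_odd]; rw [pow_one]; simp [mul_assoc]] at this
      have hs0 : sgn cs v₀ (cs.simple y) = -1 := by
        rw [← hπ₀]
        exact sgn_neg_of_mem_reduced cs hred hmem0
      have hs1 : sgn cs v₀ (cs.simple y * cs.simple x * cs.simple y) = -1 := by
        rw [← hπ₀]
        exact sgn_neg_of_mem_reduced cs hred hmem1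
      have hyK : cs.simple y ∈ K := Subgroup.subset_closure ⟨y, hyT, rfl⟩
      have hwy : sgn cs w (cs.simple y) = -1 := by
        rw [htrans (cs.simple y) ⟨1, Subgroup.one_mem _, y, hyT, by group⟩]
        exact hs0
      have hwx : sgn cs w (cs.simple x) = -1 := by
        have hstru : cs.simple y * cs.simple x * cs.simple y
            = (cs.simple y)⁻¹ * cs.simple x * cs.simple y := by
          rw [cs.inv_simple]
        have := htrans (cs.simple y * cs.simple x * cs.simple y)
          ⟨cs.simple y, hyK, x, hxT, hstru⟩
        rw [hs1, hstru, hG x hxT (cs.simple y) hyK] at this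
        exact this
      rcases hxy with ⟨rfl, rfl⟩ | ⟨rfl, rfl⟩
      · rw [hwy] at hsk
        exact absurd hsk (by decide)
      · rw [hwx] at hsk
        exact absurd hsk (by decide)
  rcases alternating_of_chain ω₀ hchain hω₀T with hA | hA
  · exact final j k (Or.inl ⟨rfl, rfl⟩) hA
  · exact final k j (Or.inr ⟨rfl, rfl⟩) hA

end HosakaAux

namespace HosakaAux

open CoxeterSystem List

variable {B : Type*} {W : Type*} [Group W] [DecidableEq W] {M : CoxeterMatrix B}
  (cs : CoxeterSystem M W)

theorem length_le_of_descents {w : W} {T : Set B}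
    (hcomm : ∀ i ∈ T, Commute w (cs.simple i))
    (hdesc : ∀ i ∈ T, cs.IsRightDescent w i) :
    ∀ x ∈ Subgroup.closure (cs.simple '' T), cs.length x ≤ cs.length w := by
  intro x hx
  obtain ⟨ω1, hT1, hπ1⟩ := exists_word_of_mem_closure cs hx
  obtain ⟨ωx, hsub, hred, hπ⟩ := exists_reduced_word_subset cs ω1.length ω1 le_rfl
  have hπx : cs.wordProd ωx = x := by rw [hπ, hπ1]
  have hωxT : ∀ i ∈ ωx, i ∈ T := fun i hi => hT1 i (hsub i hi)
  obtain ⟨ωw, hwlen, hwprod⟩ := cs.exists_reduced_word w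
  have hwred : cs.IsReduced ωw := by exact hwlen
  have hsubset : ∀ t ∈ cs.rightInvSeq ωx, t ∈ cs.rightInvSeq ωw := by
    intro t ht
    obtain ⟨d, m, hm, hd, rfl⟩ := ris_entry_structure cs ωx hωxT t ht
    have hneg : sgn cs w (d⁻¹ * cs.simple m * d) = -1 := by
      rw [sgn_conj_of_commute cs (comm_closure cs hcomm d hd).eq (hcomm m hm).eq]
      exact (sgn_simple_neg_iff cs w m).mpr (hdesc m hm)
    exact sgn_neg_mem cs hneg hwprod.symm
  have hnodup := hred.nodup_rightInvSeq
  have h1 : (cs.rightInvSeq ωx).toFinset.card = (cs.rightInvSeq ωx).length :=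
    List.toFinset_card_of_nodup hnodup
  have h2 : (cs.rightInvSeq ωx).toFinset ⊆ (cs.rightInvSeq ωw).toFinset := by
    intro t ht
    rw [List.mem_toFinset] at ht ⊢
    exact hsubset t ht
  have h3 : (cs.rightInvSeq ωw).toFinset.card ≤ (cs.rightInvSeq ωw).length :=
    (cs.rightInvSeq ωw).toFinset_card_le
  have hlx : cs.length x = (cs.rightInvSeq ωx).length := by
    rw [CoxeterSystem.length_rightInvSeq, ← hπx]
    exact hred
  have hlw : cs.length w = (cs.rightInvSeq ωw).length := by
    rw [CoxeterSystem.length_rightInvSeq, hwprod]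
    exact hwlen
  rw [hlx, hlw, ← h1]
  exact le_trans (Finset.card_le_card h2) h3

theorem finite_length_le [Finite B] (N : ℕ) : {x : W | cs.length x ≤ N}.Finite := by
  apply Set.Finite.subset ((List.finite_length_le B N).image cs.wordProd)
  intro x hx
  obtain ⟨ω, hlen, hπ⟩ := cs.exists_reduced_word x
  have hx' : cs.length x ≤ N := hx
  rw [hπ] at hx'
  have := hlen.eq
  exact ⟨ω, by simp only [Set.mem_setOf_eq]; omega, hπ.symm⟩

theorem mem_nonessential [Finite B] : ∀ (n : ℕ) (w : W), cs.length w ≤ n →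
    (∀ i ∈ cs.essentialSubset, Commute w (cs.simple i)) →
    w ∈ Subgroup.closure (cs.simple '' (Set.univ \ cs.essentialSubset)) := by
  intro n
  induction n with
  | zero =>
    intro w hw _
    have : w = 1 := cs.length_eq_zero_iff.mp (Nat.le_zero.mp hw)
    exact this ▸ Subgroup.one_mem _
  | succ n ih =>
    intro w hw hcomm
    rcases eq_or_ne w 1 with rfl | hne
    · exact Subgroup.one_mem _
    obtain ⟨j, hj⟩ := cs.exists_rightDescent_of_ne_one hne
    by_cases hjE : j ∈ cs.essentialSubset
    · exfalso
      have hcompE : ∀ k ∈ M.component j, k ∈ cs.essentialSubset := fun k hk =>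
        (essential_iff_of_mem cs hk).mpr hjE
      have hcommT : ∀ k ∈ M.component j, Commute w (cs.simple k) := fun k hk =>
        hcomm k (hcompE k hk)
      have hdescT : ∀ k ∈ M.component j, cs.IsRightDescent w k := by
        intro k hk
        induction hk with
        | refl => exact hj
        | @tail b c hpath hedge ihp =>
          exact descent_propagate cs (hcommT b hpath) (hcommT c (hpath.tail hedge))
            hedge.1 hedge.2 ihp
      have hbound := length_le_of_descents cs hcommT hdescT
      have hfin : (↑(Subgroup.closure (cs.simple '' M.component j)) : Set W).Finite :=
        Set.Finite.subset (finite_length_le cs (cs.length w)) (fun x hx => hbound x hx)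
      have hinf : Infinite (Subgroup.closure (cs.simple '' M.component j)) := hjE
      exact (Set.infinite_coe_iff.mp hinf) hfin
    · have hlt : cs.length (w * cs.simple j) < cs.length w := hj
      have hcomm' : ∀ i ∈ cs.essentialSubset, Commute (w * cs.simple j) (cs.simple i) := by
        intro i hi
        have h1 := hcomm i hi
        have h2 : Commute (cs.simple j) (cs.simple i) := (cross_commute cs hi hjE).symm
        exact h1.mul_left h2
      have hmem := ih (w * cs.simple j) (by omega) hcomm'
      have hw' : w = (w * cs.simple j) * cs.simple j := by
        rw [mul_assoc, cs.simple_mul_simple_self, mul_one]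
      rw [hw']
      exact Subgroup.mul_mem _ hmem
        (Subgroup.subset_closure ⟨j, ⟨trivial, hjE⟩, rfl⟩)

end HosakaAux


/-- **Theorem (Hosaka).** Let `(W, S)` be a Coxeter system with `S` finite and let `W_{S̃}`
denote its essential parabolic subgroup.  Then `Z(W) = Z(W_{S∖S̃})`: the center of `W`
equals the center of the finite parabolic subgroup `W_{S∖S̃}` generated by the complement
of `S̃`. -/
theorem center_coxeter_eq_center_nonessential_parabolic {B : Type*} [Finite B]
    {W : Type*} [Group W] (M : CoxeterMatrix B) (cs : CoxeterSystem M W) :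
    (Subgroup.center W : Set W) =
      { w : W | w ∈ Subgroup.closure (cs.simple '' (Set.univ \ cs.essentialSubset)) ∧
          ∀ v ∈ Subgroup.closure (cs.simple '' (Set.univ \ cs.essentialSubset)),
            w * v = v * w } := by
  letI := Classical.decEq W
  ext w
  simp only [Set.mem_setOf_eq, SetLike.mem_coe]
  constructor
  · intro hw
    have hcent := Subgroup.mem_center_iff.mp hw
    constructor
    · apply HosakaAux.mem_nonessential cs (cs.length w) w le_rfl
      intro i _
      exact (hcent (cs.simple i)).symm
    · intro v _
      exact (hcent v).symm
  · rintro ⟨hwK, hwc⟩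
    apply Subgroup.mem_center_iff.mpr
    intro g
    have hsimple : ∀ i : B, w * cs.simple i = cs.simple i * w := by
      intro i
      by_cases hiE : i ∈ cs.essentialSubset
      · have hall : ∀ v ∈ Subgroup.closure (cs.simple '' (Set.univ \ cs.essentialSubset)),
            Commute (cs.simple i) v :=
          HosakaAux.comm_closure cs (fun m hm => HosakaAux.cross_commute cs hiE hm.2)
        exact (hall w hwK).eq.symm
      · exact hwc (cs.simple i) (Subgroup.subset_closure ⟨i, ⟨trivial, hiE⟩, rfl⟩)
    have hg : g ∈ Subgroup.closure (Set.range cs.simple) := by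
      rw [cs.subgroup_closure_range_simple]
      trivial
    induction hg using Subgroup.closure_induction with
    | mem x hx =>
      obtain ⟨i, rfl⟩ := hx
      exact (hsimple i).symm
    | one => simp
    | mul x y _ _ ihx ihy => rw [mul_assoc, ihy, ← mul_assoc, ihx, mul_assoc]
    | inv x _ ihx =>
      have hcx : Commute x w := ihx
      exact (hcx.inv_left).eq
end

section
/- Let (W,S) be an irreducible Coxeter system with S finite. If the Coxeter group W is infinite, then the center of W is trivial. -/
set_option linter.unusedSectionVars false

open Real List

namespace CoxAux

variable {B : Type*} [Fintype B] [DecidableEq B]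

noncomputable section

/-- entries of the bilinear form -/
def kM (M : CoxeterMatrix B) (i j : B) : ℝ := - Real.cos (Real.pi / (M i j))

/-- simple root -/
def alpha (i : B) : B → ℝ := Pi.single i 1

lemma alpha_apply_self (i : B) : alpha i i = (1:ℝ) := Pi.single_eq_same i 1

lemma alpha_apply_ne {i j : B} (h : j ≠ i) : alpha i j = (0:ℝ) := Pi.single_eq_of_ne h 1

lemma alpha_ne_zero (i : B) : alpha (B := B) i ≠ 0 := by
  intro h
  have := congrFun h i
  rw [alpha_apply_self] at this
  simp at this

lemma kM_symm (M : CoxeterMatrix B) (i j : B) : kM M i j = kM M j i := by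
  rw [kM, kM, M.symmetric]

lemma kM_diag (M : CoxeterMatrix B) (i : B) : kM M i i = 1 := by
  rw [kM, M.diagonal]
  simp [Real.cos_pi]

/-- linear functional `v ↦ B(αᵢ, v)` -/
def bf (M : CoxeterMatrix B) (i : B) : (B → ℝ) →ₗ[ℝ] ℝ :=
  ∑ x : B, kM M i x • (LinearMap.proj x : (B → ℝ) →ₗ[ℝ] ℝ)

lemma bf_apply (M : CoxeterMatrix B) (i : B) (v : B → ℝ) :
    bf M i v = ∑ x : B, kM M i x * v x := by
  simp [bf, LinearMap.sum_apply]

lemma bf_alpha (M : CoxeterMatrix B) (i j : B) : bf M i (alpha j) = kM M i j := by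
  rw [bf_apply]
  rw [Finset.sum_eq_single j]
  · rw [alpha_apply_self, mul_one]
  · intro x _ hx
    rw [alpha_apply_ne hx, mul_zero]
  · intro h; exact absurd (Finset.mem_univ j) h

lemma bf_alpha_self (M : CoxeterMatrix B) (i : B) : bf M i (alpha i) = 1 := by
  rw [bf_alpha, kM_diag]

/-- the simple reflection on `B → ℝ` -/
def sigma (M : CoxeterMatrix B) (i : B) : Module.End ℝ (B → ℝ) :=
  LinearMap.id - 2 • ((LinearMap.toSpanSingleton ℝ (B → ℝ) (alpha i)).comp (bf M i))

lemma sigma_apply (M : CoxeterMatrix B) (i : B) (v : B → ℝ) :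
    sigma M i v = v - (2 * bf M i v) • alpha i := by
  simp [sigma, LinearMap.toSpanSingleton_apply, two_smul, smul_smul]
  module

lemma sigma_alpha (M : CoxeterMatrix B) (i j : B) :
    sigma M i (alpha j) = alpha j - (2 * kM M i j) • alpha i := by
  rw [sigma_apply, bf_alpha]

lemma sigma_alpha_self (M : CoxeterMatrix B) (i : B) :
    sigma M i (alpha i) = - alpha i := by
  rw [sigma_apply, bf_alpha_self]
  module

lemma bf_sigma (M : CoxeterMatrix B) (i : B) (v : B → ℝ) :
    bf M i (sigma M i v) = - bf M i v := by
  rw [sigma_apply, map_sub, map_smul, bf_alpha_self]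
  simp; ring

lemma sigma_sigma (M : CoxeterMatrix B) (i : B) (v : B → ℝ) :
    sigma M i (sigma M i v) = v := by
  rw [sigma_apply (v := sigma M i v), bf_sigma, sigma_apply]
  module

lemma sigma_sq (M : CoxeterMatrix B) (i : B) : sigma M i * sigma M i = 1 := by
  apply LinearMap.ext
  intro v
  exact sigma_sigma M i v

/-- simple reflection as a unit -/
def sigmaU (M : CoxeterMatrix B) (i : B) : (Module.End ℝ (B → ℝ))ˣ :=
  ⟨sigma M i, sigma M i, sigma_sq M i, sigma_sq M i⟩

lemma sigmaU_coe (M : CoxeterMatrix B) (i : B) : ((sigmaU M i : (Module.End ℝ (B → ℝ))ˣ) : Module.End ℝ (B → ℝ)) = sigma M i := rfl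

end
theorem trig2 (x t : ℝ) : Real.sin (x + 2*t) = 2 * Real.cos t * Real.sin (x + t) - Real.sin x := by
  have h : x + 2*t = (x + t) + t := by ring
  rw [h, Real.sin_add, Real.sin_add, Real.cos_add]
  linear_combination (-Real.sin x) * Real.sin_sq_add_cos_sq t

theorem trig3 (x t : ℝ) : Real.sin (x + 3*t) = (4 * Real.cos t^2 - 1) * Real.sin (x + t) - 2 * Real.cos t * Real.sin x := by
  have h : x + 3*t = (x + t) + (t + t) := by ring
  rw [h, Real.sin_add, Real.cos_add, Real.sin_add, Real.sin_add, Real.cos_add]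
  linear_combination (-3*Real.cos t*Real.sin x - Real.sin t * Real.cos x) * Real.sin_sq_add_cos_sq t

section dihedral

variable (M : CoxeterMatrix B) (i j : B)

-- abbreviations
local notation "αi" => alpha (B := B) i
local notation "αj" => alpha (B := B) j


theorem sigma_pair_step (hij : i ≠ j) (a b : ℝ) :
    (sigma M i * sigma M j) (a • αi + b • αj)
      = (2*(-(kM M i j))*(2*(-(kM M i j))*a - b) - a) • αi + (2*(-(kM M i j))*a - b) • αj := by
  set c : ℝ := -(kM M i j) with hc
  have hji : sigma M j (alpha i) = alpha i + (2*c) • alpha j := by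
    rw [sigma_alpha, ← kM_symm, hc]
    module
  have hijl : sigma M i (alpha j) = alpha j + (2*c) • alpha i := by
    rw [sigma_alpha, hc]
    module
  have h1 : (sigma M j) (a • αi + b • αj) = a • αi + (2*c*a - b) • αj := by
    rw [map_add, map_smul, map_smul, hji, sigma_alpha_self]
    module
  rw [Module.End.mul_apply, h1, map_add, map_smul, map_smul, sigma_alpha_self, hijl]
  module

theorem sigma_pair_pow (hij : i ≠ j) (hm : 2 ≤ M i j) (n : ℕ) :
    ((sigma M i * sigma M j)^n) αi
        = (Real.sin (2*n*(π/(M i j)) + π/(M i j)) / Real.sin (π/(M i j))) • αi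
          + (Real.sin (2*n*(π/(M i j))) / Real.sin (π/(M i j))) • αj
    ∧ ((sigma M i * sigma M j)^n) αj
        = (-(Real.sin (2*n*(π/(M i j)))) / Real.sin (π/(M i j))) • αi
          + (-(Real.sin (2*n*(π/(M i j)) - π/(M i j))) / Real.sin (π/(M i j))) • αj := by
  set θ : ℝ := π/(M i j) with hθ
  set c : ℝ := -(kM M i j) with hc
  have hcθ : c = Real.cos θ := by
    rw [hc, kM, hθ]; ring
  have hS : Real.sin θ ≠ 0 := by
    apply ne_of_gt
    apply Real.sin_pos_of_pos_of_lt_pi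
    · apply div_pos Real.pi_pos
      exact_mod_cast Nat.lt_of_lt_of_le (by norm_num) hm
    · rw [hθ]
      calc π / (M i j : ℝ) ≤ π / 2 := by
            apply div_le_div_of_nonneg_left Real.pi_pos.le (by norm_num)
            exact_mod_cast hm
        _ < π := by linarith [Real.pi_pos]
  induction n with
  | zero =>
      constructor
      · rw [pow_zero]
        push_cast
        rw [show 2*(0:ℝ)*θ + θ = θ by ring, show 2*(0:ℝ)*θ = 0 by ring, Real.sin_zero,
          div_self hS]
        simp
      · rw [pow_zero]
        push_cast
        rw [show 2*(0:ℝ)*θ - θ = -θ by ring, show 2*(0:ℝ)*θ = 0 by ring, Real.sin_zero,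
          Real.sin_neg, neg_neg, div_self hS]
        simp
  | succ n ihn =>
      obtain ⟨ih1, ih2⟩ := ihn
      constructor
      · rw [pow_succ', Module.End.mul_apply, ih1, sigma_pair_step M i j hij, ← hc]
        push_cast
        rw [show 2*((n:ℝ)+1)*θ + θ = 2*(n:ℝ)*θ + 3*θ by ring,
          show 2*((n:ℝ)+1)*θ = 2*(n:ℝ)*θ + 2*θ by ring, trig3, trig2, ← hcθ]
        congr 1 <;> congr 1 <;> field_simp [hS] <;> ring
      · rw [pow_succ', Module.End.mul_apply, ih2, sigma_pair_step M i j hij, ← hc]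
        push_cast
        rw [show 2*((n:ℝ)+1)*θ - θ = (2*(n:ℝ)*θ - θ) + 2*θ by ring,
          show 2*((n:ℝ)+1)*θ = (2*(n:ℝ)*θ - θ) + 3*θ by ring, trig3, trig2, ← hcθ]
        rw [show 2*(n:ℝ)*θ = (2*(n:ℝ)*θ - θ) + θ by ring]
        congr 1 <;> congr 1 <;> field_simp [hS] <;> ring

theorem sigma_pair_pow_fix (hij : i ≠ j) (hm : 2 ≤ M i j) :
    ((sigma M i * sigma M j)^(M i j)) αi = αi ∧ ((sigma M i * sigma M j)^(M i j)) αj = αj := by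
  obtain ⟨h1, h2⟩ := sigma_pair_pow M i j hij hm (M i j)
  set θ : ℝ := π/(M i j) with hθ
  have hm0 : (M i j : ℝ) ≠ 0 := by
    have : (0:ℕ) < M i j := Nat.lt_of_lt_of_le (by norm_num) hm
    exact_mod_cast this.ne'
  have h2pi : 2*(M i j : ℝ)*θ = 2*π := by
    rw [hθ]
    field_simp
  have hS : Real.sin θ ≠ 0 := by
    apply ne_of_gt
    apply Real.sin_pos_of_pos_of_lt_pi
    · apply div_pos Real.pi_pos
      exact_mod_cast Nat.lt_of_lt_of_le (by norm_num) hm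
    · rw [hθ]
      calc π / (M i j : ℝ) ≤ π / 2 := by
            apply div_le_div_of_nonneg_left Real.pi_pos.le (by norm_num)
            exact_mod_cast hm
        _ < π := by linarith [Real.pi_pos]
  rw [h2pi] at h1 h2
  rw [show 2*π + θ = θ + 2*π by ring, Real.sin_add_two_pi, Real.sin_two_pi, div_self hS] at h1
  rw [show 2*π - θ = -(θ - 2*π) by ring, Real.sin_neg, Real.sin_sub_two_pi, Real.sin_two_pi] at h2
  constructor
  · rw [h1]
    simp
  · rw [h2, neg_neg, div_self hS]
    simp

theorem sigma_pair_rel (hij : i ≠ j) (hm : 2 ≤ M i j) :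
    (sigma M i * sigma M j)^(M i j) = 1 := by
  obtain ⟨hfi, hfj⟩ := sigma_pair_pow_fix M i j hij hm
  set c : ℝ := -(kM M i j) with hc
  have hcc : kM M i j = -c := by rw [hc]; ring
  have hS : Real.sin (π/(M i j)) ≠ 0 := by
    apply ne_of_gt
    apply Real.sin_pos_of_pos_of_lt_pi
    · apply div_pos Real.pi_pos
      exact_mod_cast Nat.lt_of_lt_of_le (by norm_num) hm
    · calc π / (M i j : ℝ) ≤ π / 2 := by
            apply div_le_div_of_nonneg_left Real.pi_pos.le (by norm_num)
            exact_mod_cast hm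
        _ < π := by linarith [Real.pi_pos]
  have hc2 : 1 - c^2 ≠ 0 := by
    have hcθ : c = Real.cos (π/(M i j)) := by rw [hc, kM]; ring
    have := Real.sin_sq_add_cos_sq (π/(M i j))
    rw [← hcθ] at this
    have h2 : 1 - c^2 = Real.sin (π/(M i j))^2 := by linarith
    rw [h2]
    exact pow_ne_zero 2 hS
  apply LinearMap.ext
  intro v
  set p : ℝ := bf M i v with hp
  set q : ℝ := bf M j v with hq
  set x : ℝ := (p + c*q)/(1 - c^2) with hx
  set y : ℝ := (q + c*p)/(1 - c^2) with hy
  set u : (B → ℝ) := v - x • alpha i - y • alpha j with hu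
  have hbfu_i : bf M i u = 0 := by
    rw [hu, map_sub, map_sub, map_smul, map_smul, bf_alpha_self, bf_alpha, hcc, ← hp, hx, hy]
    field_simp
    linear_combination (-p) * mul_inv_cancel₀ hc2
  have hbfu_j : bf M j u = 0 := by
    rw [hu, map_sub, map_sub, map_smul, map_smul, bf_alpha_self, bf_alpha, ← kM_symm, hcc,
      ← hq, hx, hy]
    field_simp
    linear_combination (-q) * mul_inv_cancel₀ hc2
  have hsiu : sigma M i u = u := by
    rw [sigma_apply, hbfu_i]
    module
  have hsju : sigma M j u = u := by
    rw [sigma_apply, hbfu_j]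
    module
  have hfixu : ∀ n : ℕ, ((sigma M i * sigma M j)^n) u = u := by
    intro n
    induction n with
    | zero => simp
    | succ n ih => rw [pow_succ', Module.End.mul_apply, ih, Module.End.mul_apply, hsju, hsiu]
  have hv : v = x • alpha i + y • alpha j + u := by
    rw [hu]
    module
  rw [Module.End.one_apply, hv, map_add, map_add, map_smul, map_smul, hfi, hfj, hfixu]

end dihedral

theorem isLiftable_sigmaU (M : CoxeterMatrix B) : M.IsLiftable (sigmaU M) := by
  intro i j
  by_cases hij : i = j
  · subst hij
    rw [M.diagonal, pow_one]
    apply Units.ext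
    exact sigma_sq M i
  · rcases Nat.eq_zero_or_pos (M i j) with h0 | hpos
    · rw [h0, pow_zero]
    · have hm : 2 ≤ M i j := by
        have h1 := M.off_diagonal i j hij
        omega
      apply Units.ext
      push_cast
      exact sigma_pair_rel M i j hij hm

/-! ### Word combinatorics -/

section words

variable {W : Type*} [Group W] {M : CoxeterMatrix B} (cs : CoxeterSystem M W)

theorem chain'_ne_of_isReduced : ∀ (ω : List B), cs.IsReduced ω → ω.Chain' (· ≠ ·) := by
  intro ω
  induction ω with
  | nil => intro _; exact List.isChain_nil
  | cons a t ih =>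
      intro hred
      have ht : cs.IsReduced t := by
        have := CoxeterSystem.IsReduced.drop (ω := a :: t) hred 1
        simpa using this
      match t, ht, ih with
      | [], _, _ => exact List.isChain_singleton _
      | b :: t', ht, ih =>
          simp only [List.Chain', List.isChain_cons_cons]
          refine ⟨?_, ih ht⟩
          intro hab
          subst hab
          have h1 : cs.wordProd (a :: a :: t') = cs.wordProd t' := by
            rw [cs.wordProd_cons, cs.wordProd_cons, cs.simple_mul_simple_cancel_left]
          have h2 := cs.length_wordProd_le t'
          rw [← h1] at h2
          rw [CoxeterSystem.IsReduced] at hred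
          simp only [List.length_cons] at hred
          omega

theorem alternatingWord_append_singleton (i j : B) (n : ℕ) :
    CoxeterSystem.alternatingWord i j n ++ [i] = CoxeterSystem.alternatingWord j i (n+1) := by
  rw [CoxeterSystem.alternatingWord_succ]
  simp [List.concat_eq_append]

theorem eq_alternatingWord_of_chain' (i j : B) :
    ∀ (χ : List B), (∀ x ∈ χ, x = i ∨ x = j) → (χ ++ [i]).Chain' (· ≠ ·) →
      χ ++ [i] = CoxeterSystem.alternatingWord j i (χ.length + 1) := by
  intro χ
  induction χ with
  | nil =>
      intro _ _
      rw [CoxeterSystem.alternatingWord_succ]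
      simp [CoxeterSystem.alternatingWord]
  | cons c rest ih =>
      intro hmem hchain
      have hrest : rest ++ [i] = CoxeterSystem.alternatingWord j i (rest.length + 1) := by
        apply ih
        · intro x hx; exact hmem x (List.mem_cons_of_mem c hx)
        · simp only [List.Chain', List.cons_append, List.isChain_cons] at hchain
          exact hchain.2
      have hc : c = i ∨ c = j := hmem c List.mem_cons_self
      have hhead : c ≠ (if Even rest.length then i else j) := by
        rw [List.cons_append, hrest, CoxeterSystem.alternatingWord_succ' j i rest.length] at hchain
        simp only [List.Chain', List.isChain_cons_cons] at hchain
        exact hchain.1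
      have hlen : (c :: rest).length + 1 = rest.length + 1 + 1 := by simp
      rw [List.cons_append, hrest, hlen]
      rw [CoxeterSystem.alternatingWord_succ' j i (rest.length + 1)]
      congr 1
      rcases Nat.even_or_odd rest.length with he | ho
      · rw [if_pos he] at hhead
        have : c = j := hc.resolve_left hhead
        rw [this, if_neg (by simpa using Nat.not_even_iff_odd.mpr (Even.add_one he))]
      · rw [if_neg (Nat.not_even_iff_odd.mpr ho)] at hhead
        have : c = i := hc.resolve_right hhead
        rw [this, if_pos (Odd.add_one ho)]

end words

/-! ### the κ sequence -/

noncomputable def kappa (m n : ℕ) : ℝ :=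
  if m = 0 then n else Real.sin (n * (π/m)) / Real.sin (π/m)

theorem sin_pim_pos {m : ℕ} (hm : 2 ≤ m) : 0 < Real.sin (π/m) := by
  apply Real.sin_pos_of_pos_of_lt_pi
  · apply div_pos Real.pi_pos
    exact_mod_cast Nat.lt_of_lt_of_le (by norm_num) hm
  · have h1 : π / (m : ℝ) ≤ π / 2 := by
      apply div_le_div_of_nonneg_left Real.pi_pos.le (by norm_num)
      exact_mod_cast hm
    linarith [Real.pi_pos]

theorem kappa_zero (m : ℕ) : kappa m 0 = 0 := by
  unfold kappa
  split <;> simp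

theorem kappa_one {m : ℕ} (hm : m = 0 ∨ 2 ≤ m) : kappa m 1 = 1 := by
  unfold kappa
  rcases hm with h0 | h2
  · rw [if_pos h0]; norm_num
  · rw [if_neg (by omega)]
    rw [Nat.cast_one, one_mul, div_self (ne_of_gt (sin_pim_pos h2))]

theorem kappa_rec {m : ℕ} (hm : m = 0 ∨ 2 ≤ m) (n : ℕ) :
    kappa m (n+2) = 2*(Real.cos (π/m))*(kappa m (n+1)) - kappa m n := by
  unfold kappa
  rcases hm with h0 | h2
  · rw [if_pos h0, if_pos h0, if_pos h0, h0]
    push_cast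
    rw [div_zero, Real.cos_zero]
    ring
  · rw [if_neg (by omega), if_neg (by omega), if_neg (by omega)]
    push_cast
    rw [show ((n:ℝ)+2)*(π/m) = n*(π/m) + 2*(π/m) by ring,
      show ((n:ℝ)+1)*(π/m) = n*(π/m) + 1*(π/m) by ring, trig2]
    rw [show (n:ℝ)*(π/m) + 1*(π/m) = n*(π/m) + (π/m) by ring]
    ring

theorem kappa_nonneg {m : ℕ} (hm : m = 0 ∨ 2 ≤ m) {n : ℕ} (hn : m = 0 ∨ n ≤ m) :
    0 ≤ kappa m n := by
  unfold kappa
  rcases hm with h0 | h2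
  · rw [if_pos h0]; positivity
  · rw [if_neg (by omega)]
    have hnm : n ≤ m := hn.resolve_left (by omega)
    apply div_nonneg _ (sin_pim_pos h2).le
    apply Real.sin_nonneg_of_nonneg_of_le_pi
    · positivity
    · have hm0 : (0:ℝ) < m := by exact_mod_cast Nat.lt_of_lt_of_le (by norm_num) h2
      have h1 : (n:ℝ) * (π/m) ≤ m * (π/m) := by
        apply mul_le_mul_of_nonneg_right _ (by positivity)
        exact_mod_cast hnm
      have h2' : (m:ℝ) * (π/m) = π := by field_simp
      linarith

/-! ### The geometric representation of a Coxeter system -/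

section rep

variable {W : Type*} [Group W] {M : CoxeterMatrix B} (cs : CoxeterSystem M W)

noncomputable def rho : W →* (Module.End ℝ (B → ℝ))ˣ :=
  cs.lift ⟨sigmaU M, isLiftable_sigmaU M⟩

/-- the action of `w` on the geometric representation -/
noncomputable def act (w : W) : Module.End ℝ (B → ℝ) := (rho cs w : (Module.End ℝ (B → ℝ))ˣ)

theorem act_simple (i : B) : act cs (cs.simple i) = sigma M i := by
  rw [act, rho, CoxeterSystem.lift_apply_simple]
  rfl

theorem act_mul (w w' : W) : act cs (w * w') = act cs w * act cs w' := by
  rw [act, act, act, map_mul]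
  rfl

theorem act_one : act cs (1 : W) = 1 := by
  rw [act, map_one]
  rfl

theorem act_ne_zero (w : W) {v : B → ℝ} (hv : v ≠ 0) : act cs w v ≠ 0 := by
  intro h
  apply hv
  have h2 : act cs (w⁻¹ * w) v = v := by
    rw [inv_mul_cancel, act_one, Module.End.one_apply]
  rw [act_mul, Module.End.mul_apply, h, map_zero] at h2
  exact h2.symm

theorem sigma_alpha' (i j : B) :
    sigma M j (alpha i) = alpha i + (2 * Real.cos (π / (M i j))) • alpha j := by
  rw [sigma_alpha, kM_symm, kM]
  module

theorem rho_alt (i j : B) (hij : i ≠ j) (hm : M i j = 0 ∨ 2 ≤ M i j) (n : ℕ) :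
    act cs (cs.wordProd (CoxeterSystem.alternatingWord i j n)) (alpha i)
      = if Even n then kappa (M i j) (n+1) • alpha i + kappa (M i j) n • alpha j
        else kappa (M i j) n • alpha i + kappa (M i j) (n+1) • alpha j := by
  set c : ℝ := Real.cos (π / (M i j)) with hc
  have hsymm : M j i = M i j := M.symmetric j i
  induction n with
  | zero =>
      rw [if_pos (Even.zero), kappa_one hm, kappa_zero]
      show act cs (cs.wordProd []) (alpha i) = _
      rw [cs.wordProd_nil, act_one, Module.End.one_apply]
      module
  | succ n ih =>
      rw [CoxeterSystem.alternatingWord_succ', cs.wordProd_cons, act_mul, Module.End.mul_apply,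
        act_simple, ih]
      have hrec : kappa (M i j) (n+2) = 2*c*(kappa (M i j) (n+1)) - kappa (M i j) n :=
        kappa_rec hm n
      have hnot : ¬ Even (n+1) ↔ Even n := by
        rw [Nat.even_add_one, not_not]
      rcases Nat.even_or_odd n with he | ho
      · rw [if_pos he, if_pos he, if_neg (hnot.mpr he)]
        rw [map_add, map_smul, map_smul, sigma_alpha' (M := M) i j, sigma_alpha_self,
          ← hc, hrec]
        module
      · have hne := Nat.not_even_iff_odd.mpr ho
        rw [if_neg hne, if_neg hne, if_pos (Odd.add_one ho)]
        rw [map_add, map_smul, map_smul, sigma_alpha' (M := M) j i, sigma_alpha_self, hsymm,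
          ← hc, hrec]
        module

theorem act_alpha_nonneg : ∀ (n : ℕ) (w : W), cs.length w = n →
    ∀ (i : B), cs.length (w * cs.simple i) = n + 1 → ∀ x : B, 0 ≤ act cs w (alpha i) x := by
  intro n
  induction n using Nat.strong_induction_on with
  | _ n ih =>
    intro w hw i hi x
    rcases eq_or_ne w 1 with rfl | hw1
    · rw [act_one, Module.End.one_apply]
      by_cases hx : x = i
      · subst hx; rw [alpha_apply_self]; norm_num
      · rw [alpha_apply_ne hx]
    · obtain ⟨j, hj⟩ := cs.exists_rightDescent_of_ne_one hw1
      have hji : j ≠ i := by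
        intro h
        subst h
        rw [CoxeterSystem.IsRightDescent] at hj
        omega
      classical
      set P : ℕ → Prop := fun k => ∃ (u : W) (χ : List B), (∀ y ∈ χ, y = i ∨ y = j) ∧
        w = u * cs.wordProd χ ∧ cs.length w = cs.length u + χ.length ∧ χ.length = k with hP
      have hP0 : P 0 := ⟨w, [], by simp, by simp, by simp, rfl⟩
      have hPn₀ : P (Nat.findGreatest P (cs.length w)) :=
        Nat.findGreatest_spec (Nat.zero_le _) hP0
      set n₀ := Nat.findGreatest P (cs.length w) with hn₀
      obtain ⟨u, χ, hχmem, hw_eq, hlen_add, hχlen⟩ := hPn₀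
      have hmax : ∀ y : B, (y = i ∨ y = j) → ¬ cs.IsRightDescent u y := by
        intro y hy hdesc
        rw [CoxeterSystem.IsRightDescent] at hdesc
        have hux : cs.length (u * cs.simple y) + 1 = cs.length u := by
          rcases cs.length_mul_simple u y with h | h <;> omega
        have hP1 : P (n₀ + 1) := by
          refine ⟨u * cs.simple y, y :: χ, ?_, ?_, ?_, by simp [hχlen]⟩
          · intro z hz
            rcases List.mem_cons.mp hz with rfl | hz'
            · exact hy
            · exact hχmem z hz'
          · rw [cs.wordProd_cons, ← mul_assoc, cs.simple_mul_simple_cancel_right]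
            exact hw_eq
          · simp only [List.length_cons]
            omega
        have hbound : n₀ + 1 ≤ cs.length w := by omega
        have := Nat.le_findGreatest hbound hP1
        omega
      have hui : cs.length (u * cs.simple i) = cs.length u + 1 := by
        have h1 := hmax i (Or.inl rfl)
        rw [CoxeterSystem.IsRightDescent] at h1
        rcases cs.length_mul_simple u i with h | h <;> omega
      have huj : cs.length (u * cs.simple j) = cs.length u + 1 := by
        have h1 := hmax j (Or.inr rfl)
        rw [CoxeterSystem.IsRightDescent] at h1
        rcases cs.length_mul_simple u j with h | h <;> omega
      have hχne : χ ≠ [] := by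
        intro h
        subst h
        rw [cs.wordProd_nil, mul_one] at hw_eq
        subst hw_eq
        exact hmax j (Or.inr rfl) hj
      have hn₀pos : 0 < n₀ := by
        rcases χ with _ | ⟨c', t⟩
        · exact absurd rfl hχne
        · simp only [List.length_cons] at hχlen
          omega
      have hlu : cs.length u < n := by omega
      have hπχ : cs.length (cs.wordProd χ) ≤ n₀ := by
        have := cs.length_wordProd_le χ
        omega
      have hred : cs.IsReduced (χ ++ [i]) := by
        have h1 : cs.length (w * cs.simple i) ≤
            cs.length u + cs.length (cs.wordProd χ * cs.simple i) := by
          rw [hw_eq, mul_assoc]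
          exact cs.length_mul_le u _
        have h2 : cs.length (cs.wordProd χ * cs.simple i) ≤ n₀ + 1 := by
          have := cs.length_mul_le (cs.wordProd χ) (cs.simple i)
          have := cs.length_simple i
          omega
        rw [CoxeterSystem.IsReduced, cs.wordProd_append, cs.wordProd_singleton]
        simp only [List.length_append, List.length_singleton]
        omega
      have hchain := chain'_ne_of_isReduced cs (χ ++ [i]) hred
      have halt : χ ++ [i] = CoxeterSystem.alternatingWord j i (χ.length + 1) :=
        eq_alternatingWord_of_chain' i j χ hχmem hchain
      have hχalt : χ = CoxeterSystem.alternatingWord i j n₀ := by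
        have h2 := alternatingWord_append_singleton i j n₀
        rw [hχlen, ← h2] at halt
        exact List.append_cancel_right halt
      have hm_or : M i j = 0 ∨ 2 ≤ M i j := by
        have h1 := M.off_diagonal i j (fun h => hji h.symm)
        omega
      have hm_bound : M i j = 0 ∨ n₀ + 1 ≤ M i j := by
        by_cases h0 : M j i = 0
        · left; rw [← M.symmetric]; exact h0
        · right
          rw [← M.symmetric j i]
          by_contra hlt
          push_neg at hlt
          apply cs.not_isReduced_alternatingWord j i h0 (by omega : χ.length + 1 > M j i)
          rw [← halt]
          exact hred
      obtain ⟨a, b, ha, hb, hab⟩ : ∃ a b : ℝ, 0 ≤ a ∧ 0 ≤ b ∧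
          act cs (cs.wordProd χ) (alpha i) = a • alpha i + b • alpha j := by
        rw [hχalt, rho_alt cs i j (fun h => hji h.symm) hm_or n₀]
        rcases Nat.even_or_odd n₀ with he | ho
        · exact ⟨kappa (M i j) (n₀+1), kappa (M i j) n₀,
            kappa_nonneg hm_or (by omega), kappa_nonneg hm_or (by omega), by rw [if_pos he]⟩
        · exact ⟨kappa (M i j) n₀, kappa (M i j) (n₀+1),
            kappa_nonneg hm_or (by omega), kappa_nonneg hm_or (by omega),
            by rw [if_neg (Nat.not_even_iff_odd.mpr ho)]⟩
      have hfinal : act cs w (alpha i) = a • (act cs u (alpha i)) + b • (act cs u (alpha j)) := by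
        rw [hw_eq, act_mul, Module.End.mul_apply, hab, map_add, map_smul, map_smul]
      rw [hfinal]
      have hIH1 := ih (cs.length u) hlu u rfl i hui x
      have hIH2 := ih (cs.length u) hlu u rfl j huj x
      simp only [Pi.add_apply, Pi.smul_apply, smul_eq_mul]
      exact add_nonneg (mul_nonneg ha hIH1) (mul_nonneg hb hIH2)

/-! ### Central elements -/

theorem act_simple_comm {z : W} (hc : ∀ g : W, g * z = z * g) (i : B) (v : B → ℝ) :
    act cs z (sigma M i v) = sigma M i (act cs z v) := by
  have h1 : act cs (z * cs.simple i) = act cs z * act cs (cs.simple i) := act_mul cs z _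
  have h2 : act cs (cs.simple i * z) = act cs (cs.simple i) * act cs z := act_mul cs _ z
  rw [hc (cs.simple i)] at h2
  rw [h1] at h2
  have := congrFun (congrArg (fun (f : Module.End ℝ (B → ℝ)) => (f : (B → ℝ) → (B → ℝ))) h2) v
  simp only [Module.End.mul_apply] at this
  rw [act_simple] at this
  exact this

theorem act_center_alpha {z : W} (hc : ∀ g : W, g * z = z * g) (i : B) :
    act cs z (alpha i) = (bf M i (act cs z (alpha i))) • alpha i := by
  have h1 : sigma M i (act cs z (alpha i)) = - act cs z (alpha i) := by
    rw [← act_simple_comm cs hc i, sigma_alpha_self, map_neg]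
  rw [sigma_apply] at h1
  set v := act cs z (alpha i)
  funext x
  have h2 := congrFun h1 x
  simp only [Pi.sub_apply, Pi.smul_apply, Pi.neg_apply, smul_eq_mul] at h2
  simp only [Pi.smul_apply, smul_eq_mul]
  linarith

theorem r_neg_of_descent {z : W} {i : B} {r : ℝ} (h : act cs z (alpha i) = r • alpha i)
    (hd : cs.IsRightDescent z i) : r < 0 := by
  have hrne : r ≠ 0 := by
    intro h0
    rw [h0, zero_smul] at h
    exact act_ne_zero cs z (alpha_ne_zero i) h
  have hlen : cs.length ((z * cs.simple i) * cs.simple i) = cs.length (z * cs.simple i) + 1 := by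
    rw [CoxeterSystem.IsRightDescent] at hd
    rcases cs.length_mul_simple z i with h' | h' <;>
      rw [cs.simple_mul_simple_cancel_right] <;> omega
  have hpos := act_alpha_nonneg cs (cs.length (z * cs.simple i)) (z * cs.simple i) rfl i hlen i
  rw [act_mul, Module.End.mul_apply, act_simple, sigma_alpha_self, map_neg, h] at hpos
  simp only [Pi.neg_apply, Pi.smul_apply, smul_eq_mul, alpha_apply_self, mul_one] at hpos
  rcases lt_or_gt_of_ne hrne with h' | h'
  · exact h'
  · linarith

theorem r_pos_of_not_descent {z : W} {i : B} {r : ℝ} (h : act cs z (alpha i) = r • alpha i)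
    (hd : ¬ cs.IsRightDescent z i) : 0 < r := by
  have hrne : r ≠ 0 := by
    intro h0
    rw [h0, zero_smul] at h
    exact act_ne_zero cs z (alpha_ne_zero i) h
  have hlen : cs.length (z * cs.simple i) = cs.length z + 1 := by
    rw [CoxeterSystem.IsRightDescent] at hd
    rcases cs.length_mul_simple z i with h' | h' <;> omega
  have hpos := act_alpha_nonneg cs (cs.length z) z rfl i hlen i
  rw [h] at hpos
  simp only [Pi.smul_apply, smul_eq_mul, alpha_apply_self, mul_one] at hpos
  rcases lt_or_gt_of_ne hrne with h' | h'
  · linarith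
  · exact h'

theorem claimA {z : W} (hc : ∀ g : W, g * z = z * g) {i j : B}
    (hi : cs.IsRightDescent z i) (hj : ¬ cs.IsRightDescent z j) : M i j = 2 := by
  have hij : i ≠ j := by
    intro h
    exact hj (h ▸ hi)
  set ri : ℝ := bf M i (act cs z (alpha i)) with hri
  set rj : ℝ := bf M j (act cs z (alpha j)) with hrj
  have hhi : act cs z (alpha i) = ri • alpha i := act_center_alpha cs hc i
  have hhj : act cs z (alpha j) = rj • alpha j := act_center_alpha cs hc j
  have hrineg : ri < 0 := r_neg_of_descent cs hhi hi
  have hrjpos : 0 < rj := r_pos_of_not_descent cs hhj hj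
  -- compute act z (sigma i (alpha j)) two ways
  have hmain := act_simple_comm cs hc i (alpha j)
  rw [sigma_alpha] at hmain
  rw [map_sub, map_smul, hhi, hhj, map_smul, sigma_alpha] at hmain
  have h2 := congrFun hmain i
  simp only [Pi.sub_apply, Pi.smul_apply, smul_eq_mul, alpha_apply_self,
    alpha_apply_ne hij, mul_zero, mul_one, zero_sub, mul_neg, smul_sub, smul_smul] at h2
  have hfac : kM M i j * (ri - rj) = 0 := by ring_nf; ring_nf at h2; linarith
  have hk : kM M i j = 0 := by
    rcases mul_eq_zero.mp hfac with h' | h'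
    · exact h'
    · linarith
  have hm0 : M i j ≠ 0 := by
    intro h0
    rw [kM, h0] at hk
    rw [Nat.cast_zero, div_zero, Real.cos_zero] at hk
    norm_num at hk
  have hm2 : 2 ≤ M i j := by
    have := M.off_diagonal i j hij
    omega
  by_contra hne2
  have hm3 : 3 ≤ M i j := by omega
  have hcpos : 0 < Real.cos (π / (M i j)) := by
    apply Real.cos_pos_of_mem_Ioo
    constructor
    · have : 0 < π / (M i j : ℝ) := by
        apply div_pos Real.pi_pos
        exact_mod_cast Nat.lt_of_lt_of_le (by norm_num) hm2
      linarith [Real.pi_pos]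
    · have hm3' : (3:ℝ) ≤ (M i j : ℝ) := by exact_mod_cast hm3
      calc π / (M i j : ℝ) ≤ π / 3 := by
            apply div_le_div_of_nonneg_left Real.pi_pos.le (by norm_num) hm3'
        _ < π / 2 := by
            apply div_lt_div_of_pos_left Real.pi_pos (by norm_num) (by norm_num)
  rw [kM] at hk
  linarith

/-! ### Diagonal action of a central element -/

theorem single_eq_smul_alpha (k : B) (c : ℝ) : Pi.single k c = c • alpha k := by
  funext x
  by_cases hx : x = k
  · subst hx
    simp [alpha, Pi.single_eq_same]
  · simp [alpha, Pi.single_eq_of_ne hx]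

theorem act_diag {z : W} (hc : ∀ g : W, g * z = z * g) (v : B → ℝ) (x : B) :
    act cs z v x = (bf M x (act cs z (alpha x))) * v x := by
  have hv : v = ∑ k : B, v k • alpha k := by
    conv_lhs => rw [← Finset.univ_sum_single v]
    exact Finset.sum_congr rfl (fun k _ => single_eq_smul_alpha k (v k))
  conv_lhs => rw [hv, map_sum]
  rw [Finset.sum_apply]
  have hterm : ∀ k : B, (act cs z (v k • alpha k)) x
      = (v k * (bf M k (act cs z (alpha k)))) * alpha k x := by
    intro k
    rw [map_smul, act_center_alpha cs hc k]
    simp [smul_eq_mul]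
    rw [bf_alpha_self]
    ring
  rw [Finset.sum_congr rfl (fun k _ => hterm k)]
  rw [Finset.sum_eq_single x (fun k _ hk => by rw [alpha_apply_ne (Ne.symm hk), mul_zero])
    (fun h => absurd (Finset.mem_univ x) h)]
  rw [alpha_apply_self, mul_one]
  ring

/-! ### All simple reflections are descents: length bound -/

theorem length_add_of_all_descents {z : W} (hc : ∀ g : W, g * z = z * g)
    (hall : ∀ i : B, cs.IsRightDescent z i) :
    ∀ (n : ℕ) (v : W), cs.length v = n → cs.length (z * v) + cs.length v = cs.length z := by
  have hrneg : ∀ k : B, bf M k (act cs z (alpha k)) < 0 :=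
    fun k => r_neg_of_descent cs (act_center_alpha cs hc k) (hall k)
  intro n
  induction n using Nat.strong_induction_on with
  | _ n ih =>
    intro v hv
    rcases eq_or_ne v 1 with rfl | hv1
    · simp
    · obtain ⟨i, hi⟩ := cs.exists_rightDescent_of_ne_one hv1
      rw [CoxeterSystem.IsRightDescent] at hi
      set v' := v * cs.simple i with hv'def
      have hv'si : v' * cs.simple i = v := by
        rw [hv'def, cs.simple_mul_simple_cancel_right]
      have hv' : cs.length v' + 1 = cs.length v := by
        rcases cs.length_mul_simple v i with h' | h' <;> rw [← hv'def] at h' <;> omega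
      have hposlen : cs.length (v' * cs.simple i) = cs.length v' + 1 := by
        rw [hv'si]; omega
      have hβ : ∀ x, 0 ≤ act cs v' (alpha i) x :=
        act_alpha_nonneg cs (cs.length v') v' rfl i hposlen
      have hβne : act cs v' (alpha i) ≠ 0 := act_ne_zero cs v' (alpha_ne_zero i)
      have hdesc : cs.length ((z * v') * cs.simple i) < cs.length (z * v') := by
        by_contra hnd
        have hlen2 : cs.length ((z * v') * cs.simple i) = cs.length (z * v') + 1 := by
          rcases cs.length_mul_simple (z * v') i with h' | h' <;> omega
        have h0 := act_alpha_nonneg cs (cs.length (z * v')) (z * v') rfl i hlen2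
        have hneg : ∀ x, act cs (z * v') (alpha i) x ≤ 0 := by
          intro x
          rw [act_mul, Module.End.mul_apply, act_diag cs hc]
          have := hβ x
          have := hrneg x
          nlinarith
        apply hβne
        funext x
        have h1 := h0 x
        have h2 := hneg x
        have h3 : act cs (z * v') (alpha i) x = 0 := le_antisymm h2 h1
        rw [act_mul, Module.End.mul_apply, act_diag cs hc] at h3
        have h4 := hrneg x
        have h5 := hβ x
        simp only [Pi.zero_apply]
        nlinarith
      have hIH := ih (cs.length v') (by omega) v' rfl
      have hzv : z * v = (z * v') * cs.simple i := by
        rw [mul_assoc, hv'si]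
      have hzvlen : cs.length (z * v) + 1 = cs.length (z * v') := by
        rw [hzv]
        rcases cs.length_mul_simple (z * v') i with h' | h' <;> omega
      omega

theorem finite_of_length_le (N : ℕ) (h : ∀ v : W, cs.length v ≤ N) : Finite W := by
  classical
  have hex : ∀ w : W, ∃ l : List B, l.length ≤ N ∧ cs.wordProd l = w := by
    intro w
    obtain ⟨ω, hω1, hω2⟩ := cs.exists_reduced_word w
    exact ⟨ω, by rw [← hω1, ← hω2]; exact h w, hω2.symm⟩
  choose f hf1 hf2 using hex
  haveI : Finite {l : List B | l.length ≤ N} := (List.finite_length_le B N).to_subtype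
  apply Finite.of_injective (fun w : W => (⟨f w, hf1 w⟩ : {l : List B | l.length ≤ N}))
  intro a b hab
  have : f a = f b := congrArg Subtype.val hab
  rw [← hf2 a, ← hf2 b, this]

end rep

end CoxAux

/-- A group `W` decomposes as the (internal) direct product of two subgroups `H` and `K`:
the elements of `H` commute with those of `K`, `H ∩ K = 1`, and `H` and `K` generate `W`. -/
def Subgroup.IsInternalDirectProductOf {W : Type*} [Group W] (H K : Subgroup W) : Prop :=
  (∀ h ∈ H, ∀ k ∈ K, h * k = k * h) ∧ H ⊓ K = ⊥ ∧ H ⊔ K = ⊤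

/-- A Coxeter system `(W, S)` is irreducible if for no nonempty proper subset `T ⊂ S` does
`W` decompose as the direct product of the parabolic subgroups `W_T` and `W_{S∖T}`. -/
def CoxeterSystem.IsIrreducible {B : Type*} {W : Type*} [Group W] {M : CoxeterMatrix B}
    (cs : CoxeterSystem M W) : Prop :=
  ∀ T : Set B, T.Nonempty → T ≠ Set.univ →
    ¬ Subgroup.IsInternalDirectProductOf
        (Subgroup.closure (cs.simple '' T))
        (Subgroup.closure (cs.simple '' (Set.univ \ T)))

namespace CoxAux

theorem directProduct {B : Type*} {W : Type*} [Group W] {M : CoxeterMatrix B}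
    (cs : CoxeterSystem M W) (T : Set B)
    (hcross : ∀ i ∈ T, ∀ j, j ∉ T → M i j = 2) :
    Subgroup.IsInternalDirectProductOf
      (Subgroup.closure (cs.simple '' T))
      (Subgroup.closure (cs.simple '' (Set.univ \ T))) := by
  classical
  have hcomm2 : ∀ i ∈ T, ∀ j, j ∉ T → cs.simple i * cs.simple j = cs.simple j * cs.simple i := by
    intro i hi j hj
    have hm : M i j = 2 := hcross i hi j hj
    have hpow := cs.simple_mul_simple_pow i j
    rw [hm, sq] at hpow
    have h4 : cs.simple j * cs.simple i = (cs.simple i * cs.simple j)⁻¹ := by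
      rw [mul_inv_rev, cs.inv_simple, cs.inv_simple]
    rw [h4]
    exact (inv_eq_of_mul_eq_one_right hpow).symm
  have hgen : ∀ a ∈ cs.simple '' T, ∀ b ∈ cs.simple '' (Set.univ \ T), a * b = b * a := by
    rintro a ⟨i, hi, rfl⟩ b ⟨j, hj, rfl⟩
    exact hcomm2 i hi j hj.2
  have hHcent : Subgroup.closure (cs.simple '' T) ≤
      Subgroup.centralizer (cs.simple '' (Set.univ \ T)) := by
    rw [Subgroup.closure_le]
    intro a ha
    rw [SetLike.mem_coe, Subgroup.mem_centralizer_iff]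
    intro b hb
    exact (hgen a ha b hb).symm
  have hKcent : Subgroup.closure (cs.simple '' (Set.univ \ T)) ≤
      Subgroup.centralizer ((Subgroup.closure (cs.simple '' T) : Subgroup W) : Set W) := by
    rw [Subgroup.closure_le]
    intro b hb
    rw [SetLike.mem_coe, Subgroup.mem_centralizer_iff]
    intro a ha
    have := Subgroup.mem_centralizer_iff.mp (hHcent ha) b hb
    exact this.symm
  refine ⟨?_, ?_, ?_⟩
  · intro h hH k hK
    exact Subgroup.mem_centralizer_iff.mp (hKcent hK) h hH
  · -- intersection
    set f : B → W := fun i => if i ∈ T then cs.simple i else 1 with hf_def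
    have hf : M.IsLiftable f := by
      intro i j
      by_cases hi : i ∈ T <;> by_cases hj : j ∈ T
      · simp only [hf_def, if_pos hi, if_pos hj]
        exact cs.simple_mul_simple_pow i j
      · have hm : M i j = 2 := hcross i hi j hj
        simp only [hf_def, if_pos hi, if_neg hj, mul_one, hm, sq,
          cs.simple_mul_simple_self]
      · have hm : M j i = 2 := hcross j hj i hi
        have hm' : M i j = 2 := by rw [M.symmetric]; exact hm
        simp only [hf_def, if_neg hi, if_pos hj, one_mul, hm', sq,
          cs.simple_mul_simple_self]
      · simp only [hf_def, if_neg hi, if_neg hj, mul_one, one_pow]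
    set φ : W →* W := cs.lift ⟨f, hf⟩ with hφ_def
    have hφT : ∀ g ∈ Subgroup.closure (cs.simple '' T), φ g = g := by
      intro g hg
      refine Subgroup.closure_induction ?_ ?_ ?_ ?_ hg
      · rintro x ⟨i, hi, rfl⟩
        rw [hφ_def, cs.lift_apply_simple]
        simp only [hf_def, if_pos hi]
      · exact map_one φ
      · intro a b _ _ iha ihb
        rw [map_mul, iha, ihb]
      · intro a _ iha
        rw [map_inv, iha]
    have hφK : ∀ g ∈ Subgroup.closure (cs.simple '' (Set.univ \ T)), φ g = 1 := by
      intro g hg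
      refine Subgroup.closure_induction ?_ ?_ ?_ ?_ hg
      · rintro x ⟨j, hj, rfl⟩
        rw [hφ_def, cs.lift_apply_simple]
        simp only [hf_def, if_neg hj.2]
      · exact map_one φ
      · intro a b _ _ iha ihb
        rw [map_mul, iha, ihb, mul_one]
      · intro a _ iha
        rw [map_inv, iha, inv_one]
    rw [eq_bot_iff]
    intro g hg
    rw [Subgroup.mem_inf] at hg
    rw [Subgroup.mem_bot]
    rw [← hφT g hg.1]
    exact hφK g hg.2
  · -- sup
    rw [← Subgroup.closure_union, ← Set.image_union,
      Set.union_diff_cancel (Set.subset_univ T), Set.image_univ,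
      cs.subgroup_closure_range_simple]

end CoxAux

/-- **Corollary (Hosaka).** Let `(W, S)` be an irreducible Coxeter system with `S` finite.
If the Coxeter group `W` is infinite, then the center of `W` is trivial. -/
theorem center_eq_bot_of_irreducible_infinite_coxeter {B : Type*} [Finite B]
    {W : Type*} [Group W] (M : CoxeterMatrix B) (cs : CoxeterSystem M W)
    (hirr : cs.IsIrreducible) (hinf : Infinite W) :
    Subgroup.center W = ⊥ := by
  classical
  letI : Fintype B := Fintype.ofFinite B
  rw [eq_bot_iff]
  intro z hz
  rw [Subgroup.mem_bot]
  by_contra hz1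
  have hc : ∀ g : W, g * z = z * g := fun g => Subgroup.mem_center_iff.mp hz g
  set T : Set B := {i | cs.IsRightDescent z i} with hT
  have hTne : T.Nonempty := by
    obtain ⟨i, hi⟩ := cs.exists_rightDescent_of_ne_one hz1
    exact ⟨i, hi⟩
  by_cases hTu : T = Set.univ
  · have hall : ∀ i : B, cs.IsRightDescent z i := by
      intro i
      have : i ∈ T := by rw [hTu]; exact Set.mem_univ i
      exact this
    have hbound : ∀ v : W, cs.length v ≤ cs.length z := by
      intro v
      have := CoxAux.length_add_of_all_descents cs hc hall (cs.length v) v rfl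
      omega
    have hfin : Finite W := CoxAux.finite_of_length_le cs (cs.length z) hbound
    exact @not_finite W hinf hfin
  · apply hirr T hTne hTu
    apply CoxAux.directProduct cs T
    intro i hi j hj
    exact CoxAux.claimA cs hc hi hj
end
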